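/- arXiv:math/0607193 — 11 statements merged into one kernel-verified Lean document; each statement's English description precedes it below -/
import Mathlib

section
/- On any real inner product space H, the function φ(x) = exp(-‖x‖) is positive definite: for every finite family x₁,…,xₙ ∈ H and complex numbers λ₁,…,λₙ, the sum ∑_{i,j} λᵢ conj(λⱼ) exp(-‖xᵢ - xⱼ‖) is a nonnegative real number. -/
open scoped BigOperators ComplexOrder
open MeasureTheory Set Matrix


lemma schur_pow {n m : ℕ} (B : Fin m → Fin n → ℝ) :
    ∀ (k : ℕ) (c : Fin n → ℝ),
      0 ≤ ∑ i, ∑ j, c i * c j * (∑ r, B r i * B r j) ^ k := by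
  intro k
  induction k with
  | zero =>
    intro c
    simp only [pow_zero, mul_one]
    rw [← Finset.sum_mul_sum]
    exact mul_self_nonneg _
  | succ k ih =>
    intro c
    have h1 : ∀ i j : Fin n, c i * c j * (∑ r, B r i * B r j) ^ (k + 1)
        = ∑ r, (c i * B r i) * (c j * B r j) * (∑ r, B r i * B r j) ^ k := by
      intro i j
      rw [pow_succ, Finset.mul_sum, Finset.mul_sum]
      exact Finset.sum_congr rfl fun r _ => by ring
    have h2 : ∑ i, ∑ j, c i * c j * (∑ r, B r i * B r j) ^ (k + 1)
        = ∑ r, ∑ i, ∑ j, (c i * B r i) * (c j * B r j) * (∑ r, B r i * B r j) ^ k := by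
      calc ∑ i, ∑ j, c i * c j * (∑ r, B r i * B r j) ^ (k + 1)
          = ∑ i, ∑ j, ∑ r, (c i * B r i) * (c j * B r j) * (∑ r, B r i * B r j) ^ k :=
            Finset.sum_congr rfl fun i _ => Finset.sum_congr rfl fun j _ => h1 i j
        _ = ∑ i, ∑ r, ∑ j, (c i * B r i) * (c j * B r j) * (∑ r, B r i * B r j) ^ k :=
            Finset.sum_congr rfl fun i _ => Finset.sum_comm
        _ = ∑ r, ∑ i, ∑ j, (c i * B r i) * (c j * B r j) * (∑ r, B r i * B r j) ^ k :=
            Finset.sum_comm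
    rw [h2]
    exact Finset.sum_nonneg fun r _ => ih (fun i => c i * B r i)

lemma exp_form {n m : ℕ} (B : Fin m → Fin n → ℝ) (c : Fin n → ℝ) :
    0 ≤ ∑ i, ∑ j, c i * c j * Real.exp (∑ r, B r i * B r j) := by
  have hexp : ∀ z : ℝ, Real.exp z = ∑' k : ℕ, z ^ k / (k.factorial : ℝ) := fun z => by
    rw [Real.exp_eq_exp_ℝ, NormedSpace.exp_eq_tsum_div]
  have hsum : ∀ i j : Fin n,
      Summable (fun k : ℕ => c i * c j * ((∑ r, B r i * B r j) ^ k / (k.factorial : ℝ))) :=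
    fun i j => (Real.summable_pow_div_factorial _).mul_left _
  have h1 : ∑ i, ∑ j, c i * c j * Real.exp (∑ r, B r i * B r j)
      = ∑' k : ℕ, ∑ i, ∑ j, c i * c j * ((∑ r, B r i * B r j) ^ k / (k.factorial : ℝ)) := by
    rw [Summable.tsum_finsetSum (fun i _ => summable_sum (fun j _ => hsum i j))]
    refine Finset.sum_congr rfl fun i _ => ?_
    rw [Summable.tsum_finsetSum (fun j _ => hsum i j)]
    refine Finset.sum_congr rfl fun j _ => ?_
    rw [tsum_mul_left, ← hexp]
  rw [h1]
  refine tsum_nonneg fun k => ?_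
  have h2 : ∑ i, ∑ j, c i * c j * ((∑ r, B r i * B r j) ^ k / (k.factorial : ℝ))
      = (∑ i, ∑ j, c i * c j * (∑ r, B r i * B r j) ^ k) / (k.factorial : ℝ) := by
    simp_rw [Finset.sum_div, mul_div_assoc]
  rw [h2]
  exact div_nonneg (schur_pow B k c) (by positivity)



open scoped MatrixOrder in
lemma psd_eq_star_mul_self {n : ℕ} {M : Matrix (Fin n) (Fin n) ℝ} (h : M.PosSemidef) :
    ∃ B : Matrix (Fin n) (Fin n) ℝ, M = star B * B :=
  CStarAlgebra.nonneg_iff_eq_star_mul_self.mp h.nonneg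

section Test2
variable {H : Type*} [NormedAddCommGroup H] [InnerProductSpace ℝ H]

lemma gram_decomp {n : ℕ} (y : Fin n → H) :
    ∃ B : Fin n → Fin n → ℝ, ∀ i j, (inner ℝ (y i) (y j) : ℝ) = ∑ r, B r i * B r j := by
  classical
  set M : Matrix (Fin n) (Fin n) ℝ := Matrix.of fun i j => (inner ℝ (y i) (y j) : ℝ) with hM
  have hpsd : M.PosSemidef := by
    rw [Matrix.posSemidef_iff_dotProduct_mulVec]
    constructor
    · ext i j
      simp [M, Matrix.conjTranspose_apply, real_inner_comm]
    · intro v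
      have h1 : dotProduct (star v) (M *ᵥ v)
          = ∑ i, ∑ j, v i * v j * (inner ℝ (y i) (y j) : ℝ) := by
        simp only [dotProduct, Matrix.mulVec, Pi.star_apply, star_trivial,
          Matrix.of_apply, M, Finset.mul_sum]
        exact Finset.sum_congr rfl fun i _ => Finset.sum_congr rfl fun j _ => by ring
      have h2 : (inner ℝ (∑ i, v i • y i) (∑ j, v j • y j) : ℝ)
          = ∑ i, ∑ j, v i * v j * (inner ℝ (y i) (y j) : ℝ) := by
        rw [sum_inner]
        refine Finset.sum_congr rfl fun i _ => ?_
        rw [inner_sum]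
        simp only [real_inner_smul_left, real_inner_smul_right, Finset.mul_sum]
        exact Finset.sum_congr rfl fun j _ => by ring
      rw [h1, ← h2]
      exact real_inner_self_nonneg
  obtain ⟨B, hB⟩ := psd_eq_star_mul_self hpsd
  refine ⟨fun r i => B r i, fun i j => ?_⟩
  have h3 := congrFun (congrFun (congrArg Matrix.of.symm hB) i) j
  simpa [Matrix.mul_apply, Matrix.star_apply, Matrix.conjTranspose_apply, M] using h3

lemma gaussian_nonneg {n : ℕ} (x : Fin n → H) (t : ℝ) (ht : 0 ≤ t) (c : Fin n → ℝ) :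
    0 ≤ ∑ i, ∑ j, c i * c j * Real.exp (-(‖x i - x j‖ ^ 2 * t)) := by
  obtain ⟨B, hB⟩ := gram_decomp (fun i => Real.sqrt (2 * t) • x i)
  have hinner : ∀ i j, (∑ r, B r i * B r j) = 2 * t * inner ℝ (x i) (x j) := by
    intro i j
    rw [← hB]
    simp only [real_inner_smul_left, real_inner_smul_right, ← mul_assoc]
    rw [Real.mul_self_sqrt (by linarith)]
  have key : ∀ i j, (c i * Real.exp (-(‖x i‖ ^ 2 * t))) * (c j * Real.exp (-(‖x j‖ ^ 2 * t)))
        * Real.exp (∑ r, B r i * B r j)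
      = c i * c j * Real.exp (-(‖x i - x j‖ ^ 2 * t)) := by
    intro i j
    rw [hinner]
    rw [show ∀ a b e : ℝ, (c i * a) * (c j * b) * e = (c i * c j) * (a * b * e) from
      fun a b e => by ring]
    congr 1
    rw [← Real.exp_add, ← Real.exp_add]
    congr 1
    have hns : ‖x i - x j‖ ^ 2 = ‖x i‖ ^ 2 - 2 * inner ℝ (x i) (x j) + ‖x j‖ ^ 2 :=
      norm_sub_sq_real (x i) (x j)
    rw [hns]; ring
  calc (0:ℝ) ≤ ∑ i, ∑ j, (c i * Real.exp (-(‖x i‖ ^ 2 * t))) * (c j * Real.exp (-(‖x j‖ ^ 2 * t)))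
        * Real.exp (∑ r, B r i * B r j) := exp_form B _
    _ = ∑ i, ∑ j, c i * c j * Real.exp (-(‖x i - x j‖ ^ 2 * t)) :=
        Finset.sum_congr rfl fun i _ => Finset.sum_congr rfl fun j _ => key i j

end Test2

noncomputable def gg (u : ℝ) : ℝ := 1 - Real.exp (-(u ^ 2)⁻¹)

lemma gg_meas : Measurable gg := by
  unfold gg
  fun_prop

lemma gg_nonneg (u : ℝ) : 0 ≤ gg u := by
  have h : Real.exp (-(u ^ 2)⁻¹) ≤ 1 := by
    rw [show (1:ℝ) = Real.exp 0 from (Real.exp_zero).symm]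
    apply Real.exp_le_exp.mpr
    simp [inv_nonneg.mpr (sq_nonneg u)]
  unfold gg; linarith

lemma gg_le_one (u : ℝ) : gg u ≤ 1 := by
  have := Real.exp_pos (-(u ^ 2)⁻¹)
  simp [gg]; linarith

lemma gg_le_inv_sq (u : ℝ) : gg u ≤ (u ^ 2)⁻¹ := by
  have h := Real.add_one_le_exp (-(u ^ 2)⁻¹)
  simp only [gg]
  linarith

lemma gg_integrable : IntegrableOn gg (Ioi 0) := by
  rw [← Ioc_union_Ioi_eq_Ioi (zero_le_one (α := ℝ))]
  apply IntegrableOn.union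
  · apply Measure.integrableOn_of_bounded (M := 1)
    · simp
    · exact gg_meas.aestronglyMeasurable
    · filter_upwards with u
      rw [Real.norm_eq_abs, abs_of_nonneg (gg_nonneg u)]
      exact gg_le_one u
  · apply Integrable.mono' (integrableOn_Ioi_rpow_of_lt (show (-2:ℝ) < -1 by norm_num) one_pos)
      gg_meas.aestronglyMeasurable
    filter_upwards [ae_restrict_mem measurableSet_Ioi] with u hu
    have hu0 : (0:ℝ) < u := lt_trans one_pos hu
    rw [Real.norm_eq_abs, abs_of_nonneg (gg_nonneg u)]
    calc gg u ≤ (u ^ 2)⁻¹ := gg_le_inv_sq u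
      _ = u ^ (-2:ℝ) := by
          rw [← Real.rpow_natCast u 2, ← Real.rpow_neg hu0.le]
          norm_num

noncomputable def Cg : ℝ := ∫ u in Ioi 0, gg u

lemma Cg_pos : 0 < Cg := by
  have h1 : (1 - Real.exp (-(4:ℝ)⁻¹)) * ((volume (Ioc (1:ℝ) 2)).toReal)
      ≤ ∫ u in Ioc (1:ℝ) 2, gg u := by
    apply setIntegral_ge_of_const_le_real measurableSet_Ioc (by simp)
    · intro u hu
      have hu1 : (1:ℝ) < u := hu.1
      have hu2 : u ≤ 2 := hu.2
      have hsq : u ^ 2 ≤ 4 := by nlinarith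
      have h4 : (4:ℝ)⁻¹ ≤ (u ^ 2)⁻¹ := by
        apply inv_anti₀ (by positivity) hsq
      have := Real.exp_le_exp.mpr (neg_le_neg h4)
      simp only [gg]
      linarith
    · exact gg_integrable.mono_set (fun u hu => lt_trans one_pos hu.1)
  have h2 : ∫ u in Ioc (1:ℝ) 2, gg u ≤ Cg := by
    apply setIntegral_mono_set gg_integrable
    · filter_upwards with u using gg_nonneg u
    · exact HasSubset.Subset.eventuallyLE (fun u hu => lt_trans one_pos hu.1)
  have h3 : (volume (Ioc (1:ℝ) 2)).toReal = 1 := by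
    simp [Real.volume_Ioc]; norm_num
  rw [h3, mul_one] at h1
  have h4 : Real.exp (-(4:ℝ)⁻¹) < 1 := by
    rw [show (1:ℝ) = Real.exp 0 from (Real.exp_zero).symm]
    apply Real.exp_lt_exp.mpr; norm_num
  linarith

lemma F_eq_gg (a u : ℝ) : 1 - Real.exp (-(a ^ 2 * (u ^ 2)⁻¹)) = gg (u * a⁻¹) := by
  unfold gg
  congr 2
  rw [mul_pow, mul_inv, inv_pow, inv_inv]
  ring

lemma integral_F {a : ℝ} (ha : 0 ≤ a) :
    IntegrableOn (fun u => 1 - Real.exp (-(a ^ 2 * (u ^ 2)⁻¹))) (Ioi 0) ∧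
    ∫ u in Ioi 0, (1 - Real.exp (-(a ^ 2 * (u ^ 2)⁻¹))) = a * Cg := by
  rcases eq_or_lt_of_le ha with rfl | ha
  · simp
  · have hF : (fun u : ℝ => 1 - Real.exp (-(a ^ 2 * (u ^ 2)⁻¹))) = fun u => gg (u * a⁻¹) :=
      funext fun u => F_eq_gg a u
    rw [hF]
    constructor
    · rw [integrableOn_Ioi_comp_mul_right_iff gg 0 (inv_pos.mpr ha)]
      simpa using gg_integrable
    · rw [integral_comp_mul_right_Ioi gg 0 (inv_pos.mpr ha)]
      simp only [zero_mul, inv_inv, smul_eq_mul]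
      rfl
section Main
variable {H : Type*} [NormedAddCommGroup H] [InnerProductSpace ℝ H]

lemma norm_cnd {n : ℕ} (x : Fin n → H) (c : Fin n → ℝ) (hc : ∑ i, c i = 0) :
    ∑ i, ∑ j, c i * c j * ‖x i - x j‖ ≤ 0 := by
  have hCg := Cg_pos
  have hint : ∀ i j : Fin n, Integrable
      (fun u => c i * c j * (1 - Real.exp (-(‖x i - x j‖ ^ 2 * (u ^ 2)⁻¹))))
      (volume.restrict (Ioi 0)) :=
    fun i j => ((integral_F (norm_nonneg (x i - x j))).1.const_mul _)
  have key : (∑ i, ∑ j, c i * c j * ‖x i - x j‖) * Cg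
      = ∫ u in Ioi 0, ∑ i, ∑ j,
          c i * c j * (1 - Real.exp (-(‖x i - x j‖ ^ 2 * (u ^ 2)⁻¹))) := by
    rw [integral_finset_sum _ (fun i _ => integrable_finset_sum _ (fun j _ => hint i j))]
    rw [Finset.sum_mul]
    refine Finset.sum_congr rfl fun i _ => ?_
    rw [integral_finset_sum _ (fun j _ => hint i j), Finset.sum_mul]
    refine Finset.sum_congr rfl fun j _ => ?_
    rw [MeasureTheory.integral_const_mul, (integral_F (norm_nonneg (x i - x j))).2]
    ring
  have hnp : (∫ u in Ioi 0, ∑ i, ∑ j,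
      c i * c j * (1 - Real.exp (-(‖x i - x j‖ ^ 2 * (u ^ 2)⁻¹)))) ≤ 0 := by
    apply integral_nonpos
    intro u
    have hg := gaussian_nonneg x ((u ^ 2)⁻¹) (inv_nonneg.mpr (sq_nonneg u)) c
    have hid : ∑ i, ∑ j, c i * c j * (1 - Real.exp (-(‖x i - x j‖ ^ 2 * (u ^ 2)⁻¹)))
        = (∑ i, c i) * (∑ j, c j)
          - ∑ i, ∑ j, c i * c j * Real.exp (-(‖x i - x j‖ ^ 2 * (u ^ 2)⁻¹)) := by
      rw [Finset.sum_mul_sum, ← Finset.sum_sub_distrib]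
      refine Finset.sum_congr rfl fun i _ => ?_
      rw [← Finset.sum_sub_distrib]
      exact Finset.sum_congr rfl fun j _ => by ring
    show (fun u => ∑ i, ∑ j,
      c i * c j * (1 - Real.exp (-(‖x i - x j‖ ^ 2 * (u ^ 2)⁻¹)))) u ≤ 0
    simp only []
    rw [hid, hc]
    simp only [zero_mul]
    linarith
  have h5 : (∑ i, ∑ j, c i * c j * ‖x i - x j‖) * Cg ≤ 0 := by rw [key]; exact hnp
  by_contra h
  push_neg at h
  nlinarith

lemma expnorm_pd_real {n : ℕ} (x : Fin n → H) (c : Fin n → ℝ) :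
    0 ≤ ∑ i, ∑ j, c i * c j * Real.exp (-‖x i - x j‖) := by
  rcases n with _ | m
  · simp
  set N : Fin (m + 1) → Fin (m + 1) → ℝ := fun i j => ‖x i - x j‖ with hN
  have hNs : ∀ i j, N i j = N j i := fun i j => norm_sub_rev _ _
  have hN0 : N 0 0 = 0 := by simp [hN]
  set K : Matrix (Fin (m + 1)) (Fin (m + 1)) ℝ :=
    Matrix.of fun i j => N i 0 + N 0 j - N i j with hK
  have hpsd : K.PosSemidef := by
    rw [Matrix.posSemidef_iff_dotProduct_mulVec]
    constructor
    · ext i j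
      simp only [Matrix.conjTranspose_apply, Matrix.of_apply, hK, star_trivial]
      rw [hNs j 0, hNs 0 i, hNs j i]
      ring
    · intro v
      have hq : dotProduct (star v) (K *ᵥ v) = ∑ i, ∑ j, v i * v j * K i j := by
        simp only [dotProduct, Matrix.mulVec, Pi.star_apply, star_trivial,
          Matrix.of_apply, Finset.mul_sum]
        exact Finset.sum_congr rfl fun i _ => Finset.sum_congr rfl fun j _ => by ring
      rw [hq]
      set s := ∑ i, v i with hs
      set e : Fin (m + 1) → ℝ := fun i => v i - if i = 0 then s else 0 with he
      have hesum : ∑ i, e i = 0 := by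
        simp only [he, Finset.sum_sub_distrib,
          Finset.sum_ite_eq' Finset.univ (0 : Fin (m + 1))]
        simp [hs]
      have hsub : ∀ w : Fin (m + 1) → ℝ, ∑ j, e j * w j = (∑ j, v j * w j) - s * w 0 := by
        intro w
        simp only [he, sub_mul, ite_mul, zero_mul]
        rw [Finset.sum_sub_distrib]
        congr 1
        rw [Finset.sum_ite_eq' Finset.univ (0 : Fin (m + 1)) (fun j => s * w j)]
        simp
      have hcnd := norm_cnd x e hesum
      set A := ∑ i, v i * N i 0 with hA
      set D := ∑ i, ∑ j, v i * v j * N i j with hD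
      have hBq : ∑ j, v j * N 0 j = A := by
        rw [hA]; exact Finset.sum_congr rfl fun j _ => by rw [hNs 0 j]
      have hI1 : ∑ i, ∑ j, e i * e j * N i j = D - 2 * s * A := by
        have ha : ∀ i, ∑ j, e i * e j * N i j
            = e i * ((∑ j, v j * N i j) - s * N i 0) := by
          intro i
          rw [show ∑ j, e i * e j * N i j = ∑ j, e j * (e i * N i j) from
            Finset.sum_congr rfl fun j _ => by ring, hsub]
          rw [show ∑ j, v j * (e i * N i j) = e i * ∑ j, v j * N i j from by
            rw [Finset.mul_sum]; exact Finset.sum_congr rfl fun j _ => by ring]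
          ring
        rw [Finset.sum_congr rfl fun i _ => ha i,
          hsub (fun i => (∑ j, v j * N i j) - s * N i 0)]
        have hc' : ∑ i, v i * ((∑ j, v j * N i j) - s * N i 0) = D - s * A := by
          rw [show (∑ i, v i * ((∑ j, v j * N i j) - s * N i 0))
              = ∑ i, ((∑ j, v i * v j * N i j) - s * (v i * N i 0)) from
            Finset.sum_congr rfl fun i _ => by
              rw [mul_sub, Finset.mul_sum]
              congr 1
              · exact Finset.sum_congr rfl fun j _ => by ring
              · ring]
          rw [Finset.sum_sub_distrib, ← Finset.mul_sum, ← hD, ← hA]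
        rw [hc', hBq, hN0]
        ring
      have hI2 : ∑ i, ∑ j, v i * v j * K i j = 2 * s * A - D := by
        simp only [hK, Matrix.of_apply]
        rw [show (∑ i, ∑ j, v i * v j * (N i 0 + N 0 j - N i j))
            = ∑ i, ((v i * N i 0) * s + v i * (∑ j, v j * N 0 j)
                - ∑ j, v i * v j * N i j) from
          Finset.sum_congr rfl fun i _ => by
            rw [show (∑ j, v i * v j * (N i 0 + N 0 j - N i j))
                = ∑ j, ((v i * N i 0) * v j + v i * (v j * N 0 j)
                    - v i * v j * N i j) from
              Finset.sum_congr rfl fun j _ => by ring]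
            rw [Finset.sum_sub_distrib, Finset.sum_add_distrib, ← Finset.mul_sum,
              ← Finset.mul_sum, ← hs]]
        rw [Finset.sum_sub_distrib, Finset.sum_add_distrib, ← Finset.sum_mul,
          ← Finset.sum_mul, hBq, ← hs, ← hA, ← hD]
        ring
      rw [hI1] at hcnd
      rw [hI2]
      linarith
  obtain ⟨B, hB⟩ := psd_eq_star_mul_self hpsd
  have hKd : ∀ i j, N i 0 + N 0 j - N i j = ∑ r, B r i * B r j := by
    intro i j
    have h3 := congrFun (congrFun (congrArg (fun M => M) hB) i) j
    simpa [Matrix.mul_apply, Matrix.star_apply, Matrix.conjTranspose_apply, hK] using h3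
  have hfin := exp_form (fun r i => B r i) (fun i => c i * Real.exp (-(N i 0)))
  have hterm : ∀ i j, (c i * Real.exp (-(N i 0))) * (c j * Real.exp (-(N j 0)))
      * Real.exp (∑ r, B r i * B r j) = c i * c j * Real.exp (-‖x i - x j‖) := by
    intro i j
    rw [← hKd i j]
    rw [show (c i * Real.exp (-(N i 0))) * (c j * Real.exp (-(N j 0)))
        * Real.exp (N i 0 + N 0 j - N i j)
        = (c i * c j) * (Real.exp (-(N i 0)) * Real.exp (-(N j 0))
            * Real.exp (N i 0 + N 0 j - N i j)) from by ring]
    congr 1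
    rw [← Real.exp_add, ← Real.exp_add]
    congr 1
    rw [hNs 0 j]
    simp only [hN]
    ring
  calc (0:ℝ) ≤ ∑ i, ∑ j, (c i * Real.exp (-(N i 0))) * (c j * Real.exp (-(N j 0)))
        * Real.exp (∑ r, B r i * B r j) := hfin
    _ = ∑ i, ∑ j, c i * c j * Real.exp (-‖x i - x j‖) :=
        Finset.sum_congr rfl fun i _ => Finset.sum_congr rfl fun j _ => hterm i j

end Main
theorem stmt0 {H : Type*} [NormedAddCommGroup H] [InnerProductSpace ℝ H]
    (n : ℕ) (x : Fin n → H) (l : Fin n → ℂ) :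
    0 ≤ ∑ i, ∑ j, l i * (starRingEnd ℂ) (l j) * (Real.exp (-‖x i - x j‖) : ℂ) := by
  have hterm_re : ∀ i j : Fin n,
      (l i * (starRingEnd ℂ) (l j) * (Real.exp (-‖x i - x j‖) : ℂ)).re
      = (l i).re * (l j).re * Real.exp (-‖x i - x j‖)
        + (l i).im * (l j).im * Real.exp (-‖x i - x j‖) := by
    intro i j
    simp only [Complex.mul_re, Complex.mul_im, Complex.conj_re, Complex.conj_im, Complex.ofReal_re, Complex.ofReal_im]
    ring
  have hterm_im : ∀ i j : Fin n,
      (l i * (starRingEnd ℂ) (l j) * (Real.exp (-‖x i - x j‖) : ℂ)).im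
      = (l i).im * (l j).re * Real.exp (-‖x i - x j‖)
        - (l i).re * (l j).im * Real.exp (-‖x i - x j‖) := by
    intro i j
    simp only [Complex.mul_re, Complex.mul_im, Complex.conj_re, Complex.conj_im, Complex.ofReal_re, Complex.ofReal_im]
    ring
  rw [Complex.le_def]
  constructor
  · simp only [Complex.zero_re]
    have hre : (∑ i, ∑ j, l i * (starRingEnd ℂ) (l j) * (Real.exp (-‖x i - x j‖) : ℂ)).re
        = (∑ i, ∑ j, (l i).re * (l j).re * Real.exp (-‖x i - x j‖))
          + (∑ i, ∑ j, (l i).im * (l j).im * Real.exp (-‖x i - x j‖)) := by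
      rw [Complex.re_sum, ← Finset.sum_add_distrib]
      refine Finset.sum_congr rfl fun i _ => ?_
      rw [Complex.re_sum, ← Finset.sum_add_distrib]
      exact Finset.sum_congr rfl fun j _ => hterm_re i j
    rw [hre]
    have h1 := expnorm_pd_real x (fun i => (l i).re)
    have h2 := expnorm_pd_real x (fun i => (l i).im)
    linarith
  · simp only [Complex.zero_im]
    have hswap : ∑ i, ∑ j, (l i).im * (l j).re * Real.exp (-‖x i - x j‖)
        = ∑ i, ∑ j, (l i).re * (l j).im * Real.exp (-‖x i - x j‖) := by
      rw [Finset.sum_comm]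
      refine Finset.sum_congr rfl fun i _ => Finset.sum_congr rfl fun j _ => ?_
      rw [norm_sub_rev]
      ring
    have him : (∑ i, ∑ j, l i * (starRingEnd ℂ) (l j) * (Real.exp (-‖x i - x j‖) : ℂ)).im
        = (∑ i, ∑ j, (l i).im * (l j).re * Real.exp (-‖x i - x j‖))
          - (∑ i, ∑ j, (l i).re * (l j).im * Real.exp (-‖x i - x j‖)) := by
      rw [Complex.im_sum, ← Finset.sum_sub_distrib]
      refine Finset.sum_congr rfl fun i _ => ?_
      rw [Complex.im_sum, ← Finset.sum_sub_distrib]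
      exact Finset.sum_congr rfl fun j _ => hterm_im i j
    rw [him, hswap, sub_self]
end

section
/- For 0 < α ≤ 1, the function φ(x) = exp(-‖x‖^α) on a real inner product space H is positive definite. -/
open scoped BigOperators ComplexOrder

open Matrix

lemma pow_form_nonneg {n : ℕ} (B : Matrix (Fin n) (Fin n) ℝ) (d : Fin n → ℝ) (k : ℕ) :
    0 ≤ ∑ i, ∑ j, d i * d j * ((Bᵀ * B) i j) ^ k := by
  have hentry : ∀ i j, (Bᵀ * B) i j = ∑ a, B a i * B a j := by
    intro i j
    simp [Matrix.mul_apply, Matrix.transpose_apply]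
  have hpow : ∀ i j : Fin n, ((Bᵀ * B) i j) ^ k
      = ∑ m ∈ Fintype.piFinset (fun _ : Fin k => (Finset.univ : Finset (Fin n))),
          (∏ t, B (m t) i) * (∏ t, B (m t) j) := by
    intro i j
    rw [hentry]
    rw [show ((∑ a, B a i * B a j) ^ k) = ∏ _t : Fin k, ∑ a, B a i * B a j by
      simp [Finset.prod_const]]
    rw [Finset.prod_univ_sum]
    exact Finset.sum_congr rfl fun m _ => by rw [← Finset.prod_mul_distrib]
  calc (0:ℝ) ≤ ∑ m ∈ Fintype.piFinset (fun _ : Fin k => (Finset.univ : Finset (Fin n))),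
        (∑ i, d i * ∏ t, B (m t) i) ^ 2 := by positivity
    _ = ∑ i, ∑ j, d i * d j * ((Bᵀ * B) i j) ^ k := by
        simp_rw [sq, Finset.sum_mul_sum, hpow, Finset.mul_sum]
        rw [Finset.sum_comm]
        refine Finset.sum_congr rfl fun i _ => ?_
        rw [Finset.sum_comm]
        refine Finset.sum_congr rfl fun j _ => Finset.sum_congr rfl fun m _ => by ring

lemma exp_psd_form_nonneg {n : ℕ} (G : Matrix (Fin n) (Fin n) ℝ) (hG : G.PosSemidef)
    (d : Fin n → ℝ) : 0 ≤ ∑ i, ∑ j, d i * d j * Real.exp (G i j) := by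
  obtain ⟨B, rfl⟩ : ∃ B : Matrix (Fin n) (Fin n) ℝ, G = Bᴴ * B := by
    open MatrixOrder in
    obtain ⟨B, hB⟩ := CStarAlgebra.nonneg_iff_eq_star_mul_self.mp hG.nonneg
    exact ⟨B, hB⟩
  rw [show Bᴴ = Bᵀ from Matrix.conjTranspose_eq_transpose_of_trivial B]
  have hsum : ∀ i j : Fin n, Summable (fun k : ℕ => d i * d j * (((Bᵀ * B) i j) ^ k / k.factorial)) :=
    fun i j => (Real.summable_pow_div_factorial _).mul_left _
  have hexp : ∀ i j : Fin n, d i * d j * Real.exp ((Bᵀ * B) i j)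
      = ∑' k : ℕ, d i * d j * (((Bᵀ * B) i j) ^ k / k.factorial) := by
    intro i j
    rw [Real.exp_eq_exp_ℝ, NormedSpace.exp_eq_tsum_div, ← tsum_mul_left]
  rw [show (∑ i, ∑ j, d i * d j * Real.exp ((Bᵀ * B) i j))
      = ∑ i, ∑ j, ∑' k : ℕ, d i * d j * (((Bᵀ * B) i j) ^ k / k.factorial) from
    Finset.sum_congr rfl fun i _ => Finset.sum_congr rfl fun j _ => hexp i j]
  rw [← Fintype.sum_prod_type' (f := fun i j => ∑' k : ℕ, d i * d j * (((Bᵀ * B) i j) ^ k / k.factorial))]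
  rw [← Summable.tsum_finsetSum (f := fun (p : Fin n × Fin n) (k : ℕ) =>
        d p.1 * d p.2 * (((Bᵀ * B) p.1 p.2) ^ k / k.factorial))
        (fun p _ => hsum p.1 p.2)]
  refine tsum_nonneg fun k => ?_
  have h := pow_form_nonneg B d k
  have e : (∑ p : Fin n × Fin n, d p.1 * d p.2 * ((Bᵀ * B) p.1 p.2 ^ k / (k.factorial : ℝ)))
      = (∑ i, ∑ j, d i * d j * ((Bᵀ * B) i j) ^ k) / (k.factorial : ℝ) := by
    rw [Fintype.sum_prod_type, Finset.sum_div]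
    exact Finset.sum_congr rfl fun i _ => by
      rw [Finset.sum_div]
      exact Finset.sum_congr rfl fun j _ => (mul_div_assoc _ _ _).symm
  rw [e]
  exact div_nonneg h (Nat.cast_nonneg _)

lemma gauss_pd {H : Type*} [NormedAddCommGroup H] [InnerProductSpace ℝ H]
    {n : ℕ} (y : Fin n → H) (c : Fin n → ℝ) {t : ℝ} (ht : 0 ≤ t) :
    0 ≤ ∑ i, ∑ j, c i * c j * Real.exp (-(t * ‖y i - y j‖ ^ 2)) := by
  set G : Matrix (Fin n) (Fin n) ℝ := Matrix.of fun i j => 2 * t * inner ℝ (y i) (y j) with hGdef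
  have hG : G.PosSemidef := by
    rw [Matrix.posSemidef_iff_dotProduct_mulVec]
    constructor
    · ext i j
      simp [hGdef, Matrix.conjTranspose_apply, real_inner_comm]
    · intro v
      simp only [dotProduct, Matrix.mulVec, dotProduct, hGdef, Matrix.of_apply,
        Pi.star_apply, star_trivial, RCLike.star_def]
      have : ∑ i, v i * ∑ j, (2 * t * inner ℝ (y i) (y j)) * v j
          = 2 * t * inner ℝ (∑ i, v i • y i) (∑ j, v j • y j) := by
        simp only [sum_inner, inner_sum, real_inner_smul_left, real_inner_smul_right,
          Finset.mul_sum, Finset.sum_mul]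
        rw [Finset.sum_comm]
        refine Finset.sum_congr rfl fun i _ => Finset.sum_congr rfl fun j _ => by ring
      rw [this]
      have := real_inner_self_nonneg (x := ∑ i, v i • y i)
      positivity
  have key := exp_psd_form_nonneg G hG (fun i => c i * Real.exp (-(t * ‖y i‖ ^ 2)))
  refine le_of_le_of_eq key (Finset.sum_congr rfl fun i _ => Finset.sum_congr rfl fun j _ => ?_)
  have hns : ‖y i - y j‖ ^ 2 = ‖y i‖ ^ 2 - 2 * inner ℝ (y i) (y j) + ‖y j‖ ^ 2 :=
    norm_sub_sq_real (y i) (y j)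
  have hGij : G i j = 2 * t * inner ℝ (y i) (y j) := rfl
  have hexp : Real.exp (-(t * ‖y i‖ ^ 2)) * Real.exp (-(t * ‖y j‖ ^ 2)) * Real.exp (G i j)
      = Real.exp (-(t * ‖y i - y j‖ ^ 2)) := by
    rw [← Real.exp_add, ← Real.exp_add, hGij]
    congr 1
    rw [hns]; ring
  rw [← hexp]; ring

lemma gauss_ext {H : Type*} [NormedAddCommGroup H] [InnerProductSpace ℝ H]
    {n : ℕ} (x : Fin n → H) (d : Fin n → ℝ) {t : ℝ} (ht : 0 ≤ t) :
    0 ≤ ∑ i, ∑ j, d i * d j * (Real.exp (-(t * ‖x i - x j‖ ^ 2))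
        - Real.exp (-(t * ‖x i‖ ^ 2)) - Real.exp (-(t * ‖x j‖ ^ 2)) + 1) := by
  have h := gauss_pd (Fin.cons 0 x) (Fin.cons (-∑ i, d i) d) ht
  simp only [Fin.sum_univ_succ, Fin.cons_zero, Fin.cons_succ, sub_zero, zero_sub, norm_neg,
    sub_self, norm_zero, ne_eq, OfNat.ofNat_ne_zero, not_false_eq_true, zero_pow, mul_zero,
    neg_zero, Real.exp_zero, mul_one] at h
  simp only [mul_add, mul_sub, mul_one, Finset.sum_add_distrib, Finset.sum_sub_distrib,
    ← Finset.sum_mul, ← Finset.mul_sum] at h ⊢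
  set S := ∑ i, d i with hS
  set E := ∑ i, d i * Real.exp (-(t * ‖x i‖ ^ 2)) with hE
  have h1 : ∑ i, ∑ j, d i * d j * Real.exp (-(t * ‖x j‖ ^ 2)) = S * E := by
    rw [hS, hE, Finset.sum_mul_sum]
    exact Finset.sum_congr rfl fun i _ => Finset.sum_congr rfl fun j _ => by ring
  have h2 : ∑ i, d i * -S * Real.exp (-(t * ‖x i‖ ^ 2)) = -(S * E) := by
    have e1 : ∀ i : Fin n, d i * -S * Real.exp (-(t * ‖x i‖ ^ 2))
        = -(S * (d i * Real.exp (-(t * ‖x i‖ ^ 2)))) := fun i => by ring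
    simp_rw [e1]
    rw [Finset.sum_neg_distrib, ← Finset.mul_sum, ← hE]
  have h3 : ∑ i, -S * d i * Real.exp (-(t * ‖x i‖ ^ 2)) = -(S * E) := by
    have e1 : ∀ i : Fin n, -S * d i * Real.exp (-(t * ‖x i‖ ^ 2))
        = -(S * (d i * Real.exp (-(t * ‖x i‖ ^ 2)))) := fun i => by ring
    simp_rw [e1]
    rw [Finset.sum_neg_distrib, ← Finset.mul_sum, ← hE]
  have h4 : ∑ i, ∑ j, d i * d j * Real.exp (-(t * ‖x i‖ ^ 2)) = S * E := by
    rw [hS, hE, Finset.sum_mul_sum, Finset.sum_comm]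
    exact Finset.sum_congr rfl fun i _ => Finset.sum_congr rfl fun j _ => by ring
  have h5 : ∑ i, ∑ j, d i * d j = S * S := by
    rw [hS, Finset.sum_mul_sum]
  have h6 : ∑ i, d i * S * Real.exp (-(t * ‖x i‖ ^ 2)) = S * E := by
    have e1 : ∀ i : Fin n, d i * S * Real.exp (-(t * ‖x i‖ ^ 2))
        = S * (d i * Real.exp (-(t * ‖x i‖ ^ 2))) := fun i => by ring
    simp_rw [e1]
    rw [← Finset.mul_sum, ← hE]
  rw [h1, h6]
  rw [h2, h3] at h
  linarith [h]

section Integrals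
variable {β : ℝ}

lemma subord_integrable (hβ0 : 0 < β) (hβ1 : β < 1) (r : ℝ) :
    MeasureTheory.IntegrableOn
      (fun t => (1 - Real.exp (-(t * r ^ 2))) * t ^ (-β - 1)) (Set.Ioi (0:ℝ)) := by
  set c := r ^ 2 with hc
  have hc0 : 0 ≤ c := sq_nonneg r
  have hcont : ContinuousOn (fun t : ℝ => (1 - Real.exp (-(t * c))) * t ^ (-β - 1))
      (Set.Ioi (0:ℝ)) := by
    refine ContinuousOn.mul ?_ (continuousOn_id.rpow_const fun x hx => Or.inl (ne_of_gt hx))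
    exact (continuous_const.sub ((continuous_id.mul continuous_const).neg.rexp)).continuousOn
  rw [← Set.Ioc_union_Ioi_eq_Ioi (zero_le_one (α := ℝ))]
  refine MeasureTheory.IntegrableOn.union ?_ ?_
  · -- on Ioc 0 1, bound by c * t ^ (-β)
    have hg : MeasureTheory.IntegrableOn (fun t : ℝ => c * t ^ (-β)) (Set.Ioc (0:ℝ) 1) := by
      refine MeasureTheory.Integrable.const_mul ?_ c
      exact (intervalIntegrable_iff_integrableOn_Ioc_of_le zero_le_one).1
        (intervalIntegral.intervalIntegrable_rpow' (by linarith))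
    refine MeasureTheory.Integrable.mono' hg
      ((hcont.mono Set.Ioc_subset_Ioi_self).aestronglyMeasurable measurableSet_Ioc) ?_
    refine (MeasureTheory.ae_restrict_iff' measurableSet_Ioc).2 (MeasureTheory.ae_of_all _ ?_)
    rintro t ⟨ht0, ht1⟩
    have htc : 0 ≤ t * c := mul_nonneg ht0.le hc0
    have h1 : 0 ≤ 1 - Real.exp (-(t * c)) := by
      have := Real.exp_le_one_iff.2 (neg_nonpos.2 htc)
      linarith
    have h2 : 1 - Real.exp (-(t * c)) ≤ t * c := by
      have := Real.add_one_le_exp (-(t * c))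
      linarith
    have h3 : (0:ℝ) ≤ t ^ (-β - 1) := Real.rpow_nonneg ht0.le _
    rw [Real.norm_of_nonneg (mul_nonneg h1 h3)]
    calc (1 - Real.exp (-(t * c))) * t ^ (-β - 1) ≤ (t * c) * t ^ (-β - 1) := by
          exact mul_le_mul_of_nonneg_right h2 h3
      _ = c * t ^ (-β) := by
          rw [show t * c * t ^ (-β - 1) = c * (t * t ^ (-β - 1)) by ring]
          congr 1
          rw [show t * t ^ (-β - 1) = t ^ (1:ℝ) * t ^ (-β - 1) by rw [Real.rpow_one]]
          rw [← Real.rpow_add ht0]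
          norm_num
  · -- on Ioi 1, bound by t ^ (-β - 1)
    have hg : MeasureTheory.IntegrableOn (fun t : ℝ => t ^ (-β - 1)) (Set.Ioi (1:ℝ)) :=
      integrableOn_Ioi_rpow_of_lt (by linarith) one_pos
    refine MeasureTheory.Integrable.mono' hg
      ((hcont.mono (Set.Ioi_subset_Ioi zero_le_one)).aestronglyMeasurable measurableSet_Ioi) ?_
    refine (MeasureTheory.ae_restrict_iff' measurableSet_Ioi).2 (MeasureTheory.ae_of_all _ ?_)
    intro t ht
    have ht0 : (0:ℝ) < t := lt_trans one_pos ht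
    have htc : 0 ≤ t * c := mul_nonneg ht0.le hc0
    have h1 : 0 ≤ 1 - Real.exp (-(t * c)) := by
      have := Real.exp_le_one_iff.2 (neg_nonpos.2 htc)
      linarith
    have h2 : 1 - Real.exp (-(t * c)) ≤ 1 := by
      have := Real.exp_pos (-(t * c))
      linarith
    have h3 : (0:ℝ) ≤ t ^ (-β - 1) := Real.rpow_nonneg ht0.le _
    rw [Real.norm_of_nonneg (mul_nonneg h1 h3)]
    nlinarith

lemma subord_value (hβ0 : 0 < β) (hβ1 : β < 1) {r : ℝ} (hr : 0 ≤ r) :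
    ∫ t in Set.Ioi (0:ℝ), (1 - Real.exp (-(t * r ^ 2))) * t ^ (-β - 1)
      = r ^ (2 * β) * ∫ t in Set.Ioi (0:ℝ), (1 - Real.exp (-t)) * t ^ (-β - 1) := by
  rcases eq_or_lt_of_le hr with h0 | hrpos
  · rw [← h0]
    rw [Real.zero_rpow (by positivity), zero_mul]
    rw [show (fun t : ℝ => (1 - Real.exp (-(t * (0:ℝ) ^ 2))) * t ^ (-β - 1)) = fun _ => 0 by
      funext t; simp]
    simp
  · set c := r ^ 2 with hc
    have hc0 : 0 < c := by positivity
    have sub := MeasureTheory.integral_comp_mul_left_Ioi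
      (fun s => (1 - Real.exp (-s)) * s ^ (-β - 1)) 0 hc0
    rw [mul_zero] at sub
    have congr1 : ∫ t in Set.Ioi (0:ℝ), (1 - Real.exp (-(c * t))) * (c * t) ^ (-β - 1)
        = ∫ t in Set.Ioi (0:ℝ), c ^ (-β - 1) * ((1 - Real.exp (-(t * c))) * t ^ (-β - 1)) := by
      refine MeasureTheory.setIntegral_congr_fun measurableSet_Ioi fun t ht => ?_
      rw [Real.mul_rpow hc0.le (le_of_lt ht), mul_comm c t]
      ring
    rw [congr1] at sub
    rw [MeasureTheory.integral_const_mul] at sub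
    -- sub : c ^ (-β-1) * J = c⁻¹ • I
    rw [smul_eq_mul] at sub
    set J := ∫ t in Set.Ioi (0:ℝ), (1 - Real.exp (-(t * c))) * t ^ (-β - 1) with hJ
    set I := ∫ t in Set.Ioi (0:ℝ), (1 - Real.exp (-t)) * t ^ (-β - 1) with hI
    have hcpow : (0:ℝ) < c ^ (-β - 1) := Real.rpow_pos_of_pos hc0 _
    have hJval : J = c ^ (β + 1) * (c⁻¹ * I) := by
      have : c ^ (β + 1) * (c ^ (-β - 1) * J) = c ^ (β + 1) * (c⁻¹ * I) := by rw [sub]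
      rwa [← mul_assoc, ← Real.rpow_add hc0, show β + 1 + (-β - 1) = 0 by ring,
        Real.rpow_zero, one_mul] at this
    rw [hJval, ← mul_assoc]
    have : c ^ (β + 1) * c⁻¹ = r ^ (2 * β) := by
      rw [Real.rpow_add hc0, Real.rpow_one, mul_assoc, mul_inv_cancel₀ (ne_of_gt hc0), mul_one]
      rw [hc, ← Real.rpow_natCast r 2, ← Real.rpow_mul hr]
      norm_num [mul_comm]
    rw [this]

lemma subord_I_pos (hβ0 : 0 < β) (hβ1 : β < 1) :
    0 < ∫ t in Set.Ioi (0:ℝ), (1 - Real.exp (-t)) * t ^ (-β - 1) := by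
  have hint : MeasureTheory.IntegrableOn
      (fun t => (1 - Real.exp (-t)) * t ^ (-β - 1)) (Set.Ioi (0:ℝ)) := by
    have := subord_integrable hβ0 hβ1 1
    simpa using this
  have hnn : 0 ≤ᵐ[MeasureTheory.volume.restrict (Set.Ioi (0:ℝ))]
      fun t => (1 - Real.exp (-t)) * t ^ (-β - 1) := by
    refine (MeasureTheory.ae_restrict_iff' measurableSet_Ioi).2 (MeasureTheory.ae_of_all _ ?_)
    intro t ht
    have h1 : 0 ≤ 1 - Real.exp (-t) := by
      have := Real.exp_le_one_iff.2 (neg_nonpos.2 (le_of_lt ht))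
      linarith
    exact mul_nonneg h1 (Real.rpow_nonneg (le_of_lt ht) _)
  rw [MeasureTheory.setIntegral_pos_iff_support_of_nonneg_ae hnn hint]
  have hsub : Set.Ioi (0:ℝ) ⊆ Function.support (fun t => (1 - Real.exp (-t)) * t ^ (-β - 1)) := by
    intro t ht
    have h1 : 0 < 1 - Real.exp (-t) := by
      have := Real.exp_lt_one_iff.2 (neg_neg_iff_pos.2 ht)
      linarith
    have h2 : 0 < t ^ (-β - 1) := Real.rpow_pos_of_pos ht _
    exact ne_of_gt (mul_pos h1 h2)
  calc (0:ENNReal) < MeasureTheory.volume (Set.Ioi (0:ℝ)) := by simp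
    _ ≤ MeasureTheory.volume (Function.support (fun t => (1 - Real.exp (-t)) * t ^ (-β - 1))
          ∩ Set.Ioi (0:ℝ)) := MeasureTheory.measure_mono (by
            intro t ht; exact ⟨hsub ht, ht⟩)

lemma K_form_nonneg {H : Type*} [NormedAddCommGroup H] [InnerProductSpace ℝ H]
    (hβ0 : 0 < β) (hβ1 : β < 1) {n : ℕ} (x : Fin n → H) (d : Fin n → ℝ) :
    0 ≤ ∑ i, ∑ j, d i * d j *
      (‖x i‖ ^ (2 * β) + ‖x j‖ ^ (2 * β) - ‖x i - x j‖ ^ (2 * β)) := by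
  classical
  set I := ∫ t in Set.Ioi (0:ℝ), (1 - Real.exp (-t)) * t ^ (-β - 1) with hIdef
  have hI : 0 < I := subord_I_pos hβ0 hβ1
  set g : Fin n → Fin n → ℝ → ℝ := fun i j t => d i * d j *
      ((1 - Real.exp (-(t * ‖x i‖ ^ 2))) * t ^ (-β - 1)
        + (1 - Real.exp (-(t * ‖x j‖ ^ 2))) * t ^ (-β - 1)
        - (1 - Real.exp (-(t * ‖x i - x j‖ ^ 2))) * t ^ (-β - 1)) with hgdef
  have hint : ∀ r : ℝ, MeasureTheory.IntegrableOn
      (fun t => (1 - Real.exp (-(t * r ^ 2))) * t ^ (-β - 1)) (Set.Ioi (0:ℝ)) :=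
    subord_integrable hβ0 hβ1
  have hgint : ∀ i j, MeasureTheory.IntegrableOn (g i j) (Set.Ioi (0:ℝ)) := by
    intro i j
    exact (((hint ‖x i‖).add (hint ‖x j‖)).sub (hint ‖x i - x j‖)).const_mul _
  have hgval : ∀ i j, ∫ t in Set.Ioi (0:ℝ), g i j t
      = d i * d j * ((‖x i‖ ^ (2 * β) + ‖x j‖ ^ (2 * β) - ‖x i - x j‖ ^ (2 * β)) * I) := by
    intro i j
    rw [hgdef]
    simp only
    rw [MeasureTheory.integral_const_mul]
    have hAB : MeasureTheory.IntegrableOn (fun t : ℝ =>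
        (1 - Real.exp (-(t * ‖x i‖ ^ 2))) * t ^ (-β - 1)
          + (1 - Real.exp (-(t * ‖x j‖ ^ 2))) * t ^ (-β - 1)) (Set.Ioi (0:ℝ)) :=
      (hint ‖x i‖).add (hint ‖x j‖)
    rw [MeasureTheory.integral_sub hAB (hint ‖x i - x j‖)]
    rw [MeasureTheory.integral_add (hint ‖x i‖) (hint ‖x j‖)]
    rw [subord_value hβ0 hβ1 (norm_nonneg (x i)), subord_value hβ0 hβ1 (norm_nonneg (x j)),
      subord_value hβ0 hβ1 (norm_nonneg (x i - x j)), ← hIdef]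
    ring
  have hbig : (∑ i, ∑ j, d i * d j *
      (‖x i‖ ^ (2 * β) + ‖x j‖ ^ (2 * β) - ‖x i - x j‖ ^ (2 * β))) * I
      = ∫ t in Set.Ioi (0:ℝ), ∑ i, ∑ j, g i j t := by
    rw [MeasureTheory.integral_finset_sum _ (fun i _ =>
      MeasureTheory.integrable_finset_sum _ (fun j _ => hgint i j))]
    rw [Finset.sum_mul]
    refine Finset.sum_congr rfl fun i _ => ?_
    rw [MeasureTheory.integral_finset_sum _ (fun j _ => hgint i j), Finset.sum_mul]
    refine Finset.sum_congr rfl fun j _ => ?_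
    rw [hgval i j]
    ring
  have hpos : 0 ≤ ∫ t in Set.Ioi (0:ℝ), ∑ i, ∑ j, g i j t := by
    refine MeasureTheory.setIntegral_nonneg measurableSet_Ioi fun t ht => ?_
    have hrw : ∑ i, ∑ j, g i j t
        = (∑ i, ∑ j, d i * d j * (Real.exp (-(t * ‖x i - x j‖ ^ 2))
            - Real.exp (-(t * ‖x i‖ ^ 2)) - Real.exp (-(t * ‖x j‖ ^ 2)) + 1)) * t ^ (-β - 1) := by
      rw [Finset.sum_mul]
      refine Finset.sum_congr rfl fun i _ => ?_
      rw [Finset.sum_mul]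
      refine Finset.sum_congr rfl fun j _ => ?_
      rw [hgdef]
      ring
    rw [hrw]
    exact mul_nonneg (gauss_ext x d (le_of_lt ht)) (Real.rpow_nonneg (le_of_lt ht) _)
  have := hbig ▸ hpos
  nlinarith [this, hI]

end Integrals

lemma real_pd {H : Type*} [NormedAddCommGroup H] [InnerProductSpace ℝ H]
    {α : ℝ} (hα0 : 0 < α) (hα1 : α ≤ 1) {n : ℕ} (x : Fin n → H) (c : Fin n → ℝ) :
    0 ≤ ∑ i, ∑ j, c i * c j * Real.exp (-‖x i - x j‖ ^ α) := by
  have hβ0 : 0 < α / 2 := by linarith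
  have hβ1 : α / 2 < 1 := by linarith
  have h2β : 2 * (α / 2) = α := by ring
  set M : Matrix (Fin n) (Fin n) ℝ :=
    Matrix.of fun i j => ‖x i‖ ^ α + ‖x j‖ ^ α - ‖x i - x j‖ ^ α with hMdef
  have hM : M.PosSemidef := by
    rw [Matrix.posSemidef_iff_dotProduct_mulVec]
    constructor
    · ext i j
      simp only [Matrix.conjTranspose_apply, hMdef, Matrix.of_apply, star_trivial]
      rw [norm_sub_rev]
      ring
    · intro v
      simp only [dotProduct, Matrix.mulVec, dotProduct, hMdef, Matrix.of_apply,
        Pi.star_apply, star_trivial]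
      have key := K_form_nonneg hβ0 hβ1 x v
      rw [h2β] at key
      refine le_trans key (le_of_eq ?_)
      rw [Finset.sum_congr rfl fun i _ => Finset.mul_sum (Finset.univ) _ (v i)]
      refine Finset.sum_congr rfl fun i _ => Finset.sum_congr rfl fun j _ => by ring
  have key := exp_psd_form_nonneg M hM (fun i => c i * Real.exp (-‖x i‖ ^ α))
  refine le_of_le_of_eq key (Finset.sum_congr rfl fun i _ => Finset.sum_congr rfl fun j _ => ?_)
  have hMij : M i j = ‖x i‖ ^ α + ‖x j‖ ^ α - ‖x i - x j‖ ^ α := rfl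
  have hexp : Real.exp (-‖x i‖ ^ α) * Real.exp (-‖x j‖ ^ α) * Real.exp (M i j)
      = Real.exp (-‖x i - x j‖ ^ α) := by
    rw [← Real.exp_add, ← Real.exp_add, hMij]
    congr 1
    ring
  rw [← hexp]
  ring

theorem stmt1 {H : Type*} [NormedAddCommGroup H] [InnerProductSpace ℝ H]
    (α : ℝ) (hα0 : 0 < α) (hα1 : α ≤ 1)
    (n : ℕ) (x : Fin n → H) (l : Fin n → ℂ) :
    0 ≤ ∑ i, ∑ j, l i * (starRingEnd ℂ) (l j) * (Real.exp (-‖x i - x j‖ ^ α) : ℂ) := by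
  set E : Fin n → Fin n → ℝ := fun i j => Real.exp (-‖x i - x j‖ ^ α) with hEdef
  have hEsymm : ∀ i j, E i j = E j i := fun i j => by rw [hEdef]; simp [norm_sub_rev]
  rw [Complex.le_def]
  constructor
  · simp only [Complex.zero_re, Complex.re_sum, Complex.mul_re, Complex.ofReal_re,
      Complex.ofReal_im, Complex.conj_re, Complex.conj_im, mul_zero, sub_zero]
    have hrw : ∀ i j : Fin n,
        ((l i).re * (l j).re - (l i).im * -(l j).im) * E i j
          = (l i).re * (l j).re * E i j + (l i).im * (l j).im * E i j := fun i j => by ring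
    simp only [show ∀ i j, Real.exp (-‖x i - x j‖ ^ α) = E i j from fun i j => rfl, hrw,
      Finset.sum_add_distrib]
    have h1 := real_pd hα0 hα1 x (fun i => (l i).re)
    have h2 := real_pd hα0 hα1 x (fun i => (l i).im)
    have g1 : (0:ℝ) ≤ ∑ i, ∑ j, (l i).re * (l j).re * E i j := h1
    have g2 : (0:ℝ) ≤ ∑ i, ∑ j, (l i).im * (l j).im * E i j := h2
    linarith
  · simp only [Complex.zero_im, Complex.im_sum, Complex.mul_im, Complex.ofReal_re,
      Complex.ofReal_im, Complex.conj_re, Complex.conj_im, mul_zero, zero_add]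
    set S := ∑ i, ∑ j, ((l i).re * -(l j).im + (l i).im * (l j).re) * E i j with hS
    show 0 = S
    have hneg : S = -S := by
      nth_rewrite 1 [hS]
      rw [Finset.sum_comm]
      rw [show ∀ f : Fin n → Fin n → ℝ, (∑ j, ∑ i, f i j) = ∑ i, ∑ j, f j i from fun f => rfl]
      rw [hS, ← Finset.sum_neg_distrib]
      refine Finset.sum_congr rfl fun i _ => ?_
      rw [← Finset.sum_neg_distrib]
      refine Finset.sum_congr rfl fun j _ => ?_
      rw [hEsymm i j]
      ring
    linarith
end

section
/- If G is a topological group topologically isomorphic to a subgroup of the unitary group U(H) of a Hilbert space H (with the strong operator topology), then for each neighbourhood U of the identity of G there exists a continuous positive definite function φ_U : G → ℝ with φ_U(1) = 1 such that {g ∈ G : |φ_U(g) - 1| < 1/2} ⊆ U. -/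
open scoped BigOperators ComplexOrder
open Matrix


section Aux

variable {m : ℕ}

private lemma sum3_comm {α : Type*} [AddCommMonoid α] (f : Fin m → Fin m → Fin m → α) :
    ∑ i, ∑ j, ∑ p, f i j p = ∑ p, ∑ i, ∑ j, f i j p :=
  calc ∑ i, ∑ j, ∑ p, f i j p
      = ∑ i, ∑ p, ∑ j, f i j p := Finset.sum_congr rfl fun i _ => Finset.sum_comm
    _ = ∑ p, ∑ i, ∑ j, f i j p := Finset.sum_comm

lemma myQF {M : Matrix (Fin m) (Fin m) ℂ} (hM : M.PosSemidef) (l : Fin m → ℂ) :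
    0 ≤ ∑ i, ∑ j, l i * (starRingEnd ℂ) (l j) * M i j := by
  have h := hM.dotProduct_mulVec_nonneg (star l)
  have he : dotProduct (star (star l)) (M *ᵥ star l)
      = ∑ i, ∑ j, l i * (starRingEnd ℂ) (l j) * M i j := by
    simp only [star_star, dotProduct, Matrix.mulVec, Finset.mul_sum, Pi.star_apply]
    refine Finset.sum_congr rfl fun i _ => Finset.sum_congr rfl fun j _ => ?_
    simp only [RCLike.star_def]
    ring
  rwa [he] at h

lemma myGram {H : Type*} [NormedAddCommGroup H] [InnerProductSpace ℂ H]
    (v : Fin m → H) :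
    Matrix.PosSemidef (Matrix.of fun i j => (inner ℂ (v i) (v j) : ℂ)) := by
  refine Matrix.PosSemidef.of_dotProduct_mulVec_nonneg ?_ ?_
  · ext i j
    simp only [Matrix.conjTranspose_apply, Matrix.of_apply, RCLike.star_def]
    exact inner_conj_symm _ _
  · intro x
    have he : dotProduct (star x) ((Matrix.of fun i j => (inner ℂ (v i) (v j) : ℂ)) *ᵥ x)
        = (inner ℂ (∑ i, x i • v i) (∑ j, x j • v j) : ℂ) := by
      rw [sum_inner]
      simp only [dotProduct, Matrix.mulVec, Matrix.of_apply, Pi.star_apply,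
        inner_sum, inner_smul_right, inner_smul_left, Finset.mul_sum]
      refine Finset.sum_congr rfl fun i _ => Finset.sum_congr rfl fun j _ => ?_
      simp only [RCLike.star_def]
      ring
    rw [he]
    have : (inner ℂ (∑ i, x i • v i) (∑ j, x j • v j) : ℂ) = ((‖∑ i, x i • v i‖ ^ 2 : ℝ) : ℂ) := by
      rw [inner_self_eq_norm_sq_to_K]
      norm_cast
    rw [this, Complex.zero_le_real]
    positivity

open scoped MatrixOrder in
lemma mySchur {A B : Matrix (Fin m) (Fin m) ℂ} (hA : A.PosSemidef) (hB : B.PosSemidef) :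
    Matrix.PosSemidef (Matrix.of fun i j => A i j * B i j) := by
  obtain ⟨C, hC⟩ := CStarAlgebra.nonneg_iff_eq_star_mul_self.mp hA.nonneg
  rw [Matrix.star_eq_conjTranspose] at hC
  refine Matrix.PosSemidef.of_dotProduct_mulVec_nonneg ?_ ?_
  · ext i j
    simp only [Matrix.conjTranspose_apply, Matrix.of_apply, star_mul']
    rw [← Matrix.conjTranspose_apply, ← Matrix.conjTranspose_apply, hA.1, hB.1]
  · intro x
    have he : dotProduct (star x) ((Matrix.of fun i j => A i j * B i j) *ᵥ x)
        = ∑ p, dotProduct (star fun i => C p i * x i) (B *ᵥ fun i => C p i * x i) := by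
      have lhs : dotProduct (star x) ((Matrix.of fun i j => A i j * B i j) *ᵥ x)
          = ∑ i, ∑ j, ∑ p, star (x i) * star (C p i) * B i j * C p j * x j := by
        simp only [dotProduct, Matrix.mulVec, Matrix.of_apply, Pi.star_apply, hC,
          Matrix.mul_apply, Matrix.conjTranspose_apply, Finset.mul_sum, Finset.sum_mul]
        refine Finset.sum_congr rfl fun i _ => Finset.sum_congr rfl fun j _ =>
          Finset.sum_congr rfl fun p _ => by ring
      have rhs : ∑ p, dotProduct (star fun i => C p i * x i) (B *ᵥ fun i => C p i * x i)
          = ∑ p, ∑ i, ∑ j, star (x i) * star (C p i) * B i j * C p j * x j := by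
        refine Finset.sum_congr rfl fun p _ => ?_
        simp only [dotProduct, Matrix.mulVec, Pi.star_apply, Finset.mul_sum, star_mul']
        refine Finset.sum_congr rfl fun i _ => Finset.sum_congr rfl fun j _ => by ring
      rw [lhs, rhs, sum3_comm]
    rw [he]
    exact Finset.sum_nonneg fun p _ => hB.dotProduct_mulVec_nonneg _

lemma myAllOnes : Matrix.PosSemidef (Matrix.of fun _ _ : Fin m => (1 : ℂ)) := by
  have h := myGram (H := ℂ) (fun _ : Fin m => (1 : ℂ))
  have : (Matrix.of fun _ _ : Fin m => (1 : ℂ))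
      = Matrix.of fun i j => (inner ℂ ((fun _ : Fin m => (1:ℂ)) i) ((fun _ : Fin m => (1:ℂ)) j) : ℂ) := by
    ext i j; simp
  rw [this]; exact h

lemma myPow {A : Matrix (Fin m) (Fin m) ℂ} (hA : A.PosSemidef) (k : ℕ) :
    Matrix.PosSemidef (Matrix.of fun i j => A i j ^ k) := by
  induction k with
  | zero => simpa using myAllOnes
  | succ k ih =>
      have h2 := mySchur ih hA
      have : (Matrix.of fun i j => A i j ^ (k+1))
          = Matrix.of fun i j => (Matrix.of fun i j => A i j ^ k) i j * A i j := by
        ext i j; simp [pow_succ]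
      rw [this]; exact h2

end Aux

section Exp

open Nat

variable {m : ℕ}

lemma myExp {B : Matrix (Fin m) (Fin m) ℝ} (hB : (B.map Complex.ofReal).PosSemidef) :
    Matrix.PosSemidef (Matrix.of fun i j => ((Real.exp (B i j) : ℝ) : ℂ)) := by
  have hsymm : ∀ i j, B j i = B i j := by
    intro i j
    have h := congrFun (congrFun hB.1 i) j
    simpa [Matrix.conjTranspose_apply, Matrix.map_apply, Complex.conj_ofReal,
      Complex.ofReal_inj] using h
  refine Matrix.PosSemidef.of_dotProduct_mulVec_nonneg ?_ ?_
  · ext i j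
    simp only [Matrix.conjTranspose_apply, Matrix.of_apply, RCLike.star_def,
      Complex.conj_ofReal, hsymm i j]
  · intro x
    have hsummable : ∀ (z c d : ℂ), Summable fun k : ℕ => c * (z ^ k / k !) * d := fun z c d =>
      ((NormedSpace.expSeries_div_summable z).mul_left c).mul_right d
    have hexp : ∀ i j, ((Real.exp (B i j) : ℝ) : ℂ) = ∑' k : ℕ, ((B i j : ℂ)) ^ k / k ! := by
      intro i j
      rw [Complex.ofReal_exp, Complex.exp_eq_exp_ℂ, NormedSpace.exp_eq_tsum_div]
    have he : dotProduct (star x)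
          ((Matrix.of fun i j => ((Real.exp (B i j) : ℝ) : ℂ)) *ᵥ x)
        = ∑' k : ℕ, ∑ i, ∑ j, star (x i) * ((B i j : ℂ) ^ k / k !) * x j := by
      simp only [dotProduct, Matrix.mulVec, Matrix.of_apply, Pi.star_apply,
        Finset.mul_sum]
      have h1 : ∀ i j, star (x i) * (((Real.exp (B i j) : ℝ) : ℂ) * x j)
          = ∑' k : ℕ, star (x i) * ((B i j : ℂ) ^ k / k !) * x j := by
        intro i j
        rw [hexp i j, ← tsum_mul_right, ← tsum_mul_left]
        exact tsum_congr fun k => by ring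
      calc ∑ i, ∑ j, star (x i) * (((Real.exp (B i j) : ℝ) : ℂ) * x j)
          = ∑ i, ∑ j, ∑' k : ℕ, star (x i) * ((B i j : ℂ) ^ k / k !) * x j :=
            Finset.sum_congr rfl fun i _ => Finset.sum_congr rfl fun j _ => h1 i j
        _ = ∑ i, ∑' k : ℕ, ∑ j, star (x i) * ((B i j : ℂ) ^ k / k !) * x j :=
            Finset.sum_congr rfl fun i _ =>
              (Summable.tsum_finsetSum fun j _ => hsummable _ _ _).symm
        _ = ∑' k : ℕ, ∑ i, ∑ j, star (x i) * ((B i j : ℂ) ^ k / k !) * x j :=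
            (Summable.tsum_finsetSum fun i _ => summable_sum fun j _ => hsummable _ _ _).symm
    rw [he]
    refine tsum_nonneg fun k => ?_
    have hp := (myPow hB k).dotProduct_mulVec_nonneg x
    have heq : (∑ i, ∑ j, star (x i) * ((B i j : ℂ) ^ k / k !) * x j)
        = (((k ! : ℝ)⁻¹ : ℝ) : ℂ) * dotProduct (star x)
            ((Matrix.of fun i j => (B.map Complex.ofReal) i j ^ k) *ᵥ x) := by
      simp only [dotProduct, Matrix.mulVec, Matrix.of_apply, Pi.star_apply,
        Matrix.map_apply, Finset.mul_sum]
      refine Finset.sum_congr rfl fun i _ => Finset.sum_congr rfl fun j _ => ?_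
      push_cast
      ring
    rw [heq]
    exact mul_nonneg (Complex.zero_le_real.mpr (by positivity)) hp

end Exp

/-- G is topologically isomorphic to a subgroup of the unitary group of the Hilbert
space `H`, carrying the strong operator topology: `T` is an injective continuous (in the
strong operator sense) homomorphism, and the sets
`{g : ‖T g ξᵢ - ξᵢ‖ ≤ εᵢ, 1 ≤ i ≤ n}` form a neighbourhood basis at the identity of `G`. -/
theorem stmt4 {G : Type*} [Group G] [TopologicalSpace G] [IsTopologicalGroup G]
    {H : Type*} [NormedAddCommGroup H] [InnerProductSpace ℂ H] [CompleteSpace H]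
    (T : G →* unitary (H →L[ℂ] H))
    (hinj : Function.Injective T)
    (hcont : ∀ ξ : H, Continuous fun g => (T g : H →L[ℂ] H) ξ)
    (hbasis : ∀ U ∈ nhds (1 : G), ∃ (n : ℕ) (ξ : Fin n → H) (ε : Fin n → ℝ),
      (∀ i, 0 < ε i) ∧
      {g : G | ∀ i, ‖(T g : H →L[ℂ] H) (ξ i) - ξ i‖ ≤ ε i} ⊆ U) :
    ∀ U ∈ nhds (1 : G), ∃ φ : G → ℝ,
      Continuous φ ∧ φ 1 = 1 ∧
      (∀ (n : ℕ) (g : Fin n → G) (l : Fin n → ℂ),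
        0 ≤ ∑ i, ∑ j, l i * (starRingEnd ℂ) (l j) * (φ (g i * (g j)⁻¹) : ℂ)) ∧
      {g : G | |φ g - 1| < 1/2} ⊆ U := by
  intro U hU
  obtain ⟨n, ξ, ε, hε, hsub⟩ := hbasis U hU
  -- basic unitary facts
  have hTinv : ∀ (u : G) (x : H), (T u⁻¹ : H →L[ℂ] H) ((T u : H →L[ℂ] H) x) = x := by
    intro u x
    have : ((T u⁻¹ : H →L[ℂ] H) * (T u : H →L[ℂ] H)) x = x := by
      rw [← MulMemClass.coe_mul, ← _root_.map_mul, inv_mul_cancel, _root_.map_one, OneMemClass.coe_one,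
        ContinuousLinearMap.one_apply]
    simpa [ContinuousLinearMap.mul_apply] using this
  have hadj : ∀ u : G, ContinuousLinearMap.adjoint (T u : H →L[ℂ] H) = (T u⁻¹ : H →L[ℂ] H) := by
    intro u
    rw [← ContinuousLinearMap.star_eq_adjoint, ← Unitary.coe_star, Unitary.star_eq_inv,
      ← map_inv]
  have hinner : ∀ (u : G) (x y : H),
      (inner ℂ ((T u : H →L[ℂ] H) x) ((T u : H →L[ℂ] H) y) : ℂ) = inner ℂ x y := by
    intro u x y
    rw [← ContinuousLinearMap.adjoint_inner_right, hadj, hTinv]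
  have hnorm : ∀ (u : G) (x : H), ‖(T u : H →L[ℂ] H) x‖ = ‖x‖ := by
    intro u x
    have h2 := hinner u x x
    rw [inner_self_eq_norm_sq_to_K, inner_self_eq_norm_sq_to_K] at h2
    have h3 : ‖(T u : H →L[ℂ] H) x‖ ^ 2 = ‖x‖ ^ 2 := by exact_mod_cast h2
    nlinarith [norm_nonneg ((T u : H →L[ℂ] H) x), norm_nonneg x]
  -- the data
  set t : Fin n → ℝ := fun k => Real.log 2 / ε k ^ 2 with ht_def
  have hlog2 : 0 < Real.log 2 := Real.log_pos one_lt_two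
  have ht : ∀ k, 0 < t k := fun k => div_pos hlog2 (pow_pos (hε k) 2)
  set ψ : G → ℝ := fun g => ∑ k, t k * ‖(T g : H →L[ℂ] H) (ξ k) - ξ k‖ ^ 2 with hψ_def
  have hψ0 : ∀ g, 0 ≤ ψ g := fun g =>
    Finset.sum_nonneg fun k _ => mul_nonneg (ht k).le (sq_nonneg _)
  refine ⟨fun g => Real.exp (-ψ g), ?_, ?_, ?_, ?_⟩
  · -- continuity
    exact Real.continuous_exp.comp
      ((continuous_finset_sum _ fun k _ =>
        continuous_const.mul (((hcont (ξ k)).sub continuous_const).norm.pow 2)).neg)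
  · -- value at 1
    have hT1 : ∀ x : H, (T 1 : H →L[ℂ] H) x = x := fun x => by
      rw [_root_.map_one, OneMemClass.coe_one, ContinuousLinearMap.one_apply]
    have hψ1 : ψ 1 = 0 := by
      rw [hψ_def]
      simp only [hT1, sub_self, norm_zero]
      simp
    show Real.exp (-ψ 1) = 1
    rw [hψ1, neg_zero, Real.exp_zero]
  · -- positive definiteness
    intro m g l
    show (0:ℂ) ≤ ∑ i, ∑ j, l i * (starRingEnd ℂ) (l j)
      * ((Real.exp (-ψ (g i * (g j)⁻¹)) : ℝ) : ℂ)
    set w : Fin n → Fin m → H := fun k i => (T (g i)⁻¹ : H →L[ℂ] H) (ξ k) with hw_def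
    set C : ℝ := ∑ k, 2 * t k * ‖ξ k‖ ^ 2 with hC_def
    set b : Matrix (Fin m) (Fin m) ℝ :=
      Matrix.of fun i j => ∑ k, 2 * t k * Complex.re (inner ℂ (w k j) (w k i) : ℂ) with hb_def
    have hkey : ∀ i j k, ‖(T (g i * (g j)⁻¹) : H →L[ℂ] H) (ξ k) - ξ k‖ ^ 2
        = 2 * ‖ξ k‖ ^ 2 - 2 * Complex.re (inner ℂ (w k j) (w k i) : ℂ) := by
      intro i j k
      have h1 : (T (g i * (g j)⁻¹) : H →L[ℂ] H) (ξ k) = (T (g i) : H →L[ℂ] H) (w k j) := by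
        rw [hw_def, _root_.map_mul, MulMemClass.coe_mul, ContinuousLinearMap.mul_apply]
      have h2 : ξ k = (T (g i) : H →L[ℂ] H) (w k i) := by
        rw [hw_def]
        have := hTinv (g i)⁻¹ (ξ k)
        rw [inv_inv] at this
        exact this.symm
      have h3 : (inner ℂ ((T (g i * (g j)⁻¹) : H →L[ℂ] H) (ξ k)) (ξ k) : ℂ)
          = inner ℂ (w k j) (w k i) := by
        conv_lhs => rw [h1, h2, hinner]
      rw [norm_sub_sq (𝕜 := ℂ), hnorm, h3]
      simp [RCLike.re_to_complex]
      ring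
    have hψeq : ∀ i j, ψ (g i * (g j)⁻¹) = C - b i j := by
      intro i j
      rw [hψ_def, hC_def, hb_def]
      simp only [Matrix.of_apply, ← Finset.sum_sub_distrib]
      refine Finset.sum_congr rfl fun k _ => ?_
      rw [hkey i j k]
      ring
    -- positive semidefiniteness of b (as complex matrix)
    have hbPSD : (b.map Complex.ofReal).PosSemidef := by
      set v : Fin n → Fin m → H := fun k i => ((Real.sqrt (t k) : ℝ) : ℂ) • w k i with hv_def
      have hent : b.map Complex.ofReal
          = ∑ k, ((Matrix.of fun i j => (inner ℂ (v k i) (v k j) : ℂ))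
              + (Matrix.of fun i j => (inner ℂ (v k i) (v k j) : ℂ))ᵀ) := by
        ext i j
        rw [Matrix.map_apply, hb_def]
        simp only [Matrix.sum_apply, Matrix.add_apply, Matrix.transpose_apply, Matrix.of_apply]
        rw [Complex.ofReal_sum]
        refine Finset.sum_congr rfl fun k _ => ?_
        simp only [hv_def, inner_smul_left, inner_smul_right, Complex.conj_ofReal]
        have hz : (inner ℂ (w k i) (w k j) : ℂ) = (starRingEnd ℂ) (inner ℂ (w k j) (w k i) : ℂ) :=
          (inner_conj_symm _ _).symm
        have hsq : (Real.sqrt (t k) : ℂ) * (Real.sqrt (t k) : ℂ) = ((t k : ℝ) : ℂ) := by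
          rw [← Complex.ofReal_mul, Real.mul_self_sqrt (ht k).le]
        rw [hz]
        set z : ℂ := (inner ℂ (w k j) (w k i) : ℂ) with hzdef
        have hstep : ((Real.sqrt (t k) : ℂ)) * ((Real.sqrt (t k) : ℂ) * (starRingEnd ℂ) z)
              + ((Real.sqrt (t k) : ℂ)) * ((Real.sqrt (t k) : ℂ) * z)
            = ((t k : ℝ) : ℂ) * ((starRingEnd ℂ) z + z) := by
          rw [← hsq]; ring
        rw [hstep, add_comm ((starRingEnd ℂ) z) z, Complex.add_conj]
        rw [Complex.ofReal_mul, Complex.ofReal_mul]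
        push_cast
        ring
      rw [hent]
      refine Finset.sum_induction _ Matrix.PosSemidef (fun a b ha hb => ha.add hb)
        Matrix.PosSemidef.zero (fun k _ => (myGram (v k)).add (myGram (v k)).transpose)
    have hM := myExp hbPSD
    -- rewrite the goal
    have hφeq : ∀ i j, (Real.exp (-ψ (g i * (g j)⁻¹)) : ℝ)
        = Real.exp (-C) * Real.exp (b i j) := by
      intro i j
      rw [hψeq i j, neg_sub, sub_eq_neg_add, Real.exp_add]
    calc (0 : ℂ) ≤ ((Real.exp (-C) : ℝ) : ℂ)
          * ∑ i, ∑ j, l i * (starRingEnd ℂ) (l j) * ((Real.exp (b i j) : ℝ) : ℂ) := by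
          exact mul_nonneg (Complex.zero_le_real.mpr (Real.exp_pos _).le) (myQF hM l)
      _ = ∑ i, ∑ j, l i * (starRingEnd ℂ) (l j) * ((Real.exp (-ψ (g i * (g j)⁻¹)) : ℝ) : ℂ) := by
          rw [Finset.mul_sum]
          refine Finset.sum_congr rfl fun i _ => ?_
          rw [Finset.mul_sum]
          refine Finset.sum_congr rfl fun j _ => ?_
          rw [hφeq i j]
          push_cast
          ring
  · -- the neighbourhood condition
    intro g hg
    have hg' : |Real.exp (-ψ g) - 1| < 1/2 := hg
    clear hg
    rename' hg' => hg
    have h1 : Real.exp (-ψ g) ≤ 1 := Real.exp_le_one_iff.mpr (neg_nonpos.mpr (hψ0 g))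
    have h2 : (1 : ℝ) / 2 < Real.exp (-ψ g) := by
      rw [abs_sub_comm, abs_of_nonneg (by linarith)] at hg
      linarith
    have h3 : ψ g < Real.log 2 := by
      have : Real.exp (Real.log (1 / 2)) < Real.exp (-ψ g) := by
        rw [Real.exp_log (by norm_num)]; exact h2
      have h4 := Real.exp_lt_exp.mp this
      rw [one_div, Real.log_inv] at h4
      linarith
    apply hsub
    intro i
    have h5 : t i * ‖(T g : H →L[ℂ] H) (ξ i) - ξ i‖ ^ 2 ≤ ψ g := by
      have hgg : ψ g = ∑ k, t k * ‖(T g : H →L[ℂ] H) (ξ k) - ξ k‖ ^ 2 := by rw [hψ_def]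
      rw [hgg]
      exact Finset.single_le_sum
        (f := fun k => t k * ‖(T g : H →L[ℂ] H) (ξ k) - ξ k‖ ^ 2)
        (fun k _ => mul_nonneg (ht k).le (sq_nonneg _)) (Finset.mem_univ i)
    have h6 : ‖(T g : H →L[ℂ] H) (ξ i) - ξ i‖ ^ 2 < ε i ^ 2 := by
      have h7 : t i * ‖(T g : H →L[ℂ] H) (ξ i) - ξ i‖ ^ 2 < Real.log 2 := lt_of_le_of_lt h5 h3
      rw [ht_def] at h7
      have h8 : (0:ℝ) < ε i ^ 2 := pow_pos (hε i) 2
      rw [div_mul_eq_mul_div, div_lt_iff₀ h8] at h7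
      nlinarith
    nlinarith [norm_nonneg ((T g : H →L[ℂ] H) (ξ i) - ξ i), hε i]
end

section
/- Every compact subset of ℓ¹ is contained in the closed absolutely convex hull of a norm-null sequence in ℓ¹. -/
open scoped BigOperators

/-- Every compact subset of `ℓ¹` is contained in the closed absolutely convex hull of a
norm-null sequence: the closure of the set of finite sums `∑ cᵢ • u (sᵢ)` with `∑ |cᵢ| ≤ 1`. -/
theorem stmt6 (K : Set (lp (fun _ : ℕ => ℝ) 1)) (hK : IsCompact K) :
    ∃ u : ℕ → lp (fun _ : ℕ => ℝ) 1,
      Filter.Tendsto (fun n => ‖u n‖) Filter.atTop (nhds 0) ∧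
      K ⊆ closure {x | ∃ (n : ℕ) (c : Fin n → ℝ) (s : Fin n → ℕ),
        (∑ i, |c i|) ≤ 1 ∧ x = ∑ i, c i • u (s i)} := by
  classical
  -- finite nets
  have hnet : ∀ k : ℕ, ∃ t : Finset (lp (fun _ : ℕ => ℝ) 1),
      K ⊆ ⋃ y ∈ t, Metric.ball y ((1/2 : ℝ)^k) := by
    intro k
    obtain ⟨t, ht, hsub⟩ := (Metric.totallyBounded_iff.mp hK.totallyBounded) ((1/2 : ℝ)^k)
      (by positivity)
    exact ⟨ht.toFinset, by simpa using hsub⟩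
  choose T hT using hnet
  -- lists of differences with controlled norm
  set L : ℕ → List (lp (fun _ : ℕ => ℝ) 1) := fun k =>
    ((((T (k+1)) ×ˢ (T k)).toList.map (fun p => p.1 - p.2)).filter
      (fun d => decide (‖d‖ ≤ 2 * (1/2 : ℝ)^k))) with hL
  have hLnorm : ∀ k, ∀ d ∈ L k, ‖d‖ ≤ 2 * (1/2 : ℝ)^k := by
    intro k d hd
    rw [hL, List.mem_filter] at hd
    exact of_decide_eq_true hd.2
  have hLgetD : ∀ k j, ‖(L k).getD j 0‖ ≤ 2 * (1/2 : ℝ)^k := by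
    intro k j
    by_cases hj : j < (L k).length
    · rw [List.getD_eq_getElem _ _ hj]
      exact hLnorm k _ (List.getElem_mem hj)
    · rw [List.getD_eq_default _ _ (le_of_not_gt hj)]
      simp only [norm_zero]
      positivity
  set u : ℕ → lp (fun _ : ℕ => ℝ) 1 := fun n =>
    if n.unpair.1 = 0 then (4:ℝ) • ((T 0).toList.getD n.unpair.2 0)
    else ((4:ℝ) * (3/2 : ℝ)^(n.unpair.1 - 1)) • ((L (n.unpair.1 - 1)).getD n.unpair.2 0)
      with hu
  have hunpair_inj : Function.Injective Nat.unpair := by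
    intro a b h
    rw [← Nat.pair_unpair a, h, Nat.pair_unpair]
  refine ⟨u, ?_, ?_⟩
  · -- norms tend to 0
    rw [Metric.tendsto_nhds]
    intro ε hε
    rw [← Nat.cofinite_eq_atTop, Filter.eventually_cofinite]
    -- choose cutoff level
    obtain ⟨K₀, hK₀⟩ : ∃ N : ℕ, ∀ k ≥ N, 8 * (3/4 : ℝ)^k < ε := by
      have h34 : Filter.Tendsto (fun k : ℕ => 8 * (3/4 : ℝ)^k) Filter.atTop (nhds 0) := by
        have := tendsto_pow_atTop_nhds_zero_of_lt_one (by norm_num : (0:ℝ) ≤ 3/4)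
          (by norm_num : (3/4:ℝ) < 1)
        simpa using this.const_mul (8:ℝ)
      exact Filter.eventually_atTop.mp (h34.eventually (eventually_lt_nhds hε))
    set J : ℕ := max ((T 0).toList.length) ((Finset.range K₀).sup fun k => (L k).length) with hJ
    apply Set.Finite.subset
      (Set.Finite.preimage hunpair_inj.injOn ((Set.finite_Iic (K₀ + 1)).prod (Set.finite_Iio J)))
    intro n hn
    simp only [Set.mem_setOf_eq, Real.dist_eq, sub_zero, not_lt, abs_norm] at hn
    simp only [Set.mem_preimage, Set.mem_prod, Set.mem_Iic, Set.mem_Iio]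
    rcases Nat.eq_zero_or_pos n.unpair.1 with h0 | hpos
    · -- level 0
      have hj : n.unpair.2 < (T 0).toList.length := by
        by_contra hj
        have : u n = 0 := by
          rw [hu]
          simp only [h0, if_pos]
          rw [List.getD_eq_default _ _ (le_of_not_gt hj), smul_zero]
        rw [this, norm_zero] at hn
        exact absurd hn (not_le.mpr hε)
      exact ⟨by omega, lt_of_lt_of_le hj (le_max_left _ _)⟩
    · -- level k = m + 1
      obtain ⟨m, hm⟩ : ∃ m, n.unpair.1 = m + 1 := ⟨n.unpair.1 - 1, by omega⟩
      have hne : ¬ (n.unpair.1 = 0) := by omega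
      have hun : u n = ((4:ℝ) * (3/2 : ℝ)^m) • ((L m).getD n.unpair.2 0) := by
        rw [hu]
        simp only [hne, if_neg, hm, Nat.add_sub_cancel]
        norm_num
      have hbound : ‖u n‖ ≤ 8 * (3/4 : ℝ)^m := by
        rw [hun, norm_smul]
        have h1 : ‖(4:ℝ) * (3/2 : ℝ)^m‖ = 4 * (3/2 : ℝ)^m := by
          rw [Real.norm_eq_abs, abs_of_pos (by positivity)]
        rw [h1]
        calc 4 * (3/2 : ℝ)^m * ‖(L m).getD n.unpair.2 0‖
            ≤ 4 * (3/2 : ℝ)^m * (2 * (1/2 : ℝ)^m) :=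
              mul_le_mul_of_nonneg_left (hLgetD m _) (by positivity)
          _ = 8 * (3/4 : ℝ)^m := by
              rw [show (3/4 : ℝ)^m = (3/2 : ℝ)^m * (1/2 : ℝ)^m by
                rw [← mul_pow]; norm_num]
              ring
      have hmK : m < K₀ := by
        by_contra hmK
        exact absurd (lt_of_le_of_lt (le_trans hn hbound) (hK₀ m (le_of_not_gt hmK)))
          (lt_irrefl ε)
      have hj : n.unpair.2 < (L m).length := by
        by_contra hj
        have : u n = 0 := by
          rw [hun, List.getD_eq_default _ _ (le_of_not_gt hj), smul_zero]
        rw [this, norm_zero] at hn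
        exact absurd hn (not_le.mpr hε)
      refine ⟨by omega, lt_of_lt_of_le hj (le_trans ?_ (le_max_right _ _))⟩
      exact Finset.le_sup (f := fun k => (L k).length) (Finset.mem_range.mpr hmK)
  · -- K is contained in the closure
    intro x hx
    have hy : ∀ k : ℕ, ∃ y ∈ T k, ‖x - y‖ < (1/2 : ℝ)^k := by
      intro k
      have := hT k hx
      simp only [Set.mem_iUnion, Metric.mem_ball] at this
      obtain ⟨y, hyT, hyd⟩ := this
      exact ⟨y, hyT, by rwa [← dist_eq_norm]⟩
    choose y hyT hyd using hy
    have hb : ∀ n : ℕ, ‖y n - x‖ ≤ (1/2 : ℝ)^n := fun n => by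
      rw [norm_sub_rev]; exact (hyd n).le
    have hlim : Filter.Tendsto y Filter.atTop (nhds x) := by
      rw [tendsto_iff_norm_sub_tendsto_zero]
      exact squeeze_zero (fun n => norm_nonneg _) hb
        (tendsto_pow_atTop_nhds_zero_of_lt_one (by norm_num) (by norm_num))
    refine mem_closure_of_tendsto hlim (Filter.Eventually.of_forall ?_)
    intro n
    -- y n is an absolutely convex combination
    refine ⟨n + 1,
      Fin.cases (1/4 : ℝ) (fun k : Fin n => (2/3 : ℝ)^(k:ℕ) / 4),
      Fin.cases (Nat.pair 0 ((T 0).toList.idxOf (y 0)))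
        (fun k : Fin n => Nat.pair ((k:ℕ)+1) ((L k).idxOf (y ((k:ℕ)+1) - y k))), ?_, ?_⟩
    · -- coefficient bound
      rw [Fin.sum_univ_succ]
      simp only [Fin.cases_zero, Fin.cases_succ]
      have hgeom : (∑ k : Fin n, (2/3 : ℝ)^(k:ℕ)) ≤ 3 := by
        rw [Fin.sum_univ_eq_sum_range]
        rw [geom_sum_eq (by norm_num : (2/3:ℝ) ≠ 1) n]
        have h1 : (0:ℝ) ≤ (2/3 : ℝ)^n := by positivity
        have h2 : ((2/3 : ℝ)^n - 1) / (2/3 - 1) = (1 - (2/3 : ℝ)^n) * 3 := by ring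
        rw [h2]; nlinarith
      have h1 : ∀ k : Fin n, |(2/3 : ℝ)^(k:ℕ) / 4| = (2/3 : ℝ)^(k:ℕ) / 4 := fun k =>
        abs_of_pos (by positivity)
      calc |(1/4 : ℝ)| + ∑ k : Fin n, |(2/3 : ℝ)^(k:ℕ) / 4|
          = 1/4 + (∑ k : Fin n, (2/3 : ℝ)^(k:ℕ)) / 4 := by
            rw [abs_of_pos (by norm_num : (0:ℝ) < 1/4), Finset.sum_div]
            congr 1
            exact Finset.sum_congr rfl fun k _ => h1 k
        _ ≤ 1/4 + 3/4 := by linarith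
        _ = 1 := by norm_num
    · -- the sum equals y n
      rw [Fin.sum_univ_succ]
      simp only [Fin.cases_zero, Fin.cases_succ]
      have hu0 : u (Nat.pair 0 ((T 0).toList.idxOf (y 0))) = (4:ℝ) • y 0 := by
        rw [hu]
        simp only [Nat.unpair_pair, if_pos]
        congr 1
        have hmem : y 0 ∈ (T 0).toList := Finset.mem_toList.mpr (hyT 0)
        have hlt := List.idxOf_lt_length_iff.mpr hmem
        rw [List.getD_eq_getElem _ _ hlt, List.getElem_idxOf hlt]
      have huk : ∀ k : Fin n,
          u (Nat.pair ((k:ℕ)+1) ((L k).idxOf (y ((k:ℕ)+1) - y k)))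
            = ((4:ℝ) * (3/2 : ℝ)^(k:ℕ)) • (y ((k:ℕ)+1) - y k) := by
        intro k
        have hmem : y ((k:ℕ)+1) - y (k:ℕ) ∈ L (k:ℕ) := by
          rw [hL]
          refine List.mem_filter.mpr ⟨?_, ?_⟩
          · refine List.mem_map.mpr ⟨(y ((k:ℕ)+1), y (k:ℕ)), ?_, rfl⟩
            rw [Finset.mem_toList, Finset.mem_product]
            exact ⟨hyT _, hyT _⟩
          · refine decide_eq_true ?_
            have h1 := hyd ((k:ℕ)+1)
            have h2 := hyd (k:ℕ)
            have : y ((k:ℕ)+1) - y (k:ℕ) = -(x - y ((k:ℕ)+1)) + (x - y (k:ℕ)) := by abel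
            rw [this]
            calc ‖-(x - y ((k:ℕ)+1)) + (x - y (k:ℕ))‖
                ≤ ‖-(x - y ((k:ℕ)+1))‖ + ‖x - y (k:ℕ)‖ := norm_add_le _ _
              _ = ‖x - y ((k:ℕ)+1)‖ + ‖x - y (k:ℕ)‖ := by rw [norm_neg]
              _ ≤ (1/2 : ℝ)^((k:ℕ)+1) + (1/2 : ℝ)^(k:ℕ) := by linarith
              _ ≤ 2 * (1/2 : ℝ)^(k:ℕ) := by
                  rw [pow_succ]
                  have : (0:ℝ) ≤ (1/2 : ℝ)^(k:ℕ) := by positivity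
                  linarith
        rw [hu]
        simp only [Nat.unpair_pair]
        rw [if_neg (by omega), Nat.add_sub_cancel]
        congr 1
        have hlt := List.idxOf_lt_length_iff.mpr hmem
        rw [List.getD_eq_getElem _ _ hlt, List.getElem_idxOf hlt]
      rw [hu0]
      rw [Finset.sum_congr rfl (fun k _ => by rw [huk k])]
      have hsmul : ∀ k : Fin n,
          ((2/3 : ℝ)^(k:ℕ) / 4) • (((4:ℝ) * (3/2 : ℝ)^(k:ℕ)) • (y ((k:ℕ)+1) - y k))
            = y ((k:ℕ)+1) - y k := by
        intro k
        rw [smul_smul]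
        have : (2/3 : ℝ)^(k:ℕ) / 4 * (4 * (3/2 : ℝ)^(k:ℕ)) = 1 := by
          have : (2/3 : ℝ)^(k:ℕ) * (3/2 : ℝ)^(k:ℕ) = 1 := by
            rw [← mul_pow]; norm_num
          field_simp
          linarith [this]
        rw [this, one_smul]
      rw [Finset.sum_congr rfl (fun k _ => hsmul k)]
      have htel : (∑ k : Fin n, (y ((k:ℕ)+1) - y (k:ℕ))) = y n - y 0 := by
        rw [Fin.sum_univ_eq_sum_range (fun k => y (k+1) - y k)]
        exact Finset.sum_range_sub y n
      rw [htel, smul_smul]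
      norm_num
end

section
/- Let E be a Banach space and suppose that for every compact subset K ⊆ E there is a compact injective bounded operator T_K : c₀ → E with K ⊆ T_K(B_{c₀}). Then the map Ψ = ∏_K T_K^* from the dual E^* (with the topology τ_k(E) of uniform convergence on compact subsets of E) into the product ∏_K ℓ¹ is an injective continuous open group homomorphism onto its image, i.e. a topological embedding of topological groups. -/
open scoped ZeroAtInfty
open Filter Topology Metric Set

set_option maxHeartbeats 1600000

/-- If every compact subset of a Banach space `E` is covered by the image of the unit
ball of `c₀` under a compact injective operator, then the product of the adjoints is a
topological group embedding of `(E^*, τ_k(E))` into a power of `ℓ¹ = (c₀)^*`. -/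
theorem stmt7 {E : Type*} [NormedAddCommGroup E] [NormedSpace ℝ E] [CompleteSpace E]
    (T : {K : Set E // IsCompact K} → (C₀(ℕ, ℝ) →L[ℝ] E))
    (hcomp : ∀ K, IsCompactOperator (T K))
    (hinj : ∀ K, Function.Injective (T K))
    (hcover : ∀ K : {K : Set E // IsCompact K}, (K : Set E) ⊆ T K '' Metric.closedBall 0 1) :
    Function.Injective
      (fun (f : UniformConvergenceCLM (RingHom.id ℝ) ℝ {K : Set E | IsCompact K})
        (K : {K : Set E // IsCompact K}) => (f : E →L[ℝ] ℝ).comp (T K)) ∧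
    Topology.IsEmbedding
      (fun (f : UniformConvergenceCLM (RingHom.id ℝ) ℝ {K : Set E | IsCompact K})
        (K : {K : Set E // IsCompact K}) => (f : E →L[ℝ] ℝ).comp (T K)) := by
  classical
  set D := UniformConvergenceCLM (RingHom.id ℝ) ℝ {K : Set E | IsCompact K} with hD
  set Ψ : D → ∀ _ : {K : Set E // IsCompact K}, C₀(ℕ, ℝ) →L[ℝ] ℝ :=
    fun f K => (f : E →L[ℝ] ℝ).comp (T K) with hΨ
  -- injectivity
  have hinj' : Function.Injective Ψ := by
    intro f g h
    have hfg : ∀ x : E, (f : E →L[ℝ] ℝ) x = (g : E →L[ℝ] ℝ) x := by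
      intro x
      obtain ⟨y, _, hxy⟩ := hcover ⟨{x}, isCompact_singleton⟩ (Set.mem_singleton x)
      have hK := congrFun h ⟨{x}, isCompact_singleton⟩
      calc (f : E →L[ℝ] ℝ) x = ((f : E →L[ℝ] ℝ).comp (T ⟨{x}, isCompact_singleton⟩)) y := by
            exact (congrArg (f : E →L[ℝ] ℝ) hxy).symm
        _ = ((g : E →L[ℝ] ℝ).comp (T ⟨{x}, isCompact_singleton⟩)) y := DFunLike.congr_fun hK y
        _ = (g : E →L[ℝ] ℝ) x := by exact congrArg (g : E →L[ℝ] ℝ) hxy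
    exact ContinuousLinearMap.ext hfg
  -- basis of the neighborhoods of zero of the domain
  have h𝔖ne : ({K : Set E | IsCompact K}).Nonempty := ⟨∅, isCompact_empty⟩
  have h𝔖d : DirectedOn (· ⊆ ·) {K : Set E | IsCompact K} := fun A hA B hB =>
    ⟨A ∪ B, hA.union hB, Set.subset_union_left, Set.subset_union_right⟩
  have hB := UniformConvergenceCLM.hasBasis_nhds_zero_of_basis (RingHom.id ℝ) ℝ
    {K : Set E | IsCompact K} h𝔖ne h𝔖d (Metric.nhds_basis_ball (x := (0 : ℝ)))
  -- the comap of the neighborhoods of zero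
  have hcomap : Filter.comap Ψ (𝓝 0) = 𝓝 (0 : D) := by
    have hpi : (𝓝 (0 : ∀ _ : {K : Set E // IsCompact K}, C₀(ℕ, ℝ) →L[ℝ] ℝ))
        = ⨅ K : {K : Set E // IsCompact K}, Filter.comap (Function.eval K) (𝓝 0) := by
      rw [nhds_pi]; rfl
    rw [hpi, Filter.comap_iInf]
    simp_rw [Filter.comap_comap]
    apply le_antisymm
    · rw [hB.ge_iff]
      rintro ⟨S, ε⟩ ⟨hS, hε⟩
      refine Filter.mem_iInf_of_mem ⟨S, hS⟩ ?_
      refine Filter.mem_comap.2 ⟨{g : C₀(ℕ, ℝ) →L[ℝ] ℝ | ‖g‖ < ε / 2}, ?_, ?_⟩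
      · exact (NormedAddCommGroup.nhds_zero_basis_norm_lt
          (E := C₀(ℕ, ℝ) →L[ℝ] ℝ)).mem_of_mem (half_pos hε)
      intro f hf x hx
      have hf' : ‖(f : E →L[ℝ] ℝ).comp (T ⟨S, hS⟩)‖ < ε / 2 := hf
      obtain ⟨y, hy, hxy⟩ := hcover ⟨S, hS⟩ hx
      rw [Metric.mem_closedBall, dist_zero_right] at hy
      refine mem_ball_zero_iff.2 ?_
      have hx' : (f : E →L[ℝ] ℝ) x = ((f : E →L[ℝ] ℝ).comp (T ⟨S, hS⟩)) y := by
        exact (congrArg (f : E →L[ℝ] ℝ) hxy).symm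
      calc ‖(f : E →L[ℝ] ℝ) x‖ = ‖((f : E →L[ℝ] ℝ).comp (T ⟨S, hS⟩)) y‖ := by rw [hx']
        _ ≤ ‖(f : E →L[ℝ] ℝ).comp (T ⟨S, hS⟩)‖ * ‖y‖ := ContinuousLinearMap.le_opNorm _ _
        _ ≤ (ε / 2) * 1 := by
            apply mul_le_mul hf'.le hy (norm_nonneg _) (by positivity)
        _ < ε := by linarith
    · refine le_iInf fun K => ?_
      rw [((NormedAddCommGroup.nhds_zero_basis_norm_lt
        (E := C₀(ℕ, ℝ) →L[ℝ] ℝ)).comap _).ge_iff]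
      intro δ hδ
      have hScpt : IsCompact (closure ((T K) '' Metric.closedBall 0 1)) :=
        (hcomp K).isCompact_closure_image_closedBall 1
      rw [hB.mem_iff]
      refine ⟨⟨closure ((T K) '' Metric.closedBall 0 1), δ / 2⟩, ⟨hScpt, by positivity⟩, ?_⟩
      intro f hf
      show ‖(f : E →L[ℝ] ℝ).comp (T K)‖ < δ
      set g : C₀(ℕ, ℝ) →L[ℝ] ℝ := (f : E →L[ℝ] ℝ).comp (T K) with hg
      have hb : ‖g‖ ≤ δ / 2 := by
        refine ContinuousLinearMap.opNorm_le_bound _ (by positivity) fun y => ?_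
        rcases eq_or_ne y 0 with rfl | hy0
        · simp
        · have hny : 0 < ‖y‖ := norm_pos_iff.2 hy0
          set z : C₀(ℕ, ℝ) := ‖y‖⁻¹ • y with hz
          have hznorm : ‖z‖ = 1 := norm_smul_inv_norm hy0
          have hmem : T K z ∈ closure ((T K) '' Metric.closedBall 0 1) :=
            subset_closure ⟨z, by
              simp only [Metric.mem_closedBall, dist_zero_right, hznorm, le_refl], rfl⟩
          have hfz' : ‖g z‖ ≤ δ / 2 := (mem_ball_zero_iff.1 (hf _ hmem)).le
          have hyz : y = ‖y‖ • z := by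
            rw [hz, smul_smul, mul_inv_cancel₀ hny.ne', one_smul]
          calc ‖g y‖ = ‖g (‖y‖ • z)‖ := by rw [← hyz]
            _ = ‖y‖ * ‖g z‖ := by rw [map_smul, norm_smul, norm_norm]
            _ ≤ ‖y‖ * (δ / 2) := by
                exact mul_le_mul_of_nonneg_left hfz' hny.le
            _ = δ / 2 * ‖y‖ := mul_comm _ _
      linarith
  -- uniform inducing
  have hui : IsUniformInducing Ψ := by
    constructor
    have hsub : ((fun x : _ × _ => x.2 - x.1) ∘ fun x : D × D => (Ψ x.1, Ψ x.2))
        = Ψ ∘ fun x : D × D => x.2 - x.1 := by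
      funext p
      show Ψ p.2 - Ψ p.1 = Ψ (p.2 - p.1)
      funext K
      show Ψ p.2 K - Ψ p.1 K = ((p.2 - p.1 : D) : E →L[ℝ] ℝ).comp (T K)
      exact (ContinuousLinearMap.sub_comp _ _ _).symm
    rw [_root_.uniformity_eq_comap_nhds_zero, _root_.uniformity_eq_comap_nhds_zero,
      ← hcomap, Filter.comap_comap, Filter.comap_comap, hsub]
  exact ⟨hinj', IsUniformEmbedding.isEmbedding ⟨hui, hinj'⟩⟩
end

section
/- For every bounded linear operator T : c₀ → L_p(μ) with 0 < p ≤ 2 (μ a finite measure), the images of the standard unit vectors satisfy ∑ₙ ‖T(eₙ)‖_p² < ∞. -/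
open scoped ZeroAtInfty ENNReal
open MeasureTheory

/-- The `n`-th standard unit vector of `c₀`. -/
noncomputable def e (n : ℕ) : C₀(ℕ, ℝ) :=
  { toFun := fun m => if m = n then (1 : ℝ) else 0
    continuous_toFun := continuous_of_discreteTopology
    zero_at_infty' := by
      rw [Filter.cocompact_eq_cofinite]
      refine Filter.Tendsto.congr' ?_ tendsto_const_nhds
      filter_upwards [Filter.eventually_cofinite_ne n] with m hm
      simp [hm] }

lemma e_apply (n m : ℕ) : e n m = if m = n then (1:ℝ) else 0 := rfl

lemma e_sum_apply (F : Finset ℕ) (c : ℕ → ℝ) (m : ℕ) :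
    (∑ n ∈ F, c n • e n) m = ∑ n ∈ F, c n * (if m = n then (1:ℝ) else 0) := by
  classical
  induction F using Finset.induction_on with
  | empty => simp
  | insert _ _ h ih => rw [Finset.sum_insert h, Finset.sum_insert h, ZeroAtInftyContinuousMap.coe_add,
      Pi.add_apply, ih, ZeroAtInftyContinuousMap.coe_smul, Pi.smul_apply, e_apply, smul_eq_mul]

lemma L1 (F : Finset ℕ) (c : ℕ → ℝ) (hc : ∀ n, |c n| ≤ 1) :
    ‖∑ n ∈ F, c n • e n‖ ≤ 1 := by
  rw [← ZeroAtInftyContinuousMap.norm_toBCF_eq_norm]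
  refine (BoundedContinuousFunction.norm_le zero_le_one).2 fun m => ?_
  have h0 : (∑ n ∈ F, c n • e n).toBCF m = (∑ n ∈ F, c n • e n) m := rfl
  rw [h0, e_sum_apply]
  by_cases hm : m ∈ F
  · rw [Finset.sum_eq_single m (fun n _ hn => by simp [Ne.symm hn]) (fun h => absurd hm h)]
    simpa using hc m
  · rw [Finset.sum_eq_zero (fun n hn => by simp; intro h; exact absurd (h ▸ hn) hm)]
    simp

noncomputable def S (F : Finset ℕ) (a : ℕ → ℝ) (s : Finset ℕ) : ℝ :=
  ∑ n ∈ F, (if n ∈ s then (1:ℝ) else -1) * a n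

lemma Sins1 {m : ℕ} {F : Finset ℕ} (hm : m ∉ F) (a : ℕ → ℝ) {t : Finset ℕ} (ht : t ⊆ F) :
    S (insert m F) a t = S F a t - a m := by
  have hmt : m ∉ t := fun h => hm (ht h)
  rw [S, Finset.sum_insert hm, if_neg hmt, S]; ring

lemma Sins2 {m : ℕ} {F : Finset ℕ} (hm : m ∉ F) (a : ℕ → ℝ) {t : Finset ℕ} (ht : t ⊆ F) :
    S (insert m F) a (insert m t) = S F a t + a m := by
  rw [S, Finset.sum_insert hm, if_pos (Finset.mem_insert_self m t), S]
  have h : ∀ n ∈ F, (if n ∈ insert m t then (1:ℝ) else -1) * a n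
      = (if n ∈ t then (1:ℝ) else -1) * a n := by
    intro n hn
    have hiff : n ∈ insert m t ↔ n ∈ t := by
      simp only [Finset.mem_insert]
      exact ⟨fun h => h.elim (fun h' => absurd (h' ▸ hn) hm) id, Or.inr⟩
    rw [if_congr hiff rfl rfl]
  rw [Finset.sum_congr rfl h]; ring

lemma L2 (F : Finset ℕ) (a : ℕ → ℝ) :
    ∑ s ∈ F.powerset, (S F a s)^2 = 2^F.card * ∑ n ∈ F, (a n)^2 := by
  classical
  induction F using Finset.induction_on with
  | empty => simp [S]
  | @insert m F hm ih =>
    have h1 : ∑ t ∈ F.powerset, (S (insert m F) a t)^2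
        = ∑ t ∈ F.powerset, (S F a t - a m)^2 :=
      Finset.sum_congr rfl fun t ht => by rw [Sins1 hm a (Finset.mem_powerset.1 ht)]
    have h2 : ∑ t ∈ F.powerset, (S (insert m F) a (insert m t))^2
        = ∑ t ∈ F.powerset, (S F a t + a m)^2 :=
      Finset.sum_congr rfl fun t ht => by rw [Sins2 hm a (Finset.mem_powerset.1 ht)]
    have h3 : ∑ t ∈ F.powerset, ((S F a t - a m)^2 + (S F a t + a m)^2)
        = ∑ t ∈ F.powerset, (2 * (S F a t)^2 + 2 * (a m)^2) :=
      Finset.sum_congr rfl fun t _ => by ring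
    rw [Finset.sum_powerset_insert hm, h1, h2, ← Finset.sum_add_distrib, h3,
      Finset.sum_add_distrib, ← Finset.mul_sum, ih, Finset.sum_const, Finset.card_powerset,
      Finset.card_insert_of_notMem hm, Finset.sum_insert hm, nsmul_eq_mul, pow_succ]
    push_cast
    ring

lemma L3 (F : Finset ℕ) (a : ℕ → ℝ) :
    ∑ s ∈ F.powerset, (S F a s)^4 ≤ 3 * 2^F.card * (∑ n ∈ F, (a n)^2)^2 := by
  classical
  induction F using Finset.induction_on with
  | empty => simp [S]
  | @insert m F hm ih =>
    have h1 : ∑ t ∈ F.powerset, (S (insert m F) a t)^4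
        = ∑ t ∈ F.powerset, (S F a t - a m)^4 :=
      Finset.sum_congr rfl fun t ht => by rw [Sins1 hm a (Finset.mem_powerset.1 ht)]
    have h2 : ∑ t ∈ F.powerset, (S (insert m F) a (insert m t))^4
        = ∑ t ∈ F.powerset, (S F a t + a m)^4 :=
      Finset.sum_congr rfl fun t ht => by rw [Sins2 hm a (Finset.mem_powerset.1 ht)]
    have h3 : ∑ t ∈ F.powerset, ((S F a t - a m)^4 + (S F a t + a m)^4)
        = ∑ t ∈ F.powerset, (2 * (S F a t)^4 + 12 * (a m)^2 * (S F a t)^2 + 2 * (a m)^4) :=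
      Finset.sum_congr rfl fun t _ => by ring
    rw [Finset.sum_powerset_insert hm, h1, h2, ← Finset.sum_add_distrib, h3,
      Finset.card_insert_of_notMem hm, Finset.sum_insert hm]
    simp only [Finset.sum_add_distrib, ← Finset.mul_sum, Finset.sum_const,
      Finset.card_powerset, nsmul_eq_mul, L2]
    have hSig : (0:ℝ) ≤ ∑ n ∈ F, (a n)^2 := Finset.sum_nonneg fun n _ => sq_nonneg _
    have h2k : (0:ℝ) < 2^F.card := by positivity
    have hp : ((2:ℝ)^(F.card+1)) = 2 * 2^F.card := by rw [pow_succ]; ring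
    push_cast
    nlinarith [hp, sq_nonneg (a m), sq_nonneg ((a m)^2), ih,
      mul_nonneg (mul_nonneg h2k.le (sq_nonneg (a m))) hSig,
      mul_nonneg h2k.le (sq_nonneg ((a m)^2))]

lemma L4 {ι : Type*} (s : Finset ι) (X : ι → ℝ) (σ2 : ℝ) (hσ : 0 ≤ σ2)
    (h2 : ∑ i ∈ s, (X i)^2 = s.card * σ2)
    (h4 : ∑ i ∈ s, (X i)^4 ≤ 3 * s.card * σ2^2)
    {r : ℝ} (hr0 : 0 < r) :
    (s.card : ℝ) * (σ2/2)^(r/2) ≤ 12 * ∑ i ∈ s, |X i|^r := by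
  classical
  have hRpos : 0 ≤ ∑ i ∈ s, |X i|^r :=
    Finset.sum_nonneg fun i _ => Real.rpow_nonneg (abs_nonneg _) _
  rcases eq_or_lt_of_le hσ with hσ0 | hσpos
  · rw [← hσ0]
    simp [Real.zero_rpow (by positivity : r/2 ≠ 0)]
    positivity
  rcases Nat.eq_zero_or_pos s.card with hc0 | hcpos
  · rw [hc0]; simpa using (by positivity : (0:ℝ) ≤ 12 * ∑ i ∈ s, |X i|^r)
  set big := s.filter (fun i => σ2/2 ≤ (X i)^2) with hbig
  -- step 1 : sum over big of X^2 is at least card * σ2 / 2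
  have hsplit : ∑ i ∈ big, (X i)^2 + ∑ i ∈ s.filter (fun i => ¬ (σ2/2 ≤ (X i)^2)), (X i)^2
      = ∑ i ∈ s, (X i)^2 := Finset.sum_filter_add_sum_filter_not s _ _
  have hsmall : ∑ i ∈ s.filter (fun i => ¬ (σ2/2 ≤ (X i)^2)), (X i)^2 ≤ s.card * (σ2/2) := by
    calc ∑ i ∈ s.filter (fun i => ¬ (σ2/2 ≤ (X i)^2)), (X i)^2
        ≤ ∑ _i ∈ s.filter (fun i => ¬ (σ2/2 ≤ (X i)^2)), (σ2/2) :=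
          Finset.sum_le_sum fun i hi => le_of_not_ge (Finset.mem_filter.1 hi).2
      _ = (s.filter (fun i => ¬ (σ2/2 ≤ (X i)^2))).card * (σ2/2) := by
          rw [Finset.sum_const, nsmul_eq_mul]
      _ ≤ s.card * (σ2/2) := by
          have := Finset.card_filter_le s (fun i => ¬ (σ2/2 ≤ (X i)^2))
          have h2' : (0:ℝ) < σ2/2 := by linarith
          exact mul_le_mul_of_nonneg_right (by exact_mod_cast this) h2'.le
  have hbig2 : (s.card : ℝ) * σ2 / 2 ≤ ∑ i ∈ big, (X i)^2 := by
    have h := hsplit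
    rw [h2] at h
    linarith
  -- step 2 : Cauchy-Schwarz
  have hCS : (∑ i ∈ big, (X i)^2)^2 ≤ (big.card : ℝ) * (3 * s.card * σ2^2) := by
    have h := Finset.sum_mul_sq_le_sq_mul_sq big (fun _ => (1:ℝ)) (fun i => (X i)^2)
    simp only [one_pow, one_mul, Finset.sum_const, nsmul_eq_mul, mul_one] at h
    have h4' : ∑ i ∈ big, ((X i)^2)^2 ≤ 3 * s.card * σ2^2 := by
      calc ∑ i ∈ big, ((X i)^2)^2 = ∑ i ∈ big, (X i)^4 := by
            refine Finset.sum_congr rfl fun i _ => by ring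
        _ ≤ ∑ i ∈ s, (X i)^4 :=
            Finset.sum_le_sum_of_subset_of_nonneg (Finset.filter_subset _ _)
              (fun i _ _ => by positivity)
        _ ≤ 3 * s.card * σ2^2 := h4
    calc (∑ i ∈ big, (X i)^2)^2 ≤ (big.card : ℝ) * ∑ i ∈ big, ((X i)^2)^2 := h
      _ ≤ (big.card : ℝ) * (3 * s.card * σ2^2) :=
          mul_le_mul_of_nonneg_left h4' (Nat.cast_nonneg _)
  -- step 3 : card bound
  have hcard : (s.card : ℝ) ≤ 12 * big.card := by
    have hc : (0:ℝ) < s.card := by exact_mod_cast hcpos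
    have hb0 : (0:ℝ) ≤ (s.card : ℝ) * σ2 / 2 := by positivity
    have e1 : ((s.card : ℝ) * σ2 / 2)^2 ≤ (∑ i ∈ big, (X i)^2)^2 :=
      pow_le_pow_left₀ hb0 hbig2 2
    nlinarith [e1, hCS, mul_pos hc hσpos, mul_pos (mul_pos hc hσpos) hσpos]
  -- step 4 : lower bound each big term
  have hterm : ∀ i ∈ big, (σ2/2)^(r/2) ≤ |X i|^r := by
    intro i hi
    have hle : σ2/2 ≤ (X i)^2 := (Finset.mem_filter.1 hi).2
    have h1 : (σ2/2)^(r/2) ≤ ((X i)^2)^(r/2) :=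
      Real.rpow_le_rpow (by linarith) hle (by positivity)
    have h2' : ((X i)^2)^(r/2) = |X i|^r := by
      rw [← sq_abs, ← Real.rpow_natCast |X i| 2, ← Real.rpow_mul (abs_nonneg _)]
      rw [show ((2:ℕ):ℝ)*(r/2) = r by push_cast; ring]
    rwa [h2'] at h1
  have hsum : (big.card : ℝ) * (σ2/2)^(r/2) ≤ ∑ i ∈ big, |X i|^r := by
    calc (big.card : ℝ) * (σ2/2)^(r/2) = ∑ _i ∈ big, (σ2/2)^(r/2) := by
          rw [Finset.sum_const, nsmul_eq_mul]
      _ ≤ ∑ i ∈ big, |X i|^r := Finset.sum_le_sum hterm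
  have hmono : ∑ i ∈ big, |X i|^r ≤ ∑ i ∈ s, |X i|^r :=
    Finset.sum_le_sum_of_subset_of_nonneg (Finset.filter_subset _ _)
      (fun i _ _ => Real.rpow_nonneg (abs_nonneg _) _)
  have hpow : (0:ℝ) ≤ (σ2/2)^(r/2) := Real.rpow_nonneg (by linarith) _
  calc (s.card : ℝ) * (σ2/2)^(r/2) ≤ (12 * big.card) * (σ2/2)^(r/2) :=
        mul_le_mul_of_nonneg_right hcard hpow
    _ = 12 * ((big.card : ℝ) * (σ2/2)^(r/2)) := by ring
    _ ≤ 12 * ∑ i ∈ big, |X i|^r := by linarith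
    _ ≤ 12 * ∑ i ∈ s, |X i|^r := by linarith

lemma L5a {ι : Type*} (s : Finset ι) (w z : ι → ℝ≥0∞) (hw : ∑ i ∈ s, w i = 1)
    {q : ℝ} (hq0 : 0 < q) (hq1 : q ≤ 1) :
    ∑ i ∈ s, w i * z i ^ q ≤ (∑ i ∈ s, w i * z i) ^ q := by
  have hp : 1 ≤ 1/q := by rw [le_div_iff₀ hq0]; linarith
  have h := ENNReal.rpow_arith_mean_le_arith_mean_rpow s w (fun i => z i ^ q) hw hp
  simp only [← ENNReal.rpow_mul, mul_one_div_cancel hq0.ne', ENNReal.rpow_one] at h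
  have h2 := ENNReal.rpow_le_rpow h hq0.le
  rwa [← ENNReal.rpow_mul, one_div_mul_cancel hq0.ne', ENNReal.rpow_one] at h2

lemma L5 {Ω ι : Type*} [MeasurableSpace Ω] (μ : Measure Ω) (F : Finset ι) (h : ι → Ω → ℝ≥0∞)
    (hm : ∀ i, Measurable (h i)) {q : ℝ} (hq0 : 0 < q) (hq1 : q ≤ 1) :
    ∑ i ∈ F, (∫⁻ ω, h i ω ^ q ∂μ) ^ (1/q) ≤ (∫⁻ ω, (∑ i ∈ F, h i ω) ^ q ∂μ) ^ (1/q) := by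
  classical
  set A : ι → ℝ≥0∞ := fun i => (∫⁻ ω, h i ω ^ q ∂μ) ^ (1/q) with hA
  have hAle : ∀ i ∈ F, A i ≤ (∫⁻ ω, (∑ j ∈ F, h j ω) ^ q ∂μ) ^ (1/q) := by
    intro i hi
    refine ENNReal.rpow_le_rpow (lintegral_mono fun ω => ?_) (by positivity)
    exact ENNReal.rpow_le_rpow (Finset.single_le_sum (f := fun j => h j ω) (fun j _ => zero_le) hi) hq0.le
  by_cases hinf : ∃ i ∈ F, A i = ∞
  · obtain ⟨i, hi, hAi⟩ := hinf
    have : (∫⁻ ω, (∑ j ∈ F, h j ω) ^ q ∂μ) ^ (1/q) = ∞ :=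
      top_le_iff.1 (hAi ▸ hAle i hi)
    rw [this]; exact le_top
  push_neg at hinf
  by_cases hz : ∑ i ∈ F, A i = 0
  · rw [hz]; exact zero_le
  have hSgtop : ∑ i ∈ F, A i ≠ ∞ := by
    rw [ENNReal.sum_ne_top]; exact fun i hi => hinf i hi
  set Sg : ℝ≥0∞ := ∑ i ∈ F, A i with hSg
  have hw : ∑ i ∈ F, A i / Sg = 1 := by
    simp only [ENNReal.div_eq_inv_mul]
    rw [← Finset.mul_sum, ← hSg, ENNReal.inv_mul_cancel hz hSgtop]
  -- pointwise bound
  have hpt : ∀ ω, Sg ^ q * ∑ i ∈ F, (A i / Sg) * (h i ω / A i) ^ q ≤ (∑ i ∈ F, h i ω) ^ q := by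
    intro ω
    have hcc := L5a F (fun i => A i / Sg) (fun i => h i ω / A i) hw hq0 hq1
    have hmul : Sg ^ q * (∑ i ∈ F, (A i / Sg) * (h i ω / A i)) ^ q
        = (Sg * ∑ i ∈ F, (A i / Sg) * (h i ω / A i)) ^ q := by
      rw [ENNReal.mul_rpow_of_nonneg _ _ hq0.le]
    have hs : Sg * ∑ i ∈ F, (A i / Sg) * (h i ω / A i) ≤ ∑ i ∈ F, h i ω := by
      rw [Finset.mul_sum]
      refine Finset.sum_le_sum fun i _ => ?_
      rw [← mul_assoc, ENNReal.mul_div_cancel hz hSgtop]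
      exact ENNReal.mul_div_le
    calc Sg ^ q * ∑ i ∈ F, (A i / Sg) * (h i ω / A i) ^ q
        ≤ Sg ^ q * (∑ i ∈ F, (A i / Sg) * (h i ω / A i)) ^ q :=
          mul_le_mul_right hcc _
      _ = (Sg * ∑ i ∈ F, (A i / Sg) * (h i ω / A i)) ^ q := hmul
      _ ≤ (∑ i ∈ F, h i ω) ^ q := ENNReal.rpow_le_rpow hs hq0.le
  -- integral computation
  have hint : ∀ i ∈ F, ∫⁻ ω, (A i / Sg) * (h i ω / A i) ^ q ∂μ = A i / Sg := by
    intro i hi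
    rw [lintegral_const_mul _ (((hm i).div_const (A i)).pow_const q)]
    by_cases hAi0 : A i = 0
    · simp [hAi0]
    have hAitop : A i ≠ ∞ := hinf i hi
    have hAq : ∫⁻ ω, h i ω ^ q ∂μ = A i ^ q := by
      rw [hA]
      rw [← ENNReal.rpow_mul, one_div_mul_cancel hq0.ne', ENNReal.rpow_one]
    have : ∫⁻ ω, (h i ω / A i) ^ q ∂μ = 1 := by
      have hdiv : ∀ ω, (h i ω / A i) ^ q = h i ω ^ q * (A i ^ q)⁻¹ := by
        intro ω
        rw [div_eq_mul_inv, ENNReal.mul_rpow_of_nonneg _ _ hq0.le,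
          ENNReal.inv_rpow]
      simp_rw [hdiv]
      rw [lintegral_mul_const _ ((hm i).pow_const q), hAq, ENNReal.mul_inv_cancel]
      · exact fun h0 => hAi0 (by simpa [ENNReal.rpow_eq_zero_iff, hq0] using
          ENNReal.rpow_eq_zero_iff.1 h0 |>.elim (fun ⟨h1,_⟩ => h1) (fun ⟨h1,h2⟩ => absurd hq0 (by simp [h1] at h2 ⊢; linarith)))
      · exact fun htop => hAitop (by
          rcases ENNReal.rpow_eq_top_iff.1 htop with ⟨h1, h2⟩ | ⟨h1, h2⟩
          · exact absurd h2 (by linarith)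
          · exact h1)
    rw [this, mul_one]
  have hmain : Sg ^ q ≤ ∫⁻ ω, (∑ i ∈ F, h i ω) ^ q ∂μ := by
    calc Sg ^ q = Sg ^ q * ∑ i ∈ F, A i / Sg := by rw [hw, mul_one]
      _ = Sg ^ q * ∑ i ∈ F, ∫⁻ ω, (A i / Sg) * (h i ω / A i) ^ q ∂μ := by
          rw [Finset.sum_congr rfl hint]
      _ = Sg ^ q * ∫⁻ ω, ∑ i ∈ F, (A i / Sg) * (h i ω / A i) ^ q ∂μ := by
          rw [lintegral_finsetSum (f := fun i ω => A i / Sg * (h i ω / A i) ^ q) _ fun i _ =>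
            (measurable_const.mul (((hm i).div_const (A i)).pow_const q))]
      _ = ∫⁻ ω, Sg ^ q * ∑ i ∈ F, (A i / Sg) * (h i ω / A i) ^ q ∂μ := by
          rw [lintegral_const_mul (f := fun ω => ∑ i ∈ F, A i / Sg * (h i ω / A i) ^ q) _ (Finset.measurable_sum _ fun i _ =>
            (measurable_const.mul (((hm i).div_const (A i)).pow_const q)))]
      _ ≤ ∫⁻ ω, (∑ i ∈ F, h i ω) ^ q ∂μ := lintegral_mono hpt
  have := ENNReal.rpow_le_rpow hmain (by positivity : (0:ℝ) ≤ 1/q)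
  rwa [← ENNReal.rpow_mul, mul_one_div_cancel hq0.ne', ENNReal.rpow_one] at this

-- coeFn of a finset sum in Lp
lemma LpcoeFn_sum {Ω : Type*} [MeasurableSpace Ω] {μ : Measure Ω} {p : ℝ≥0∞}
    {ι : Type*} (F : Finset ι) (u : ι → Lp ℝ p μ) :
    ⇑(∑ i ∈ F, u i) =ᵐ[μ] fun ω => ∑ i ∈ F, u i ω := by
  classical
  induction F using Finset.induction_on with
  | empty => simp only [Finset.sum_empty]; exact Lp.coeFn_zero (E := ℝ) (p := p) (μ := μ)
  | @insert m F hm ih =>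
    filter_upwards [Lp.coeFn_add (u m) (∑ i ∈ F, u i), ih] with ω h1 h2
    rw [Finset.sum_insert hm, h1, Pi.add_apply, h2, Finset.sum_insert hm]

section Main
variable {Ω : Type*} [MeasurableSpace Ω] (μ : Measure Ω) [IsFiniteMeasure μ]
    (p : ℝ≥0∞) (hp0 : 0 < p) (hp2 : p ≤ 2)
    (T : C₀(ℕ, ℝ) →ₗ[ℝ] Lp ℝ p μ)
    (C : ℝ) (hC : ∀ x, ‖T x‖ ≤ C * ‖x‖)

-- step: key estimate for each sign pattern
include hp0 hC in
lemma keyest (hCnn : 0 ≤ C) (hptop : p ≠ ∞) (g : ℕ → Ω → ℝ)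
    (hfg : ∀ n, ⇑(T (e n)) =ᵐ[μ] g n)
    (F : Finset ℕ) (s : Finset ℕ) :
    ∫⁻ ω, (‖∑ n ∈ F, (if n ∈ s then (1:ℝ) else -1) * g n ω‖₊ : ℝ≥0∞) ^ p.toReal ∂μ
      ≤ ENNReal.ofReal C ^ p.toReal := by
  classical
  set c : ℕ → ℝ := fun n => if n ∈ s then (1:ℝ) else -1 with hcdef
  have hc : ∀ n, |c n| ≤ 1 := fun n => by by_cases h : n ∈ s <;> simp [hcdef, h]
  have hx : ‖∑ n ∈ F, c n • e n‖ ≤ 1 := L1 F c hc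
  have hTx : ‖T (∑ n ∈ F, c n • e n)‖ ≤ C := by
    calc ‖T (∑ n ∈ F, c n • e n)‖ ≤ C * ‖∑ n ∈ F, c n • e n‖ := hC _
      _ ≤ C * 1 := mul_le_mul_of_nonneg_left hx hCnn
      _ = C := mul_one C
  have hsn : eLpNorm (⇑(T (∑ n ∈ F, c n • e n))) p μ ≤ ENNReal.ofReal C := by
    rw [ENNReal.le_ofReal_iff_toReal_le (Lp.eLpNorm_ne_top _) hCnn]
    rw [Lp.norm_def] at hTx
    exact hTx
  have hae : ⇑(T (∑ n ∈ F, c n • e n)) =ᵐ[μ] fun ω => ∑ n ∈ F, c n * g n ω := by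
    have h1 : T (∑ n ∈ F, c n • e n) = ∑ n ∈ F, c n • T (e n) := by
      rw [map_sum]
      exact Finset.sum_congr rfl fun n _ => T.map_smul (c n) (e n)
    rw [h1]
    have h2 := LpcoeFn_sum F (fun n => c n • T (e n))
    have h3 : ∀ n ∈ F, ⇑(c n • T (e n)) =ᵐ[μ] fun ω => c n * g n ω := by
      intro n _
      filter_upwards [Lp.coeFn_smul (c n) (T (e n)), hfg n] with ω h4 h5
      rw [h4, Pi.smul_apply, h5, smul_eq_mul]
    rw [Filter.eventuallyEq_iff_exists_mem] at h2
    have h3' : ∀ᵐ ω ∂μ, ∀ n ∈ F, (c n • T (e n)) ω = c n * g n ω :=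
      (MeasureTheory.ae_ball_iff F.countable_toSet).2 h3
    filter_upwards [LpcoeFn_sum F (fun n => c n • T (e n)), h3'] with ω h6 h7
    rw [h6]
    exact Finset.sum_congr rfl fun n hn => h7 n hn
  have hsn2 : eLpNorm (fun ω => ∑ n ∈ F, c n * g n ω) p μ ≤ ENNReal.ofReal C :=
    (eLpNorm_congr_ae hae).symm.trans_le hsn
  rw [eLpNorm_eq_lintegral_rpow_enorm_toReal hp0.ne' hptop] at hsn2
  have := ENNReal.rpow_le_rpow hsn2 (ENNReal.toReal_nonneg (a := p))
  rwa [← ENNReal.rpow_mul, one_div_mul_cancel (ENNReal.toReal_pos hp0.ne' hptop).ne',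
    ENNReal.rpow_one] at this

end Main

/-- Every bounded operator `T : c₀ → L_p(μ)`, `0 < p ≤ 2`, satisfies `∑ ‖T eₙ‖² < ∞`. -/
theorem stmt10 {Ω : Type*} [MeasurableSpace Ω] (μ : Measure Ω) [IsFiniteMeasure μ]
    (p : ℝ≥0∞) (hp0 : 0 < p) (hp2 : p ≤ 2)
    (T : C₀(ℕ, ℝ) →ₗ[ℝ] Lp ℝ p μ)
    (C : ℝ) (hC : ∀ x, ‖T x‖ ≤ C * ‖x‖) :
    Summable (fun n => ‖T (e n)‖ ^ 2) := by
  classical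
  have hptop : p ≠ ∞ := (lt_of_le_of_lt hp2 (by norm_num : (2:ℝ≥0∞) < ⊤)).ne
  set r : ℝ := p.toReal with hrdef
  have hr0 : 0 < r := ENNReal.toReal_pos hp0.ne' hptop
  have hr2 : r ≤ 2 := by
    have := ENNReal.toReal_mono (by norm_num : (2:ℝ≥0∞) ≠ ∞) hp2
    simpa using this
  -- C is nonnegative
  have hCnn : 0 ≤ C := by
    have h1 := hC (e 0)
    have h2 : (0:ℝ) ≤ ‖T (e 0)‖ := by rw [Lp.norm_def]; exact ENNReal.toReal_nonneg
    have h3 : ‖e 0‖ ≤ 1 := by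
      have := L1 {0} (fun _ => 1) (fun n => by norm_num)
      simpa using this
    have h4 : (1:ℝ) ≤ ‖e 0‖ := by
      have h5 := BoundedContinuousFunction.norm_coe_le_norm (e 0).toBCF 0
      rw [ZeroAtInftyContinuousMap.norm_toBCF_eq_norm] at h5
      have h6 : (e 0).toBCF 0 = (1:ℝ) := by
        show (if (0:ℕ) = 0 then (1:ℝ) else 0) = 1
        simp
      rw [h6] at h5
      simpa using h5
    by_contra hneg
    push_neg at hneg
    nlinarith
  -- measurable representatives
  have hae : ∀ n, AEMeasurable (⇑(T (e n))) μ :=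
    fun n => (Lp.aestronglyMeasurable (T (e n))).aemeasurable
  set g : ℕ → Ω → ℝ := fun n => (hae n).mk _ with hgdef
  have hgmeas : ∀ n, Measurable (g n) := fun n => (hae n).measurable_mk
  have hfg : ∀ n, ⇑(T (e n)) =ᵐ[μ] g n := fun n => (hae n).ae_eq_mk
  set q : ℝ := r/2 with hqdef
  have hq0 : 0 < q := by positivity
  have hq1 : q ≤ 1 := by rw [hqdef]; linarith
  set Kq : ℝ≥0∞ := (ENNReal.ofReal ((2:ℝ)^q) * (12 * ENNReal.ofReal C ^ r)) ^ (1/q) with hKq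
  have hKqtop : Kq ≠ ∞ := by
    refine ENNReal.rpow_ne_top_of_nonneg (by positivity) ?_
    exact ENNReal.mul_ne_top ENNReal.ofReal_ne_top
      (ENNReal.mul_ne_top (by norm_num)
        (ENNReal.rpow_ne_top_of_nonneg hr0.le ENNReal.ofReal_ne_top))
  refine summable_of_sum_le (c := Kq.toReal) (fun n => sq_nonneg _) (fun F => ?_)
  -- measurability of the sign sums
  have hmeasS : ∀ s : Finset ℕ, Measurable (fun ω => (‖S F (fun n => g n ω) s‖₊ : ℝ≥0∞) ^ r) := by
    intro s
    have : Measurable fun ω => S F (fun n => g n ω) s :=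
      Finset.measurable_sum F fun n _ => measurable_const.mul (hgmeas n)
    exact (this.nnnorm.coe_nnreal_ennreal).pow_const r
  -- integrated sign-average bound
  have key2 : ∫⁻ ω, ∑ s ∈ F.powerset, (‖S F (fun n => g n ω) s‖₊ : ℝ≥0∞) ^ r ∂μ
      ≤ (2:ℝ≥0∞)^F.card * ENNReal.ofReal C ^ r := by
    rw [lintegral_finset_sum _ (fun s _ => hmeasS s)]
    calc ∑ s ∈ F.powerset, ∫⁻ ω, (‖S F (fun n => g n ω) s‖₊ : ℝ≥0∞) ^ r ∂μ
        ≤ ∑ _s ∈ F.powerset, ENNReal.ofReal C ^ r :=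
          Finset.sum_le_sum fun s _ => keyest μ p hp0 T C hC hCnn hptop g hfg F s
      _ = (2:ℝ≥0∞)^F.card * ENNReal.ofReal C ^ r := by
          rw [Finset.sum_const, Finset.card_powerset, nsmul_eq_mul]
          push_cast
          ring
  -- pointwise lower bound via Paley-Zygmund
  have hptw : ∀ ω, ENNReal.ofReal ((2^F.card : ℝ) * ((∑ n ∈ F, (g n ω)^2)/2)^q)
      ≤ 12 * ∑ s ∈ F.powerset, (‖S F (fun n => g n ω) s‖₊ : ℝ≥0∞) ^ r := by
    intro ω
    set a : ℕ → ℝ := fun n => g n ω with hadef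
    have hσ : (0:ℝ) ≤ ∑ n ∈ F, (a n)^2 := Finset.sum_nonneg fun n _ => sq_nonneg _
    have hcard : ((F.powerset.card : ℕ) : ℝ) = 2^F.card := by
      rw [Finset.card_powerset]; push_cast; ring
    have h2 : ∑ s ∈ F.powerset, (S F a s)^2 = F.powerset.card * ∑ n ∈ F, (a n)^2 := by
      rw [L2, hcard]
    have h4 : ∑ s ∈ F.powerset, (S F a s)^4 ≤ 3 * F.powerset.card * (∑ n ∈ F, (a n)^2)^2 := by
      rw [hcard]; exact L3 F a
    have h5 := L4 F.powerset (S F a) _ hσ h2 h4 hr0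
    rw [hcard] at h5
    have h6 := ENNReal.ofReal_le_ofReal h5
    calc ENNReal.ofReal ((2^F.card : ℝ) * ((∑ n ∈ F, (a n)^2)/2)^q)
        ≤ ENNReal.ofReal (12 * ∑ s ∈ F.powerset, |S F a s|^r) := by
          rw [hqdef]; exact h6
      _ = 12 * ∑ s ∈ F.powerset, (‖S F a s‖₊ : ℝ≥0∞) ^ r := by
          rw [ENNReal.ofReal_mul (by norm_num : (0:ℝ) ≤ 12),
            ENNReal.ofReal_sum_of_nonneg (fun s _ => Real.rpow_nonneg (abs_nonneg _) r)]
          congr 1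
          · norm_num
          refine Finset.sum_congr rfl fun s _ => ?_
          rw [← enorm_eq_nnnorm, Real.enorm_eq_ofReal_abs, ← ENNReal.ofReal_rpow_of_nonneg (abs_nonneg _) hr0.le]
  -- integrated lower bound, with the 2^card canceled
  have hmeas2 : Measurable fun ω => ENNReal.ofReal (((∑ n ∈ F, (g n ω)^2)/2)^q) := by
    have h1 : Measurable fun ω => ∑ n ∈ F, (g n ω)^2 :=
      Finset.measurable_sum F fun n _ => (hgmeas n).pow_const 2
    exact ((h1.div_const 2).pow_const q).ennreal_ofReal
  have hint1 : ∫⁻ ω, ENNReal.ofReal (((∑ n ∈ F, (g n ω)^2)/2)^q) ∂μ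
      ≤ 12 * ENNReal.ofReal C ^ r := by
    have h1 : ∫⁻ ω, ENNReal.ofReal ((2^F.card : ℝ) * ((∑ n ∈ F, (g n ω)^2)/2)^q) ∂μ
        ≤ 12 * ((2:ℝ≥0∞)^F.card * ENNReal.ofReal C ^ r) := by
      calc ∫⁻ ω, ENNReal.ofReal ((2^F.card : ℝ) * ((∑ n ∈ F, (g n ω)^2)/2)^q) ∂μ
          ≤ ∫⁻ ω, 12 * ∑ s ∈ F.powerset, (‖S F (fun n => g n ω) s‖₊ : ℝ≥0∞) ^ r ∂μ :=
            lintegral_mono hptw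
        _ = 12 * ∫⁻ ω, ∑ s ∈ F.powerset, (‖S F (fun n => g n ω) s‖₊ : ℝ≥0∞) ^ r ∂μ :=
            lintegral_const_mul 12 (Finset.measurable_sum _ fun s _ => hmeasS s)
        _ ≤ 12 * ((2:ℝ≥0∞)^F.card * ENNReal.ofReal C ^ r) := mul_le_mul_right key2 12
    have h2 : ∀ ω, ENNReal.ofReal ((2^F.card : ℝ) * ((∑ n ∈ F, (g n ω)^2)/2)^q)
        = (2:ℝ≥0∞)^F.card * ENNReal.ofReal (((∑ n ∈ F, (g n ω)^2)/2)^q) := by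
      intro ω
      rw [ENNReal.ofReal_mul (by positivity : (0:ℝ) ≤ (2:ℝ)^F.card)]
      congr 1
      rw [ENNReal.ofReal_pow (by norm_num : (0:ℝ) ≤ 2)]
      norm_num
    simp_rw [h2] at h1
    rw [lintegral_const_mul ((2:ℝ≥0∞)^F.card) hmeas2] at h1
    have h2k0 : ((2:ℝ≥0∞)^F.card) ≠ 0 := by positivity
    have h2ktop : ((2:ℝ≥0∞)^F.card) ≠ ∞ := by
      exact ENNReal.pow_ne_top (by norm_num)
    rw [show 12 * ((2:ℝ≥0∞)^F.card * ENNReal.ofReal C ^ r)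
        = (2:ℝ≥0∞)^F.card * (12 * ENNReal.ofReal C ^ r) by ring] at h1
    exact (ENNReal.mul_le_mul_iff_right h2k0 h2ktop).1 h1
  -- reverse Minkowski setup
  set h : ℕ → Ω → ℝ≥0∞ := fun n ω => (‖g n ω‖₊ : ℝ≥0∞) ^ (2:ℝ) with hhdef
  have hhmeas : ∀ n, Measurable (h n) :=
    fun n => ((hgmeas n).nnnorm.coe_nnreal_ennreal).pow_const 2
  have hsum_eq : ∀ ω, (∑ n ∈ F, h n ω) = ENNReal.ofReal (∑ n ∈ F, (g n ω)^2) := by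
    intro ω
    rw [ENNReal.ofReal_sum_of_nonneg (fun n _ => sq_nonneg _)]
    refine Finset.sum_congr rfl fun n _ => ?_
    show (‖g n ω‖₊ : ℝ≥0∞) ^ (2:ℝ) = ENNReal.ofReal (g n ω ^ 2)
    rw [← enorm_eq_nnnorm, Real.enorm_eq_ofReal_abs, ENNReal.ofReal_rpow_of_nonneg (abs_nonneg _)
      (by norm_num : (0:ℝ) ≤ 2)]
    congr 1
    rw [show ((2:ℝ)) = ((2:ℕ):ℝ) by norm_num, Real.rpow_natCast, sq_abs]
  have hRM := L5 μ F h hhmeas hq0 hq1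
  -- bound RHS of reverse Minkowski
  have hRMr : (∫⁻ ω, (∑ n ∈ F, h n ω)^q ∂μ)^(1/q) ≤ Kq := by
    rw [hKq]
    refine ENNReal.rpow_le_rpow ?_ (by positivity)
    have heq : ∀ ω, (∑ n ∈ F, h n ω)^q
        = ENNReal.ofReal ((2:ℝ)^q) * ENNReal.ofReal (((∑ n ∈ F, (g n ω)^2)/2)^q) := by
      intro ω
      rw [hsum_eq ω, ENNReal.ofReal_rpow_of_nonneg
        (Finset.sum_nonneg fun n _ => sq_nonneg _) hq0.le, ← ENNReal.ofReal_mul (by positivity)]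
      congr 1
      rw [Real.div_rpow (Finset.sum_nonneg fun n _ => sq_nonneg _) (by norm_num : (0:ℝ) ≤ 2)]
      have h2q : (2:ℝ)^q ≠ 0 := by positivity
      field_simp
    simp_rw [heq]
    rw [lintegral_const_mul _ hmeas2]
    exact mul_le_mul_right hint1 _
  -- identify LHS of reverse Minkowski
  have hterm : ∀ n, (∫⁻ ω, h n ω ^ q ∂μ)^(1/q) = (eLpNorm (⇑(T (e n))) p μ) ^ (2:ℝ) := by
    intro n
    have h1 : ∀ ω, h n ω ^ q = (‖g n ω‖₊ : ℝ≥0∞) ^ r := by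
      intro ω
      rw [hhdef, ← ENNReal.rpow_mul]
      congr 1
      rw [hqdef]; ring
    simp_rw [h1]
    have h2 : eLpNorm (⇑(T (e n))) p μ = (∫⁻ ω, (‖g n ω‖₊ : ℝ≥0∞)^r ∂μ)^(1/r) := by
      rw [eLpNorm_congr_ae (hfg n), eLpNorm_eq_lintegral_rpow_enorm_toReal hp0.ne' hptop]
      rfl
    rw [h2, ← ENNReal.rpow_mul]
    congr 1
    rw [hqdef]
    field_simp
  have hfinal : ∑ n ∈ F, (eLpNorm (⇑(T (e n))) p μ) ^ (2:ℝ) ≤ Kq := by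
    calc ∑ n ∈ F, (eLpNorm (⇑(T (e n))) p μ) ^ (2:ℝ)
        = ∑ n ∈ F, (∫⁻ ω, h n ω ^ q ∂μ)^(1/q) :=
          Finset.sum_congr rfl fun n _ => (hterm n).symm
      _ ≤ (∫⁻ ω, (∑ n ∈ F, h n ω)^q ∂μ)^(1/q) := hRM
      _ ≤ Kq := hRMr
  have hne : ∀ n ∈ F, (eLpNorm (⇑(T (e n))) p μ) ^ (2:ℝ) ≠ ∞ :=
    fun n _ => ENNReal.rpow_ne_top_of_nonneg (by norm_num) (Lp.eLpNorm_ne_top _)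
  calc ∑ n ∈ F, ‖T (e n)‖^2
      = ∑ n ∈ F, ((eLpNorm (⇑(T (e n))) p μ) ^ (2:ℝ)).toReal := by
        refine Finset.sum_congr rfl fun n _ => ?_
        rw [Lp.norm_def, ← Real.rpow_natCast _ 2, show ((2:ℕ):ℝ) = (2:ℝ) by norm_num,
          ENNReal.toReal_rpow]
    _ = (∑ n ∈ F, (eLpNorm (⇑(T (e n))) p μ) ^ (2:ℝ)).toReal := (ENNReal.toReal_sum hne).symm
    _ ≤ Kq.toReal := ENNReal.toReal_mono hKqtop hfinal
end

section
/- Let T : c₀ → L₀(μ) be a continuous linear operator (L₀ with convergence in measure) that factors as T = S₂ ∘ S₁ with S₁ : c₀ → L_r(μ) bounded linear (0 < r < 1) and S₂ : L_r → L₀ continuous linear, and suppose ∑ₙ ‖S₁(eₙ)‖_r² < ∞. Then for every δ > 0, the preimage T⁻¹(B_{L₀,δ}) is not contained in the set U = {(aₙ) ∈ c₀ : |aₙ| ≤ log(n+1) for all n}. -/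
open scoped ZeroAtInfty ENNReal
open MeasureTheory

/-- The ball of radius `δ` around `0` in `L₀(μ)` for convergence in measure. -/
def ballL0 {Ω : Type*} [MeasurableSpace Ω] (μ : Measure Ω) (δ : ℝ) :
    Set (Ω →ₘ[μ] ℝ) :=
  {g | μ {ω | δ < |g ω|} < ENNReal.ofReal δ}

lemma lp_norm_smul {Ω : Type*} [MeasurableSpace Ω] {μ : Measure Ω} {r : ℝ≥0∞}
    (t : ℝ) (f : Lp ℝ r μ) : ‖t • f‖ = |t| * ‖f‖ := by
  rw [Lp.norm_def, Lp.norm_def, eLpNorm_congr_ae (Lp.coeFn_smul _ _),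
    eLpNorm_const_smul]
  simp [ENNReal.toReal_mul, Real.norm_eq_abs]

lemma log_succ_bound (k : ℕ) : Real.log (k + 1) + 1 ≤ 3 * Real.sqrt (k + 1) := by
  have h0 : (0:ℝ) < (k:ℝ) + 1 := by positivity
  have hs : (0:ℝ) < Real.sqrt ((k:ℝ) + 1) := Real.sqrt_pos.mpr h0
  have h1 : Real.log (Real.sqrt ((k:ℝ)+1)) = Real.log ((k:ℝ)+1) / 2 :=
    Real.log_sqrt h0.le
  have h2 : Real.log (Real.sqrt ((k:ℝ)+1)) ≤ Real.sqrt ((k:ℝ)+1) - 1 :=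
    Real.log_le_sub_one_of_pos hs
  have h3 : (1:ℝ) ≤ Real.sqrt ((k:ℝ)+1) := by
    have := Real.sqrt_le_sqrt (show (1:ℝ) ≤ (k:ℝ)+1 by linarith)
    rwa [Real.sqrt_one] at this
  nlinarith

/-- If `T = S₂ ∘ S₁ : c₀ → L₀(μ)` with `S₁ : c₀ → L_r` bounded (`0 < r < 1`),
`S₂ : L_r → L₀` continuous linear, and `∑ ‖S₁ eₙ‖_r² < ∞`, then no preimage
`T⁻¹(B_{L₀,δ})` is contained in `U = {a ∈ c₀ : |aₙ| ≤ log (n+1)}`. -/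
theorem stmt11 {Ω : Type*} [MeasurableSpace Ω] (μ : Measure Ω) [IsFiniteMeasure μ]
    (r : ℝ≥0∞) (hr0 : 0 < r) (hr1 : r < 1)
    (S₁ : C₀(ℕ, ℝ) →ₗ[ℝ] Lp ℝ r μ)
    (C : ℝ) (hS₁ : ∀ x, ‖S₁ x‖ ≤ C * ‖x‖)
    (S₂ : Lp ℝ r μ →ₗ[ℝ] (Ω →ₘ[μ] ℝ))
    (hS₂ : ∀ δ > (0 : ℝ), ∃ η > (0 : ℝ), ∀ f : Lp ℝ r μ, ‖f‖ ≤ η → S₂ f ∈ ballL0 μ δ)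
    (hsum : Summable (fun n => ‖S₁ (e n)‖ ^ 2)) :
    ∀ δ > (0 : ℝ),
      ¬ ((fun x => S₂ (S₁ x)) ⁻¹' ballL0 μ δ ⊆
          {x : C₀(ℕ, ℝ) | ∀ n : ℕ, |x n| ≤ Real.log (n + 1)}) := by
  intro δ hδ hsub
  obtain ⟨η, hη, hball⟩ := hS₂ δ hδ
  -- find an index k where the unit vector image is small enough
  have key : ∃ k : ℕ, (Real.log (k + 1) + 1) * ‖S₁ (e k)‖ ≤ η := by
    by_contra h
    push_neg at h
    have hle : ∀ k : ℕ, η ^ 2 / (9 * ((k:ℝ) + 1)) ≤ ‖S₁ (e k)‖ ^ 2 := by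
      intro k
      have h3 := log_succ_bound k
      have hs : (0:ℝ) < Real.sqrt ((k:ℝ)+1) := Real.sqrt_pos.mpr (by positivity)
      have hsq : Real.sqrt ((k:ℝ)+1) ^ 2 = (k:ℝ) + 1 := Real.sq_sqrt (by positivity)
      have hk := h k
      have hlog : (0:ℝ) ≤ Real.log ((k:ℝ) + 1) := Real.log_nonneg (by linarith [Nat.cast_nonneg (α := ℝ) k])
      have hnn : (0:ℝ) ≤ ‖S₁ (e k)‖ := (by rw [Lp.norm_def]; exact ENNReal.toReal_nonneg)
      have h4 : η < 3 * Real.sqrt ((k:ℝ)+1) * ‖S₁ (e k)‖ :=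
        lt_of_lt_of_le hk (mul_le_mul_of_nonneg_right h3 hnn)
      rw [div_le_iff₀ (by positivity)]
      nlinarith [mul_self_lt_mul_self hη.le h4]
    have hs1 : Summable (fun k : ℕ => η ^ 2 / (9 * ((k:ℝ) + 1))) :=
      Summable.of_nonneg_of_le (fun k => by positivity) hle hsum
    have hs2 : Summable (fun k : ℕ => 1 / ((k:ℝ) + 1)) := by
      have := hs1.mul_left (9 / η ^ 2)
      refine this.congr fun k => ?_
      field_simp
    exact (mt (summable_nat_add_iff (f := fun n : ℕ ↦ 1 / ((n : ℝ))) 1).mp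
      Real.not_summable_one_div_natCast) (by exact_mod_cast hs2)
  obtain ⟨k, hk⟩ := key
  set t : ℝ := Real.log (k + 1) + 1 with ht
  have hlog : (0:ℝ) ≤ Real.log ((k:ℝ) + 1) := Real.log_nonneg (by linarith [Nat.cast_nonneg (α := ℝ) k])
  have htpos : 0 < t := by rw [ht]; linarith
  have hxball : S₂ (S₁ (t • e k)) ∈ ballL0 μ δ := by
    apply hball
    rw [_root_.map_smul, lp_norm_smul, abs_of_pos htpos]
    exact hk
  have hmem := hsub hxball k
  have hval : (t • e k) k = t := by
    simp [e]
  rw [hval] at hmem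
  rw [ht] at hmem
  linarith [abs_nonneg (Real.log ((k:ℝ)+1) + 1), le_abs_self (Real.log ((k:ℝ)+1) + 1)]
end

section
/- The sets U_ᾱ = {(xₙ) ∈ c₀ : |xₙ| ≤ 1/|αₙ| for all n with αₙ ≠ 0}, where ᾱ = (αₙ) ranges over sequences tending to 0, form a neighbourhood basis at 0 for the topology on c₀ of uniform convergence on norm-null sequences of ℓ¹ (under the duality ⟨x, a⟩ = ∑ xₙ aₙ). -/
open scoped ZeroAtInfty
open Filter

/-- The set `U_ᾱ` associated to a sequence `α` tending to `0`. -/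
def Ualpha (α : ℕ → ℝ) : Set C₀(ℕ, ℝ) :=
  {x | ∀ n : ℕ, α n ≠ 0 → |x n| ≤ 1 / |α n|}

/-- The basic neighbourhood of `0` for uniform convergence on the norm-null sequence
`u` of `ℓ¹`, under the pairing `⟨x, a⟩ = ∑ₙ xₙ aₙ`. -/
def Unull (u : ℕ → lp (fun _ : ℕ => ℝ) 1) : Set C₀(ℕ, ℝ) :=
  {x | ∀ k : ℕ, |∑' n : ℕ, x n * (u k : ∀ _ : ℕ, ℝ) n| ≤ 1}

lemma lp1_hasSum (a : lp (fun _ : ℕ => ℝ) 1) :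
    HasSum (fun n => |(a : ∀ _ : ℕ, ℝ) n|) ‖a‖ := by
  have := lp.hasSum_norm (p := 1) (by norm_num) a
  simpa [Real.norm_eq_abs] using this

lemma lp1_sum_le (a : lp (fun _ : ℕ => ℝ) 1) (F : Finset ℕ) :
    ∑ n ∈ F, |(a : ∀ _ : ℕ, ℝ) n| ≤ ‖a‖ :=
  sum_le_hasSum F (fun _ _ => abs_nonneg _) (lp1_hasSum a)

/-- Uniform tail bounds for a norm-null sequence in `ℓ¹`. -/
lemma tails (u : ℕ → lp (fun _ : ℕ => ℝ) 1)
    (hu : Tendsto (fun k => ‖u k‖) atTop (nhds 0)) {ε : ℝ} (hε : 0 < ε) :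
    ∃ N : ℕ, ∀ k : ℕ, ∀ F : Finset ℕ, (∀ n ∈ F, N ≤ n) →
      ∑ n ∈ F, |(u k : ∀ _ : ℕ, ℝ) n| ≤ ε := by
  obtain ⟨K, hK⟩ : ∃ K, ∀ k ≥ K, ‖u k‖ ≤ ε :=
    eventually_atTop.mp (hu.eventually (eventually_le_nhds hε))
  have hNk : ∀ k : ℕ, ∃ Nk : ℕ, ‖u k‖ - ε ≤ ∑ n ∈ Finset.range Nk, |(u k : ∀ _ : ℕ, ℝ) n| := by
    intro k
    have hps := (lp1_hasSum (u k)).tendsto_sum_nat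
    exact (hps.eventually (eventually_ge_nhds (by linarith))).exists
  choose Nk hNk using hNk
  refine ⟨(Finset.range K).sup Nk, fun k F hF => ?_⟩
  rcases le_or_gt K k with hk | hk
  · exact le_trans (lp1_sum_le (u k) F) (hK k hk)
  · set N := (Finset.range K).sup Nk with hN
    have hdisj : Disjoint F (Finset.range N) := by
      rw [Finset.disjoint_left]
      intro n hn hn'
      exact absurd (Finset.mem_range.mp hn') (not_lt.mpr (hF n hn))
    have h1 : ∑ n ∈ F, |(u k : ∀ _ : ℕ, ℝ) n| + ∑ n ∈ Finset.range N, |(u k : ∀ _ : ℕ, ℝ) n|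
        = ∑ n ∈ F ∪ Finset.range N, |(u k : ∀ _ : ℕ, ℝ) n| :=
      (Finset.sum_union hdisj).symm
    have h2 := lp1_sum_le (u k) (F ∪ Finset.range N)
    have h3 : ∑ n ∈ Finset.range (Nk k), |(u k : ∀ _ : ℕ, ℝ) n|
        ≤ ∑ n ∈ Finset.range N, |(u k : ∀ _ : ℕ, ℝ) n| := by
      apply Finset.sum_le_sum_of_subset_of_nonneg
      · exact Finset.range_subset_range.mpr (Finset.le_sup (Finset.mem_range.mpr hk))
      · exact fun _ _ _ => abs_nonneg _
    have h4 := hNk k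
    linarith

/-- The sets `U_ᾱ`, `ᾱ → 0`, form a neighbourhood basis at `0` of the topology on `c₀`
of uniform convergence on norm-null sequences of `ℓ¹`: the two families of sets are
mutually cofinal. -/
theorem stmt13 :
    (∀ α : ℕ → ℝ, Tendsto α atTop (nhds 0) →
      ∃ u : ℕ → lp (fun _ : ℕ => ℝ) 1,
        Tendsto (fun k => ‖u k‖) atTop (nhds 0) ∧ Unull u ⊆ Ualpha α) ∧
    (∀ u : ℕ → lp (fun _ : ℕ => ℝ) 1, Tendsto (fun k => ‖u k‖) atTop (nhds 0) →
      ∃ α : ℕ → ℝ, Tendsto α atTop (nhds 0) ∧ Ualpha α ⊆ Unull u) := by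
  constructor
  · -- easy direction: `u k = α k • e_k`
    intro α hα
    refine ⟨fun k => lp.single 1 k (α k), ?_, ?_⟩
    · have : (fun k => ‖lp.single (E := fun _ : ℕ => ℝ) 1 k (α k)‖) = fun k => |α k| := by
        funext k
        simpa [Real.norm_eq_abs] using
          lp.norm_single (E := fun _ : ℕ => ℝ) (p := 1) (by norm_num) α k
      rw [this]
      simpa using hα.abs
    · intro x hx n hn
      have h := hx n
      have key : (∑' m : ℕ, x m * (lp.single (E := fun _ : ℕ => ℝ) 1 n (α n) : ∀ _ : ℕ, ℝ) m)
          = x n * (lp.single (E := fun _ : ℕ => ℝ) 1 n (α n) : ∀ _ : ℕ, ℝ) n := by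
        refine tsum_eq_single n fun m hm => ?_
        rw [lp.single_apply_ne 1 n _ hm, mul_zero]
      rw [key, lp.single_apply_self, abs_mul] at h
      rw [le_div_iff₀ (abs_pos.mpr hn)]
      exact h
  · -- hard direction
    intro u hu
    have hM : ∀ j : ℕ, ∃ N : ℕ, ∀ k : ℕ, ∀ F : Finset ℕ, (∀ n ∈ F, N ≤ n) →
        ∑ n ∈ F, |(u k : ∀ _ : ℕ, ℝ) n| ≤ (1/4 : ℝ) ^ j :=
      fun j => tails u hu (by positivity)
    choose M hM using hM
    set N : ℕ → ℕ := fun j => j + (Finset.range (j+1)).sup M with hNdef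
    have hNle : ∀ j, j ≤ N j := fun j => Nat.le_add_right _ _
    have hMN : ∀ j, M j ≤ N j := fun j =>
      le_trans (Finset.le_sup (Finset.self_mem_range_succ j)) (Nat.le_add_left _ _)
    have hN : ∀ j : ℕ, ∀ k : ℕ, ∀ F : Finset ℕ, (∀ n ∈ F, N j ≤ n) →
        ∑ n ∈ F, |(u k : ∀ _ : ℕ, ℝ) n| ≤ (1/4 : ℝ) ^ j :=
      fun j k F hF => hM j k F (fun n hn => le_trans (hMN j) (hF n hn))
    set β : ℕ → ℝ := fun n => 1 + ∑ j ∈ Finset.range (n+1), if N j ≤ n then (2:ℝ)^j else 0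
      with hβdef
    have hβpos : ∀ n, 0 < β n := by
      intro n
      have : (0:ℝ) ≤ ∑ j ∈ Finset.range (n+1), if N j ≤ n then (2:ℝ)^j else 0 :=
        Finset.sum_nonneg fun j _ => by positivity
      simp only [hβdef]; linarith
    have hβge : ∀ j n, N j ≤ n → (2:ℝ)^j ≤ β n := by
      intro j n hjn
      have hmem : j ∈ Finset.range (n+1) :=
        Finset.mem_range.mpr (Nat.lt_succ_of_le (le_trans (hNle j) hjn))
      have h1 : (2:ℝ)^j ≤ ∑ i ∈ Finset.range (n+1), if N i ≤ n then (2:ℝ)^i else 0 := by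
        have := Finset.single_le_sum (f := fun i => if N i ≤ n then (2:ℝ)^i else 0)
          (fun i _ => by positivity) hmem
        simpa [if_pos hjn] using this
      simp only [hβdef]; linarith
    obtain ⟨C, hC⟩ : ∃ C, ∀ k, ‖u k‖ ≤ C := by
      obtain ⟨C, hC⟩ := hu.bddAbove_range
      exact ⟨C, fun k => hC (Set.mem_range_self k)⟩
    have hC0 : (0:ℝ) ≤ C := le_trans (norm_nonneg (u 0)) (hC 0)
    -- key finite-sum estimate
    have key : ∀ k : ℕ, ∀ F : Finset ℕ,
        ∑ n ∈ F, β n * |(u k : ∀ _ : ℕ, ℝ) n| ≤ C + 2 := by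
      intro k F
      set v : ℕ → ℝ := fun n => |(u k : ∀ _ : ℕ, ℝ) n| with hv
      set Mx : ℕ := (F.sup id) + 1 with hMx
      have hFMx : ∀ n ∈ F, n < Mx := fun n hn =>
        Nat.lt_succ_of_le (Finset.le_sup (f := id) hn)
      have hβext : ∀ n ∈ F,
          β n = 1 + ∑ j ∈ Finset.range Mx, if N j ≤ n then (2:ℝ)^j else 0 := by
        intro n hn
        have hsub : Finset.range (n+1) ⊆ Finset.range Mx :=
          Finset.range_subset_range.mpr (hFMx n hn)
        simp only [hβdef]
        congr 1
        refine Finset.sum_subset hsub fun j _ hj => ?_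
        have h1 : n < j := by
          have := Finset.mem_range.not.mp hj; omega
        have h2 := hNle j
        exact if_neg (by omega)
      calc ∑ n ∈ F, β n * v n
          = ∑ n ∈ F, (v n + ∑ j ∈ Finset.range Mx, (if N j ≤ n then (2:ℝ)^j * v n else 0)) := by
            refine Finset.sum_congr rfl fun n hn => ?_
            rw [hβext n hn, add_mul, one_mul, Finset.sum_mul]
            congr 1
            refine Finset.sum_congr rfl fun j _ => ?_
            rw [ite_mul, zero_mul]
        _ = ∑ n ∈ F, v n
            + ∑ j ∈ Finset.range Mx, ∑ n ∈ F, (if N j ≤ n then (2:ℝ)^j * v n else 0) := by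
            rw [Finset.sum_add_distrib, Finset.sum_comm]
        _ ≤ C + 2 := by
            have h1 : ∑ n ∈ F, v n ≤ C := le_trans (lp1_sum_le (u k) F) (hC k)
            have h2 : ∑ j ∈ Finset.range Mx, ∑ n ∈ F, (if N j ≤ n then (2:ℝ)^j * v n else 0)
                ≤ 2 := by
              have h3 : ∀ j ∈ Finset.range Mx,
                  ∑ n ∈ F, (if N j ≤ n then (2:ℝ)^j * v n else 0) ≤ (1/2:ℝ)^j := by
                intro j _
                rw [← Finset.sum_filter]
                have ht := hN j k (F.filter (fun n => N j ≤ n))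
                  (fun n hn => (Finset.mem_filter.mp hn).2)
                calc ∑ n ∈ F.filter (fun n => N j ≤ n), (2:ℝ)^j * v n
                    = (2:ℝ)^j * ∑ n ∈ F.filter (fun n => N j ≤ n), v n :=
                      (Finset.mul_sum _ _ _).symm
                  _ ≤ (2:ℝ)^j * (1/4:ℝ)^j :=
                      mul_le_mul_of_nonneg_left ht (by positivity)
                  _ = (1/2:ℝ)^j := by rw [← mul_pow]; norm_num
              calc ∑ j ∈ Finset.range Mx, ∑ n ∈ F, (if N j ≤ n then (2:ℝ)^j * v n else 0)
                  ≤ ∑ j ∈ Finset.range Mx, (1/2:ℝ)^j := Finset.sum_le_sum h3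
                _ ≤ 2 := sum_geometric_two_le _
            linarith
    -- the sequence α
    refine ⟨fun n => (C+3) * (β n)⁻¹, ?_, ?_⟩
    · have hβtop : Tendsto β atTop atTop := by
        rw [tendsto_atTop]
        intro b
        obtain ⟨j, hj⟩ := pow_unbounded_of_one_lt (y := (2:ℝ)) b one_lt_two
        exact eventually_atTop.mpr ⟨N j, fun n hn => le_trans hj.le (hβge j n hn)⟩
      simpa using (hβtop.inv_tendsto_atTop).const_mul (C+3)
    · intro x hx k
      have hxb : ∀ n, |x n| ≤ β n / (C+3) := by
        intro n
        have hαpos : 0 < (C+3) * (β n)⁻¹ := by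
          have := hβpos n; positivity
        have h := hx n (ne_of_gt hαpos)
        rw [abs_of_pos hαpos] at h
        rwa [show 1 / ((C+3) * (β n)⁻¹) = β n / (C+3) by
          field_simp] at h
      have hxn : ∀ n, |x n| ≤ ‖x‖ := by
        intro n
        have h := BoundedContinuousFunction.norm_coe_le_norm x.toBCF n
        rwa [ZeroAtInftyContinuousMap.norm_toBCF_eq_norm, Real.norm_eq_abs] at h
      have hsum : Summable (fun n => ‖x n * (u k : ∀ _ : ℕ, ℝ) n‖) := by
        refine Summable.of_nonneg_of_le (fun n => norm_nonneg _) (fun n => ?_)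
          (((lp1_hasSum (u k)).summable).mul_left ‖x‖)
        rw [Real.norm_eq_abs, abs_mul]
        exact mul_le_mul_of_nonneg_right (hxn n) (abs_nonneg _)
      have habs : |∑' n : ℕ, x n * (u k : ∀ _ : ℕ, ℝ) n|
          ≤ ∑' n : ℕ, ‖x n * (u k : ∀ _ : ℕ, ℝ) n‖ := by
        rw [← Real.norm_eq_abs]
        exact norm_tsum_le_tsum_norm hsum
      refine le_trans habs ?_
      apply Summable.tsum_le_of_sum_le hsum
      intro F
      calc ∑ n ∈ F, ‖x n * (u k : ∀ _ : ℕ, ℝ) n‖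
          ≤ ∑ n ∈ F, (β n * |(u k : ∀ _ : ℕ, ℝ) n|) / (C+3) := by
            refine Finset.sum_le_sum fun n _ => ?_
            rw [Real.norm_eq_abs, abs_mul, ← div_mul_eq_mul_div]
            exact mul_le_mul_of_nonneg_right (hxb n) (abs_nonneg _)
        _ = (∑ n ∈ F, β n * |(u k : ∀ _ : ℕ, ℝ) n|) / (C+3) := by
            rw [Finset.sum_div]
        _ ≤ (C + 2) / (C + 3) := by
            exact (div_le_div_iff_of_pos_right (by linarith)).mpr (key k F)
        _ ≤ 1 := by
            rw [div_le_one (by linarith)]; linarith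
end

section
/- Let G be an abelian topological group, M an invariant mean on ℓ^∞(G), and F : G → H a map into a Hilbert space. Define φ(g) = M(y ↦ exp(-‖F(gy) - F(y)‖²)). Then φ is a positive definite function on G with φ(e) = 1. -/
open scoped BigOperators ComplexOrder Nat
open RealInnerProductSpace

lemma my_gram_factor {H : Type*} [NormedAddCommGroup H] [InnerProductSpace ℝ H]
    (n : ℕ) (u : Fin n → H) :
    ∃ (d : ℕ) (x : Fin n → Fin d → ℝ), ∀ i j, ⟪u i, u j⟫ = ∑ a, x i a * x j a := by
  set K := Submodule.span ℝ (Set.range u) with hK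
  have : FiniteDimensional ℝ K := FiniteDimensional.span_of_finite ℝ (Set.finite_range u)
  let b := stdOrthonormalBasis ℝ K
  let v : Fin n → K := fun i => ⟨u i, Submodule.subset_span (Set.mem_range_self i)⟩
  refine ⟨_, fun i a => b.repr (v i) a, fun i j => ?_⟩
  have h1 : ⟪u i, u j⟫ = ⟪v i, v j⟫ := rfl
  rw [h1, ← b.repr.inner_map_map (v i) (v j)]
  rw [PiLp.inner_apply]
  simp only [RCLike.inner_apply, conj_trivial]
  exact Finset.sum_congr rfl fun _ _ => mul_comm _ _

lemma my_schur_pow : ∀ (k n d : ℕ) (x : Fin n → Fin d → ℝ) (μ : Fin n → ℂ),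
    0 ≤ ∑ i, ∑ j, (μ i * (starRingEnd ℂ) (μ j)).re * (∑ a, x i a * x j a) ^ k := by
  intro k
  induction k with
  | zero =>
    intro n d x μ
    simp only [pow_zero, mul_one]
    have h1 : ∑ i, ∑ j, (μ i * (starRingEnd ℂ) (μ j)).re
        = (∑ i, ∑ j, μ i * (starRingEnd ℂ) (μ j)).re := by
      simp [Complex.re_sum]
    have h2 : (∑ i, ∑ j, μ i * (starRingEnd ℂ) (μ j))
        = (∑ i, μ i) * (starRingEnd ℂ) (∑ j, μ j) := by
      rw [map_sum, Finset.sum_mul_sum]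
    rw [h1, h2, Complex.mul_conj, Complex.ofReal_re]
    exact Complex.normSq_nonneg _
  | succ k ih =>
    intro n d x μ
    have key : ∀ i j, (μ i * (starRingEnd ℂ) (μ j)).re * (∑ a, x i a * x j a) ^ (k + 1)
        = ∑ a, ((μ i * (x i a : ℂ)) * (starRingEnd ℂ) (μ j * (x j a : ℂ))).re
            * (∑ b, x i b * x j b) ^ k := by
      intro i j
      have : ∀ a, ((μ i * (x i a : ℂ)) * (starRingEnd ℂ) (μ j * (x j a : ℂ))).re
          = (μ i * (starRingEnd ℂ) (μ j)).re * (x i a * x j a) := by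
        intro a
        have : (μ i * (x i a : ℂ)) * (starRingEnd ℂ) (μ j * (x j a : ℂ))
            = (μ i * (starRingEnd ℂ) (μ j)) * ((x i a * x j a : ℝ) : ℂ) := by
          simp only [map_mul, Complex.conj_ofReal, Complex.ofReal_mul]; ring
        rw [this, Complex.mul_re, Complex.ofReal_re, Complex.ofReal_im, mul_zero, sub_zero]
      simp only [this]
      rw [← Finset.sum_mul]
      rw [show ∑ a, (μ i * (starRingEnd ℂ) (μ j)).re * (x i a * x j a)
          = (μ i * (starRingEnd ℂ) (μ j)).re * ∑ a, x i a * x j a from (Finset.mul_sum _ _ _).symm]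
      ring
    simp only [key]
    have swap : ∑ i : Fin n, ∑ j : Fin n, ∑ a : Fin d,
          (μ i * (x i a : ℂ) * (starRingEnd ℂ) (μ j * (x j a : ℂ))).re
            * (∑ b, x i b * x j b) ^ k
        = ∑ a : Fin d, ∑ i : Fin n, ∑ j : Fin n,
          (μ i * (x i a : ℂ) * (starRingEnd ℂ) (μ j * (x j a : ℂ))).re
            * (∑ b, x i b * x j b) ^ k := by
      rw [Finset.sum_congr rfl fun i _ => Finset.sum_comm]
      exact Finset.sum_comm
    rw [swap]
    refine Finset.sum_nonneg fun a _ => ?_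
    exact ih n d x (fun i => μ i * (x i a : ℂ))

lemma my_gauss_pd {H : Type*} [NormedAddCommGroup H] [InnerProductSpace ℝ H]
    (n : ℕ) (u : Fin n → H) (l : Fin n → ℂ) :
    0 ≤ ∑ i, ∑ j, (l i * (starRingEnd ℂ) (l j)).re * Real.exp (-‖u i - u j‖ ^ 2) := by
  obtain ⟨d, x, hx⟩ := my_gram_factor n u
  set μ : Fin n → ℂ := fun i => l i * (Real.exp (-‖u i‖ ^ 2) : ℝ) with hμ
  set c : Fin n → Fin n → ℝ := fun i j => ∑ a, x i a * x j a with hc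
  have hterm : ∀ i j, (l i * (starRingEnd ℂ) (l j)).re * Real.exp (-‖u i - u j‖ ^ 2)
      = (μ i * (starRingEnd ℂ) (μ j)).re * Real.exp (2 * c i j) := by
    intro i j
    have hexp : Real.exp (-‖u i - u j‖ ^ 2)
        = Real.exp (-‖u i‖ ^ 2) * (Real.exp (-‖u j‖ ^ 2) * Real.exp (2 * c i j)) := by
      rw [← Real.exp_add, ← Real.exp_add]
      congr 1
      rw [show c i j = ⟪u i, u j⟫ from (hx i j).symm, norm_sub_sq_real]
      ring
    have hre : (μ i * (starRingEnd ℂ) (μ j)).re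
        = (l i * (starRingEnd ℂ) (l j)).re * (Real.exp (-‖u i‖ ^ 2) * Real.exp (-‖u j‖ ^ 2)) := by
      have : μ i * (starRingEnd ℂ) (μ j)
          = (l i * (starRingEnd ℂ) (l j)) *
            ((Real.exp (-‖u i‖ ^ 2) * Real.exp (-‖u j‖ ^ 2) : ℝ) : ℂ) := by
        simp only [hμ, map_mul, Complex.conj_ofReal, Complex.ofReal_mul]; ring
      rw [this, Complex.mul_re, Complex.ofReal_re, Complex.ofReal_im, mul_zero, sub_zero]
    rw [hre, hexp]; ring
  simp only [hterm]
  -- flatten double sum into a sum over pairs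
  rw [← Finset.sum_product', Finset.univ_product_univ]
  have hexp_tsum : ∀ p : Fin n × Fin n,
      (μ p.1 * (starRingEnd ℂ) (μ p.2)).re * Real.exp (2 * c p.1 p.2)
      = ∑' k : ℕ, (μ p.1 * (starRingEnd ℂ) (μ p.2)).re * ((2 * c p.1 p.2) ^ k / k !) := by
    intro p
    rw [tsum_mul_left]
    congr 1
    rw [Real.exp_eq_exp_ℝ, NormedSpace.exp_eq_tsum_div]
  simp only [hexp_tsum]
  have hsummable : ∀ p : Fin n × Fin n, p ∈ (Finset.univ : Finset (Fin n × Fin n)) →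
      Summable (fun k : ℕ => (μ p.1 * (starRingEnd ℂ) (μ p.2)).re * ((2 * c p.1 p.2) ^ k / k !)) :=
    fun p _ => (Real.summable_pow_div_factorial (2 * c p.1 p.2)).mul_left _
  rw [← Summable.tsum_finsetSum hsummable]
  refine tsum_nonneg fun k => ?_
  have : ∑ p : Fin n × Fin n, (μ p.1 * (starRingEnd ℂ) (μ p.2)).re * ((2 * c p.1 p.2) ^ k / k !)
      = (2 ^ k / k !) * ∑ i, ∑ j, (μ i * (starRingEnd ℂ) (μ j)).re * (c i j) ^ k := by
    rw [Fintype.sum_prod_type]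
    simp only [Finset.mul_sum]
    refine Finset.sum_congr rfl fun i _ => Finset.sum_congr rfl fun j _ => ?_
    rw [mul_pow]
    ring
  rw [this]
  have h2 : (0:ℝ) ≤ 2 ^ k / k ! := by positivity
  exact mul_nonneg h2 (my_schur_pow k n d x μ)

/-- `M` is an invariant mean on `ℓ^∞(G)` (a positive, normalized, translation invariant
linear functional on bounded functions), `F : G → H` a map into a Hilbert space.  Then
`φ(g) = M(y ↦ exp (-‖F (g y) - F y‖²))` is positive definite with `φ(1) = 1`. -/
theorem stmt15 {G : Type*} [CommGroup G] [TopologicalSpace G] [IsTopologicalGroup G]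
    {H : Type*} [NormedAddCommGroup H] [InnerProductSpace ℝ H] [CompleteSpace H]
    (M : (G → ℝ) →ₗ[ℝ] ℝ)
    (hpos : ∀ f : G → ℝ, (∀ y, 0 ≤ f y) → (∃ C, ∀ y, f y ≤ C) → 0 ≤ M f)
    (hone : M (fun _ => 1) = 1)
    (hinv : ∀ (x : G) (f : G → ℝ), M (fun y => f (x * y)) = M f)
    (F : G → H) :
    (M (fun y => Real.exp (-‖F ((1 : G) * y) - F y‖ ^ 2)) = 1) ∧
    ∀ (n : ℕ) (g : Fin n → G) (l : Fin n → ℂ),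
      0 ≤ ∑ i, ∑ j, l i * (starRingEnd ℂ) (l j) *
        ((M (fun y => Real.exp (-‖F (g i * (g j)⁻¹ * y) - F y‖ ^ 2)) : ℝ) : ℂ) := by
  constructor
  · have : (fun y : G => Real.exp (-‖F ((1 : G) * y) - F y‖ ^ 2)) = fun _ => (1 : ℝ) := by
      funext y; simp
    rw [this, hone]
  · intro n g l
    -- translation invariance: rewrite the mean
    have hK : ∀ i j : Fin n, M (fun y => Real.exp (-‖F (g i * (g j)⁻¹ * y) - F y‖ ^ 2))
        = M (fun y => Real.exp (-‖F (g i * y) - F (g j * y)‖ ^ 2)) := by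
      intro i j
      rw [← hinv (g j) (fun y => Real.exp (-‖F (g i * (g j)⁻¹ * y) - F y‖ ^ 2))]
      congr 1
      funext y
      have : g i * (g j)⁻¹ * (g j * y) = g i * y := by group
      rw [this]
    simp only [hK]
    set f : Fin n → Fin n → G → ℝ :=
      fun i j y => Real.exp (-‖F (g i * y) - F (g j * y)‖ ^ 2) with hf
    set r : Fin n → Fin n → ℝ := fun i j => (l i * (starRingEnd ℂ) (l j)).re with hr
    -- the complex sum in terms of re and im
    have hre : (∑ i, ∑ j, l i * (starRingEnd ℂ) (l j) * ((M (f i j) : ℝ) : ℂ)).re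
        = ∑ i, ∑ j, r i j * M (f i j) := by
      simp [hr, Complex.mul_re]
    have hsymm : ∀ i j, f i j = f j i := by
      intro i j; funext y; rw [hf]; simp only; rw [norm_sub_rev]
    have him : (∑ i, ∑ j, l i * (starRingEnd ℂ) (l j) * ((M (f i j) : ℝ) : ℂ)).im = 0 := by
      have h1 : (∑ i, ∑ j, l i * (starRingEnd ℂ) (l j) * ((M (f i j) : ℝ) : ℂ)).im
          = ∑ i, ∑ j, (l i * (starRingEnd ℂ) (l j)).im * M (f i j) := by
        simp [Complex.mul_im]
      rw [h1]
      have h2 : ∑ i, ∑ j, (l i * (starRingEnd ℂ) (l j)).im * M (f i j)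
          = ∑ j, ∑ i, (l i * (starRingEnd ℂ) (l j)).im * M (f i j) := Finset.sum_comm
      have h3 : ∀ i j : Fin n, (l j * (starRingEnd ℂ) (l i)).im * M (f j i)
          = -((l i * (starRingEnd ℂ) (l j)).im * M (f i j)) := by
        intro i j
        have h4 : l j * (starRingEnd ℂ) (l i) = (starRingEnd ℂ) (l i * (starRingEnd ℂ) (l j)) := by
          rw [map_mul, Complex.conj_conj, mul_comm]
        rw [h4, Complex.conj_im, hsymm j i]
        ring
      have h5 : ∑ i, ∑ j, (l i * (starRingEnd ℂ) (l j)).im * M (f i j)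
          = -∑ i, ∑ j, (l i * (starRingEnd ℂ) (l j)).im * M (f i j) := by
        calc ∑ i, ∑ j, (l i * (starRingEnd ℂ) (l j)).im * M (f i j)
            = ∑ i, ∑ j, (l j * (starRingEnd ℂ) (l i)).im * M (f j i) := Finset.sum_comm
          _ = ∑ i, ∑ j, -((l i * (starRingEnd ℂ) (l j)).im * M (f i j)) := by
              refine Finset.sum_congr rfl fun i _ => Finset.sum_congr rfl fun j _ => h3 i j
          _ = -∑ i, ∑ j, (l i * (starRingEnd ℂ) (l j)).im * M (f i j) := by
              simp [Finset.sum_neg_distrib]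
      linarith
    -- positivity of the real part via hpos
    have hmain : 0 ≤ ∑ i, ∑ j, r i j * M (f i j) := by
      have hlin : ∑ i, ∑ j, r i j * M (f i j)
          = M (fun y => ∑ i, ∑ j, r i j * f i j y) := by
        have hfun : (fun y => ∑ i, ∑ j, r i j * f i j y) = ∑ i, ∑ j, r i j • f i j := by
          funext y
          simp [Finset.sum_apply, Pi.smul_apply, smul_eq_mul]
        rw [hfun, map_sum]
        refine Finset.sum_congr rfl fun i _ => ?_
        rw [map_sum]
        refine Finset.sum_congr rfl fun j _ => ?_
        rw [map_smul, smul_eq_mul]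
      rw [hlin]
      refine hpos _ (fun y => ?_) ?_
      · exact my_gauss_pd n (fun i => F (g i * y)) l
      · refine ⟨∑ i, ∑ j, |r i j|, fun y => ?_⟩
        refine Finset.sum_le_sum fun i _ => Finset.sum_le_sum fun j _ => ?_
        have he0 : 0 < Real.exp (-‖F (g i * y) - F (g j * y)‖ ^ 2) := Real.exp_pos _
        have he1 : Real.exp (-‖F (g i * y) - F (g j * y)‖ ^ 2) ≤ 1 := by
          rw [Real.exp_le_one_iff]
          simp [sq_nonneg]
        calc r i j * f i j y ≤ |r i j| * f i j y := by
              exact mul_le_mul_of_nonneg_right (le_abs_self _) he0.le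
          _ ≤ |r i j| * 1 := mul_le_mul_of_nonneg_left he1 (abs_nonneg _)
          _ = |r i j| := mul_one _
    rw [Complex.le_def]
    constructor
    · rw [Complex.zero_re, hre]; exact hmain
    · rw [Complex.zero_im, him]
end

section
/- The Gaussian kernel K(u,v) = exp(-‖u - v‖²) on a real inner product space H is a positive definite kernel: for all u₁,…,uₙ ∈ H and λ₁,…,λₙ ∈ ℂ, ∑_{i,j} λᵢ \bar{λⱼ} exp(-‖uᵢ - uⱼ‖²) ≥ 0. -/
open scoped BigOperators ComplexOrder

section Aux

variable {n : ℕ}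

/-- Real positive-definite kernel predicate on `Fin n`. -/
def PDk (n : ℕ) (K : Fin n → Fin n → ℝ) : Prop :=
  ∀ c : Fin n → ℝ, 0 ≤ ∑ i, ∑ j, c i * c j * K i j

lemma PDk_inner {H : Type*} [NormedAddCommGroup H] [InnerProductSpace ℝ H]
    (u : Fin n → H) : PDk n (fun i j => inner ℝ (u i) (u j)) := by
  intro c
  show 0 ≤ ∑ i, ∑ j, c i * c j * (inner ℝ (u i) (u j) : ℝ)
  have e : (inner ℝ (∑ i, c i • u i) (∑ j, c j • u j) : ℝ) =
      ∑ i, ∑ j, c i * c j * inner ℝ (u i) (u j) := by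
    rw [sum_inner]
    refine Finset.sum_congr rfl fun i _ => ?_
    rw [inner_sum]
    refine Finset.sum_congr rfl fun j _ => ?_
    rw [real_inner_smul_left, real_inner_smul_right]; ring
  rw [← e]
  exact real_inner_self_nonneg

lemma PDk_posSemidef {K : Fin n → Fin n → ℝ} (h : PDk n K)
    (hsym : ∀ i j, K i j = K j i) : (Matrix.of K).PosSemidef := by
  refine Matrix.PosSemidef.of_dotProduct_mulVec_nonneg ?_ ?_
  · ext i j
    simp only [Matrix.conjTranspose_apply, Matrix.of_apply, star_trivial]
    exact hsym j i
  · intro x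
    have h1 := h (fun i => x i)
    have e : dotProduct (star x) ((Matrix.of K).mulVec x) =
        ∑ i, ∑ j, x i * x j * K i j := by
      simp only [dotProduct, Matrix.mulVec, Matrix.of_apply, Pi.star_apply,
        star_trivial, Finset.mul_sum]
      exact Finset.sum_congr rfl fun i _ => Finset.sum_congr rfl fun j _ => by ring
    rw [e]
    exact h1

lemma PDk_mul {K K' : Fin n → Fin n → ℝ} (h : PDk n K) (h' : PDk n K')
    (hsym' : ∀ i j, K' i j = K' j i) :
    PDk n (fun i j => K i j * K' i j) := by
  obtain ⟨B, hB⟩ : ∃ B : Matrix (Fin n) (Fin n) ℝ, Matrix.of K' = B.conjTranspose * B := by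
    have hA := PDk_posSemidef h' hsym'
    open scoped MatrixOrder in
    exact ⟨CFC.sqrt (Matrix.of K'), by
      have h0 : (0 : Matrix (Fin n) (Fin n) ℝ) ≤ Matrix.of K' := hA.nonneg
      rw [← Matrix.star_eq_conjTranspose, (CFC.sqrt_nonneg (Matrix.of K')).isSelfAdjoint.star_eq]
      exact (CFC.sqrt_mul_sqrt_self (Matrix.of K') h0).symm⟩
  intro c
  have hK' : ∀ i j, K' i j = ∑ r, B r i * B r j := by
    intro i j
    have e2 : (Matrix.of K') i j = (B.conjTranspose * B) i j := by rw [hB]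
    simpa [Matrix.mul_apply, Matrix.conjTranspose_apply] using e2
  show 0 ≤ ∑ i, ∑ j, c i * c j * (K i j * K' i j)
  have e : ∑ i, ∑ j, c i * c j * (K i j * K' i j) =
      ∑ r, ∑ i, ∑ j, (c i * B r i) * (c j * B r j) * K i j := by
    calc ∑ i, ∑ j, c i * c j * (K i j * K' i j)
        = ∑ i, ∑ j, ∑ r, (c i * B r i) * (c j * B r j) * K i j := by
          refine Finset.sum_congr rfl fun i _ => Finset.sum_congr rfl fun j _ => ?_
          rw [hK', Finset.mul_sum, Finset.mul_sum]
          refine Finset.sum_congr rfl fun r _ => by ring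
      _ = ∑ i, ∑ r, ∑ j, (c i * B r i) * (c j * B r j) * K i j :=
          Finset.sum_congr rfl fun i _ => Finset.sum_comm
      _ = ∑ r, ∑ i, ∑ j, (c i * B r i) * (c j * B r j) * K i j :=
          Finset.sum_comm
  rw [e]
  exact Finset.sum_nonneg fun r _ => h (fun i => c i * B r i)

lemma PDk_one : PDk n (fun _ _ => 1) := by
  intro c
  show 0 ≤ ∑ i, ∑ j, c i * c j * (1:ℝ)
  have e : ∑ i, ∑ j, c i * c j * 1 = (∑ i, c i) ^ 2 := by
    rw [sq, Finset.sum_mul_sum]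
    refine Finset.sum_congr rfl fun i _ => Finset.sum_congr rfl fun j _ => by ring
  rw [e]
  positivity

lemma PDk_pow {K : Fin n → Fin n → ℝ} (h : PDk n K)
    (hsym : ∀ i j, K i j = K j i) (k : ℕ) :
    PDk n (fun i j => K i j ^ k) := by
  induction k with
  | zero => simpa using PDk_one
  | succ m ih =>
    have := PDk_mul ih h hsym
    simpa [pow_succ] using this

lemma PDk_exp {K : Fin n → Fin n → ℝ} (h : PDk n K)
    (hsym : ∀ i j, K i j = K j i) :
    PDk n (fun i j => Real.exp (K i j)) := by
  intro c
  show 0 ≤ ∑ i, ∑ j, c i * c j * Real.exp (K i j)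
  have hexp : ∀ x : ℝ, Real.exp x = ∑' k : ℕ, x ^ k / (Nat.factorial k) := by
    intro x
    rw [Real.exp_eq_exp_ℝ, NormedSpace.exp_eq_tsum_div]
  have hsumm : ∀ i j : Fin n,
      Summable (fun k : ℕ => c i * c j * (K i j ^ k / (Nat.factorial k))) :=
    fun i j => (Real.summable_pow_div_factorial (K i j)).mul_left _
  calc (0 : ℝ)
      ≤ ∑' k : ℕ, ∑ i, ∑ j, c i * c j * (K i j ^ k / (Nat.factorial k)) := by
        apply tsum_nonneg
        intro k
        have hp := PDk_pow h hsym k c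
        have e : ∑ i, ∑ j, c i * c j * (K i j ^ k / (Nat.factorial k)) =
            (∑ i, ∑ j, c i * c j * K i j ^ k) / (Nat.factorial k) := by
          rw [Finset.sum_div]
          refine Finset.sum_congr rfl fun i _ => ?_
          rw [Finset.sum_div]
          refine Finset.sum_congr rfl fun j _ => by ring
        rw [e]
        positivity
    _ = ∑ i, ∑ j, c i * c j * Real.exp (K i j) := by
        rw [Summable.tsum_finsetSum (fun i _ => summable_sum (fun j _ => hsumm i j))]
        refine Finset.sum_congr rfl fun i _ => ?_
        rw [Summable.tsum_finsetSum (fun j _ => hsumm i j)]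
        refine Finset.sum_congr rfl fun j _ => ?_
        rw [hexp, ← tsum_mul_left]

lemma PDk_scale {K : Fin n → Fin n → ℝ} (h : PDk n K) (g : Fin n → ℝ) :
    PDk n (fun i j => g i * K i j * g j) := by
  intro c
  show 0 ≤ ∑ i, ∑ j, c i * c j * (g i * K i j * g j)
  have h1 := h (fun i => c i * g i)
  have e : ∑ i, ∑ j, (c i * g i) * (c j * g j) * K i j =
      ∑ i, ∑ j, c i * c j * (g i * K i j * g j) :=
    Finset.sum_congr rfl fun i _ => Finset.sum_congr rfl fun j _ => by ring
  rw [e] at h1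
  exact h1

lemma PDk_gauss {H : Type*} [NormedAddCommGroup H] [InnerProductSpace ℝ H]
    (u : Fin n → H) : PDk n (fun i j => Real.exp (-‖u i - u j‖ ^ 2)) := by
  have key : ∀ i j, Real.exp (-‖u i - u j‖ ^ 2) =
      Real.exp (-‖u i‖ ^ 2) * Real.exp (2 * inner ℝ (u i) (u j)) *
        Real.exp (-‖u j‖ ^ 2) := by
    intro i j
    rw [← Real.exp_add, ← Real.exp_add]
    congr 1
    have hns := @norm_sub_sq_real H _ _ (u i) (u j)
    rw [hns]
    ring
  have h1 : PDk n (fun i j => (2 : ℝ) * inner ℝ (u i) (u j)) := by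
    intro c
    show 0 ≤ ∑ i, ∑ j, c i * c j * ((2:ℝ) * inner ℝ (u i) (u j))
    have h2 := PDk_inner u (fun i => Real.sqrt 2 * c i)
    have hs2 : Real.sqrt 2 * Real.sqrt 2 = 2 := Real.mul_self_sqrt (by norm_num)
    refine le_of_le_of_eq h2 ?_
    refine Finset.sum_congr rfl fun i _ => Finset.sum_congr rfl fun j _ => ?_
    show (Real.sqrt 2 * c i) * (Real.sqrt 2 * c j) * (inner ℝ (u i) (u j) : ℝ) =
        c i * c j * ((2:ℝ) * inner ℝ (u i) (u j))
    linear_combination (c i * c j * (inner ℝ (u i) (u j) : ℝ)) * hs2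
  have h1sym : ∀ i j, (2:ℝ) * inner ℝ (u i) (u j) = 2 * inner ℝ (u j) (u i) := by
    intro i j; rw [real_inner_comm]
  have h2 := PDk_scale (PDk_exp h1 h1sym) (fun i => Real.exp (-‖u i‖ ^ 2))
  intro c
  have h3 := h2 c
  show 0 ≤ ∑ i, ∑ j, c i * c j * Real.exp (-‖u i - u j‖ ^ 2)
  refine le_of_le_of_eq h3 ?_
  refine Finset.sum_congr rfl fun i _ => Finset.sum_congr rfl fun j _ => ?_
  show c i * c j * (Real.exp (-‖u i‖ ^ 2) *
      ((fun i j => Real.exp ((2:ℝ) * inner ℝ (u i) (u j))) i j) * Real.exp (-‖u j‖ ^ 2)) =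
      c i * c j * Real.exp (-‖u i - u j‖ ^ 2)
  rw [key]

end Aux

theorem stmt16 {H : Type*} [NormedAddCommGroup H] [InnerProductSpace ℝ H]
    (n : ℕ) (u : Fin n → H) (l : Fin n → ℂ) :
    0 ≤ ∑ i, ∑ j, l i * (starRingEnd ℂ) (l j) * (Real.exp (-‖u i - u j‖ ^ 2) : ℂ) := by
  have hPD' := PDk_gauss u
  have hPD : ∀ c : Fin n → ℝ,
      0 ≤ ∑ i, ∑ j, c i * c j * Real.exp (-‖u i - u j‖ ^ 2) := fun c => hPD' c
  have hsymm : ∀ i j : Fin n,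
      Real.exp (-‖u i - u j‖ ^ 2) = Real.exp (-‖u j - u i‖ ^ 2) := by
    intro i j
    rw [norm_sub_rev]
  rw [Complex.le_def]
  constructor
  · -- real part
    have hre : (∑ i, ∑ j, l i * (starRingEnd ℂ) (l j) * (Real.exp (-‖u i - u j‖ ^ 2) : ℂ)).re =
        ∑ i, ∑ j, ((l i).re * (l j).re + (l i).im * (l j).im) * Real.exp (-‖u i - u j‖ ^ 2) := by
      rw [Complex.re_sum]
      refine Finset.sum_congr rfl fun i _ => ?_
      rw [Complex.re_sum]
      refine Finset.sum_congr rfl fun j _ => ?_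
      simp only [Complex.mul_re, Complex.mul_im, Complex.conj_re, Complex.conj_im,
        Complex.ofReal_re, Complex.ofReal_im]
      ring
    simp only [Complex.zero_re]
    rw [hre]
    have ha := hPD (fun i => (l i).re)
    have hb := hPD (fun i => (l i).im)
    have e : ∑ i, ∑ j, ((l i).re * (l j).re + (l i).im * (l j).im) * Real.exp (-‖u i - u j‖ ^ 2) =
        (∑ i, ∑ j, (l i).re * (l j).re * Real.exp (-‖u i - u j‖ ^ 2)) +
        (∑ i, ∑ j, (l i).im * (l j).im * Real.exp (-‖u i - u j‖ ^ 2)) := by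
      rw [← Finset.sum_add_distrib]
      refine Finset.sum_congr rfl fun i _ => ?_
      rw [← Finset.sum_add_distrib]
      refine Finset.sum_congr rfl fun j _ => by ring
    rw [e]
    exact add_nonneg ha hb
  · -- imaginary part
    have him : (∑ i, ∑ j, l i * (starRingEnd ℂ) (l j) * (Real.exp (-‖u i - u j‖ ^ 2) : ℂ)).im =
        ∑ i, ∑ j, ((l i).im * (l j).re - (l i).re * (l j).im) * Real.exp (-‖u i - u j‖ ^ 2) := by
      rw [Complex.im_sum]
      refine Finset.sum_congr rfl fun i _ => ?_
      rw [Complex.im_sum]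
      refine Finset.sum_congr rfl fun j _ => ?_
      simp only [Complex.mul_re, Complex.mul_im, Complex.conj_re, Complex.conj_im,
        Complex.ofReal_re, Complex.ofReal_im]
      ring
    simp only [Complex.zero_im]
    rw [him]
    have swap : ∑ i, ∑ j, ((l i).im * (l j).re - (l i).re * (l j).im) * Real.exp (-‖u i - u j‖ ^ 2) =
        -∑ i, ∑ j, ((l i).im * (l j).re - (l i).re * (l j).im) * Real.exp (-‖u i - u j‖ ^ 2) := by
      conv_lhs => rw [Finset.sum_comm]
      rw [← Finset.sum_neg_distrib]
      refine Finset.sum_congr rfl fun j _ => ?_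
      rw [← Finset.sum_neg_distrib]
      refine Finset.sum_congr rfl fun i _ => ?_
      rw [hsymm j i]
      ring
    linarith [swap]
end

section
/- The additive topological group of a Hilbert space H is unitarily representable: there is a topological group embedding of (H, +) into the unitary group of some Hilbert space with the strong operator topology. -/
set_option linter.unusedSectionVars false

open Finset RCLike Nat

variable {H : Type} [NormedAddCommGroup H] [InnerProductSpace ℝ H]

local notation "⟪" x ", " y "⟫" => @inner ℝ _ _ x y
local notation "conj'" => starRingEnd ℂ

/-- Positivity of the quadratic form with kernel `⟪a,b⟫^n`. -/
lemma pow_inner_posdef (s : Finset H) (d : H → ℝ) (n : ℕ) :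
    0 ≤ ∑ a ∈ s, ∑ b ∈ s, d a * d b * ⟪a, b⟫ ^ n := by
  classical
  set W := Submodule.span ℝ (s : Set H) with hW
  haveI : FiniteDimensional ℝ W := FiniteDimensional.span_of_finite ℝ s.finite_toSet
  set m := Module.finrank ℝ W with hm
  let e : OrthonormalBasis (Fin m) ℝ W := stdOrthonormalBasis ℝ W
  set f : H → Fin m → ℝ := fun a k => ⟪a, (e k : H)⟫ with hf
  have key : ∀ a ∈ s, ∀ b ∈ s, ⟪a, b⟫ = ∑ k, f a k * f b k := by
    intro a ha b hb
    have haW : a ∈ W := Submodule.subset_span ha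
    have hbW : b ∈ W := Submodule.subset_span hb
    have h0 := e.sum_inner_mul_inner (⟨a, haW⟩ : W) (⟨b, hbW⟩ : W)
    rw [show (⟪a, b⟫ : ℝ) = (inner ℝ (⟨a, haW⟩ : W) (⟨b, hbW⟩ : W) : ℝ) from rfl, ← h0]
    refine Finset.sum_congr rfl fun k _ => ?_
    have h1 : (inner ℝ (⟨a, haW⟩ : W) (e k) : ℝ) = ⟪a, (e k : H)⟫ := rfl
    have h2 : (inner ℝ (e k) (⟨b, hbW⟩ : W) : ℝ) = ⟪(e k : H), b⟫ := rfl
    rw [h1, h2, hf]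
    dsimp only
    rw [real_inner_comm ((e k : H)) b]
  set P := Fintype.piFinset (fun _ : Fin n => (univ : Finset (Fin m))) with hP
  have expand : ∀ a ∈ s, ∀ b ∈ s,
      ⟪a, b⟫ ^ n = ∑ κ ∈ P, (∏ i, f a (κ i)) * ∏ i, f b (κ i) := by
    intro a ha b hb
    rw [key a ha b hb, ← Fin.prod_const n (∑ k, f a k * f b k), Finset.prod_univ_sum]
    exact Finset.sum_congr rfl fun κ _ => by rw [← Finset.prod_mul_distrib]
  have swap : ∑ κ ∈ P, (∑ a ∈ s, d a * ∏ i, f a (κ i)) ^ 2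
      = ∑ a ∈ s, ∑ b ∈ s, d a * d b * ⟪a, b⟫ ^ n := by
    calc ∑ κ ∈ P, (∑ a ∈ s, d a * ∏ i, f a (κ i)) ^ 2
        = ∑ κ ∈ P, ∑ a ∈ s, ∑ b ∈ s,
            (d a * ∏ i, f a (κ i)) * (d b * ∏ i, f b (κ i)) := by
          refine Finset.sum_congr rfl fun κ _ => ?_
          rw [sq, Finset.sum_mul_sum]
      _ = ∑ a ∈ s, ∑ b ∈ s, ∑ κ ∈ P,
            (d a * ∏ i, f a (κ i)) * (d b * ∏ i, f b (κ i)) := by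
          rw [Finset.sum_comm]
          exact Finset.sum_congr rfl fun a _ => Finset.sum_comm
      _ = ∑ a ∈ s, ∑ b ∈ s, d a * d b * ⟪a, b⟫ ^ n := by
          refine Finset.sum_congr rfl fun a ha => Finset.sum_congr rfl fun b hb => ?_
          rw [expand a ha b hb, Finset.mul_sum]
          exact Finset.sum_congr rfl fun κ _ => by ring
  rw [← swap]
  exact Finset.sum_nonneg fun κ _ => sq_nonneg _

/-- Positivity of the quadratic form with kernel `exp (2⟪a,b⟫)`. -/
lemma exp_inner_posdef (s : Finset H) (d : H → ℝ) :
    0 ≤ ∑ a ∈ s, ∑ b ∈ s, d a * d b * Real.exp (2 * ⟪a, b⟫) := by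
  classical
  have hexp : ∀ t : ℝ, Real.exp t = ∑' n : ℕ, t ^ n / n ! := by
    intro t
    rw [Real.exp_eq_exp_ℝ, NormedSpace.exp_eq_tsum_div]
  have hsummable : ∀ a b : H, Summable (fun n : ℕ =>
      d a * d b * ((2 * ⟪a, b⟫) ^ n / n !)) := fun a b =>
    (Real.summable_pow_div_factorial _).mul_left _
  calc (0:ℝ) ≤ ∑' n : ℕ, ∑ a ∈ s, ∑ b ∈ s, d a * d b * ((2 * ⟪a, b⟫) ^ n / n !) := by
        refine tsum_nonneg fun n => ?_
        have : ∑ a ∈ s, ∑ b ∈ s, d a * d b * ((2 * ⟪a, b⟫) ^ n / n !)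
            = (2 ^ n / n !) * ∑ a ∈ s, ∑ b ∈ s, d a * d b * ⟪a, b⟫ ^ n := by
          rw [Finset.mul_sum]
          refine Finset.sum_congr rfl fun a _ => ?_
          rw [Finset.mul_sum]
          refine Finset.sum_congr rfl fun b _ => ?_
          rw [mul_pow]
          ring
        rw [this]
        exact mul_nonneg (by positivity) (pow_inner_posdef s d n)
    _ = ∑ a ∈ s, ∑' n : ℕ, ∑ b ∈ s, d a * d b * ((2 * ⟪a, b⟫) ^ n / n !) := by
        rw [Summable.tsum_finsetSum]
        intro a _
        exact summable_sum (fun b _ => hsummable a b)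
    _ = ∑ a ∈ s, ∑ b ∈ s, ∑' n : ℕ, d a * d b * ((2 * ⟪a, b⟫) ^ n / n !) := by
        refine Finset.sum_congr rfl fun a _ => ?_
        rw [Summable.tsum_finsetSum]
        intro b _
        exact hsummable a b
    _ = ∑ a ∈ s, ∑ b ∈ s, d a * d b * Real.exp (2 * ⟪a, b⟫) := by
        refine Finset.sum_congr rfl fun a _ => Finset.sum_congr rfl fun b _ => ?_
        rw [hexp, ← tsum_mul_left]

/-- Positivity of the quadratic form with Gaussian kernel, real coefficients. -/
lemma gauss_posdef (s : Finset H) (d : H → ℝ) :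
    0 ≤ ∑ a ∈ s, ∑ b ∈ s, d a * d b * Real.exp (-‖a - b‖ ^ 2) := by
  classical
  have hker : ∀ a b : H, Real.exp (-‖a - b‖ ^ 2)
      = Real.exp (-‖a‖ ^ 2) * Real.exp (-‖b‖ ^ 2) * Real.exp (2 * ⟪a, b⟫) := by
    intro a b
    rw [← Real.exp_add, ← Real.exp_add]
    congr 1
    have : ‖a - b‖ ^ 2 = ‖a‖ ^ 2 - 2 * ⟪a, b⟫ + ‖b‖ ^ 2 := norm_sub_sq_real a b
    rw [this]; ring
  have := exp_inner_posdef s (fun a => d a * Real.exp (-‖a‖ ^ 2))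
  calc (0:ℝ) ≤ ∑ a ∈ s, ∑ b ∈ s, (d a * Real.exp (-‖a‖ ^ 2)) * (d b * Real.exp (-‖b‖ ^ 2))
        * Real.exp (2 * ⟪a, b⟫) := this
    _ = ∑ a ∈ s, ∑ b ∈ s, d a * d b * Real.exp (-‖a - b‖ ^ 2) := by
        refine Finset.sum_congr rfl fun a _ => Finset.sum_congr rfl fun b _ => ?_
        rw [hker a b]; ring

noncomputable section GNS

open Complex

/-- The Gaussian kernel, as a complex number. -/
def kerC (a b : H) : ℂ := (Real.exp (-‖a - b‖ ^ 2) : ℝ)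

lemma kerC_symm (a b : H) : kerC b a = kerC a b := by
  unfold kerC; rw [norm_sub_rev]

lemma kerC_conj (a b : H) : conj' (kerC a b) = kerC a b := Complex.conj_ofReal _

lemma kerC_self (a : H) : kerC a a = 1 := by
  simp [kerC]

/-- The GNS pre-inner product on finitely supported functions. -/
def innerV (l m : H →₀ ℂ) : ℂ :=
  ∑ a ∈ l.support, ∑ b ∈ m.support, conj' (l a) * m b * kerC a b

lemma innerV_eq (l m : H →₀ ℂ) {S T : Finset H} (hS : l.support ⊆ S) (hT : m.support ⊆ T) :
    innerV l m = ∑ a ∈ S, ∑ b ∈ T, conj' (l a) * m b * kerC a b := by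
  unfold innerV
  rw [Finset.sum_subset hS]
  · refine Finset.sum_congr rfl fun a _ => ?_
    refine Finset.sum_subset hT fun b _ hb => ?_
    rw [Finsupp.notMem_support_iff.mp hb]
    ring
  · intro a _ ha
    rw [Finsupp.notMem_support_iff.mp ha]
    simp

lemma innerV_add_left (l l' m : H →₀ ℂ) :
    innerV (l + l') m = innerV l m + innerV l' m := by
  classical
  rw [innerV_eq (l + l') m (S := l.support ∪ l'.support) (T := m.support)
      (Finsupp.support_add) subset_rfl,
    innerV_eq l m (S := l.support ∪ l'.support) Finset.subset_union_left subset_rfl,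
    innerV_eq l' m (S := l.support ∪ l'.support) Finset.subset_union_right subset_rfl,
    ← Finset.sum_add_distrib]
  refine Finset.sum_congr rfl fun a _ => ?_
  rw [← Finset.sum_add_distrib]
  refine Finset.sum_congr rfl fun b _ => ?_
  rw [Finsupp.add_apply, map_add]
  ring

lemma innerV_smul_left (c : ℂ) (l m : H →₀ ℂ) :
    innerV (c • l) m = conj' c * innerV l m := by
  classical
  rw [innerV_eq (c • l) m (S := l.support) (T := m.support) Finsupp.support_smul subset_rfl,
    innerV, Finset.mul_sum]
  refine Finset.sum_congr rfl fun a _ => ?_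
  rw [Finset.mul_sum]
  refine Finset.sum_congr rfl fun b _ => ?_
  rw [Finsupp.smul_apply, smul_eq_mul, map_mul]
  ring

lemma innerV_conj_symm (l m : H →₀ ℂ) : conj' (innerV m l) = innerV l m := by
  unfold innerV
  rw [map_sum]
  rw [Finset.sum_comm]
  refine Finset.sum_congr rfl fun a _ => ?_
  rw [map_sum]
  refine Finset.sum_congr rfl fun b _ => ?_
  rw [map_mul, map_mul, Complex.conj_conj, kerC_conj, kerC_symm]
  ring

lemma innerV_nonneg_re (l : H →₀ ℂ) : 0 ≤ (innerV l l).re := by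
  classical
  set s := l.support
  set p : H → ℝ := fun a => (l a).re
  set q : H → ℝ := fun a => (l a).im
  have hre : (innerV l l).re
      = ∑ a ∈ s, ∑ b ∈ s, (p a * p b + q a * q b) * Real.exp (-‖a - b‖ ^ 2) := by
    unfold innerV
    rw [Complex.re_sum]
    refine Finset.sum_congr rfl fun a _ => ?_
    rw [Complex.re_sum]
    refine Finset.sum_congr rfl fun b _ => ?_
    unfold kerC
    simp only [Complex.mul_re, Complex.mul_im, Complex.conj_re, Complex.conj_im,
      Complex.ofReal_re, Complex.ofReal_im, p, q]
    ring
  rw [hre]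
  have split : ∑ a ∈ s, ∑ b ∈ s, (p a * p b + q a * q b) * Real.exp (-‖a - b‖ ^ 2)
      = (∑ a ∈ s, ∑ b ∈ s, p a * p b * Real.exp (-‖a - b‖ ^ 2))
        + ∑ a ∈ s, ∑ b ∈ s, q a * q b * Real.exp (-‖a - b‖ ^ 2) := by
    rw [← Finset.sum_add_distrib]
    refine Finset.sum_congr rfl fun a _ => ?_
    rw [← Finset.sum_add_distrib]
    exact Finset.sum_congr rfl fun b _ => by ring
  rw [split]
  exact add_nonneg (gauss_posdef s p) (gauss_posdef s q)

end GNS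

section Instances

variable (H)

/-- The GNS pre-inner-product core. -/
noncomputable def gnsCore : PreInnerProductSpace.Core ℂ (H →₀ ℂ) where
  inner := innerV
  conj_inner_symm := innerV_conj_symm
  re_inner_nonneg := innerV_nonneg_re
  add_left := innerV_add_left
  smul_left l m r := innerV_smul_left r l m

attribute [local instance] gnsCore

noncomputable instance : SeminormedAddCommGroup (H →₀ ℂ) :=
  @InnerProductSpace.Core.toSeminormedAddCommGroup ℂ (H →₀ ℂ) _ _ _ (gnsCore H)

noncomputable instance gnsInner : InnerProductSpace ℂ (H →₀ ℂ) :=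
  letI c := gnsCore H
  { toNormedSpace := @InnerProductSpace.Core.toNormedSpace ℂ (H →₀ ℂ) _ _ _ c
    toInner := c.toInner
    norm_sq_eq_re_inner := fun x => by
      have h : ‖x‖ = Real.sqrt (RCLike.re (innerV x x)) := rfl
      rw [h, Real.sq_sqrt (show (0:ℝ) ≤ RCLike.re (innerV x x) from innerV_nonneg_re x)]
      rfl
    conj_inner_symm := innerV_conj_symm
    add_left := innerV_add_left
    smul_left := fun l m r => innerV_smul_left r l m }

variable {H}

lemma inner_finsupp_def (l m : H →₀ ℂ) : (inner ℂ l m : ℂ) = innerV l m := rfl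

lemma norm_finsupp_def (l : H →₀ ℂ) : ‖l‖ = Real.sqrt ((innerV l l).re) := rfl

end Instances

section Shift

lemma innerV_single (a b : H) (c d : ℂ) :
    innerV (Finsupp.single a c) (Finsupp.single b d) = conj' c * d * kerC a b := by
  classical
  rw [innerV_eq _ _ (S := {a}) (T := {b}) Finsupp.support_single_subset
    Finsupp.support_single_subset, Finset.sum_singleton, Finset.sum_singleton,
    Finsupp.single_eq_same, Finsupp.single_eq_same]

/-- Shift of the domain by `x`, as a linear equivalence. -/
noncomputable def shiftE (x : H) : (H →₀ ℂ) ≃ₗ[ℂ] (H →₀ ℂ) :=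
  Finsupp.domLCongr (Equiv.addLeft x)

lemma shiftE_apply (x : H) (l : H →₀ ℂ) (b : H) :
    shiftE x l b = l (-x + b) := by
  simp [shiftE, Finsupp.domCongr_apply, Finsupp.equivMapDomain_apply]

lemma shiftE_single (x a : H) (c : ℂ) :
    shiftE x (Finsupp.single a c) = Finsupp.single (x + a) c := by
  classical
  ext b
  rw [shiftE_apply]
  simp [Finsupp.single_apply, eq_neg_add_iff_add_eq]

lemma shiftE_support (x : H) (l : H →₀ ℂ) :
    (shiftE x l).support ⊆ l.support.map (Equiv.addLeft x).toEmbedding := by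
  intro b hb
  rw [Finsupp.mem_support_iff, shiftE_apply] at hb
  rw [Finset.mem_map]
  exact ⟨-x + b, Finsupp.mem_support_iff.mpr hb, by simp [Equiv.addLeft]⟩

lemma innerV_shift (x : H) (l m : H →₀ ℂ) :
    innerV (shiftE x l) (shiftE x m) = innerV l m := by
  classical
  rw [innerV_eq _ _ (shiftE_support x l) (shiftE_support x m), innerV]
  rw [Finset.sum_map]
  refine Finset.sum_congr rfl fun a _ => ?_
  rw [Finset.sum_map]
  refine Finset.sum_congr rfl fun b _ => ?_
  have h1 : ∀ a : H, shiftE x l ((Equiv.addLeft x).toEmbedding a) = l a := by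
    intro a; rw [shiftE_apply]; simp [Equiv.addLeft]
  have h2 : ∀ b : H, shiftE x m ((Equiv.addLeft x).toEmbedding b) = m b := by
    intro b; rw [shiftE_apply]; simp [Equiv.addLeft]
  rw [h1, h2]
  congr 1
  unfold kerC
  congr 2
  simp [Equiv.addLeft]

/-- Shift of the domain by `x`, as a linear isometric equivalence. -/
noncomputable def shiftIso (x : H) : (H →₀ ℂ) ≃ₗᵢ[ℂ] (H →₀ ℂ) where
  toLinearEquiv := shiftE x
  norm_map' l := by
    rw [show ∀ u : H →₀ ℂ, ‖u‖ = Real.sqrt ((innerV u u).re) from fun _ => rfl,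
      show ∀ u : H →₀ ℂ, ‖u‖ = Real.sqrt ((innerV u u).re) from fun _ => rfl]
    rw [show (shiftE x l : H →₀ ℂ) = shiftE x l from rfl, innerV_shift]

end Shift

section CompletionStuff

open UniformSpace UniformSpace.Completion

variable (H)

/-- The GNS Hilbert space: completion of the pre-inner-product space. -/
abbrev GNS : Type := Completion (H →₀ ℂ)

noncomputable instance : NormedAddCommGroup (GNS H) :=
  inferInstanceAs (NormedAddCommGroup (Completion (H →₀ ℂ)))

noncomputable instance : InnerProductSpace ℂ (GNS H) :=
  inferInstanceAs (InnerProductSpace ℂ (Completion (H →₀ ℂ)))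

instance : CompleteSpace (GNS H) :=
  inferInstanceAs (CompleteSpace (Completion (H →₀ ℂ)))

variable {H}

/-- Lift a linear isometric equivalence to the completion. -/
noncomputable def liftIso (e : (H →₀ ℂ) ≃ₗᵢ[ℂ] (H →₀ ℂ)) : GNS H ≃ₗᵢ[ℂ] GNS H where
  toLinearEquiv :=
    { toFun := Completion.map e
      invFun := Completion.map e.symm
      map_add' := fun f g => by
        refine Completion.induction_on₂ f g ?_ fun a b => ?_
        · exact isClosed_eq ((continuous_map).comp continuous_add)
            (Continuous.add (f := fun x : GNS H × GNS H => Completion.map e x.1)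
              (g := fun x : GNS H × GNS H => Completion.map e x.2)
              ((continuous_map).comp continuous_fst) ((continuous_map).comp continuous_snd))
        · rw [← Completion.coe_add,
            Completion.map_coe e.isometry.uniformContinuous,
            Completion.map_coe e.isometry.uniformContinuous,
            Completion.map_coe e.isometry.uniformContinuous,
            map_add, Completion.coe_add]
      map_smul' := fun c f => by
        refine Completion.induction_on f ?_ fun a => ?_
        · exact isClosed_eq ((continuous_map).comp (continuous_const_smul c))
            ((continuous_const_smul c).comp continuous_map)
        · show Completion.map (⇑e) (c • (↑a : Completion (H →₀ ℂ))) = (RingHom.id ℂ) c • Completion.map (⇑e) ↑a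
          rw [RingHom.id_apply, ← Completion.coe_smul,
            Completion.map_coe e.isometry.uniformContinuous,
            Completion.map_coe e.isometry.uniformContinuous,
            map_smul, Completion.coe_smul]
      left_inv := fun f => by
        refine Completion.induction_on f ?_ fun a => ?_
        · exact isClosed_eq (continuous_map.comp continuous_map) continuous_id
        · show Completion.map (⇑e.symm) (Completion.map (⇑e) ↑a) = ↑a
          rw [Completion.map_coe e.isometry.uniformContinuous,
            Completion.map_coe e.symm.isometry.uniformContinuous]
          simp
      right_inv := fun f => by
        refine Completion.induction_on f ?_ fun a => ?_
        · exact isClosed_eq (continuous_map.comp continuous_map) continuous_id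
        · show Completion.map (⇑e) (Completion.map (⇑e.symm) ↑a) = ↑a
          rw [Completion.map_coe e.symm.isometry.uniformContinuous,
            Completion.map_coe e.isometry.uniformContinuous]
          simp }
  norm_map' f := by
    refine Completion.induction_on f ?_ fun a => ?_
    · exact isClosed_eq (continuous_norm.comp continuous_map) continuous_norm
    · show ‖Completion.map (⇑e) (↑a : Completion (H →₀ ℂ))‖ = ‖(↑a : Completion (H →₀ ℂ))‖
      rw [Completion.map_coe e.isometry.uniformContinuous,
        Completion.norm_coe, Completion.norm_coe, e.norm_map]

lemma liftIso_coe (e : (H →₀ ℂ) ≃ₗᵢ[ℂ] (H →₀ ℂ)) (a : H →₀ ℂ) :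
    liftIso e ((a : Completion (H →₀ ℂ)) : GNS H) = ((e a : H →₀ ℂ) : Completion (H →₀ ℂ)) :=
  Completion.map_coe e.isometry.uniformContinuous a

lemma liftIso_continuous (e : (H →₀ ℂ) ≃ₗᵢ[ℂ] (H →₀ ℂ)) :
    Continuous (liftIso e : GNS H → GNS H) := Completion.continuous_map

end CompletionStuff

section Rep

open UniformSpace UniformSpace.Completion

/-- The unitary representation of `(H,+)` by shifts. -/
noncomputable def Tmap (x : H) : GNS H ≃ₗᵢ[ℂ] GNS H := liftIso (shiftIso x)

lemma Tmap_coe (x : H) (l : H →₀ ℂ) :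
    Tmap x ((l : Completion (H →₀ ℂ)) : GNS H) = ((shiftE x l : H →₀ ℂ) : Completion (H →₀ ℂ)) :=
  liftIso_coe _ l

lemma Tmap_add (x y : H) : Tmap (x + y) = Tmap x * Tmap y := by
  refine LinearIsometryEquiv.ext fun f => ?_
  rw [LinearIsometryEquiv.coe_mul]
  show Tmap (x + y) f = Tmap x (Tmap y f)
  refine Completion.induction_on f ?_ fun l => ?_
  · exact isClosed_eq (liftIso_continuous _)
      ((liftIso_continuous _).comp (liftIso_continuous _))
  · rw [Tmap_coe, Tmap_coe, Tmap_coe]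
    congr 1
    ext b
    rw [shiftE_apply, shiftE_apply, shiftE_apply]
    congr 1
    abel

/-- The cyclic family of vectors. -/
noncomputable def Phi (a : H) : GNS H := ((Finsupp.single a (1:ℂ) : H →₀ ℂ) : Completion (H →₀ ℂ))

lemma inner_Phi (a b : H) : (inner ℂ (Phi a) (Phi b) : ℂ) = kerC a b := by
  unfold Phi
  rw [show ∀ u v : H →₀ ℂ, (inner ℂ ((u : Completion (H →₀ ℂ)) : GNS H) ((v : Completion (H →₀ ℂ)) : GNS H) : ℂ) = innerV u v
    from fun u v => Completion.inner_coe u v, innerV_single]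
  simp

lemma Tmap_Phi (x a : H) : Tmap x (Phi a) = Phi (x + a) := by
  unfold Phi
  rw [Tmap_coe, shiftE_single]

lemma norm_Phi_sub_sq (a b : H) :
    ‖Phi a - Phi b‖ ^ 2 = 2 - 2 * Real.exp (-‖a - b‖ ^ 2) := by
  have h1 : ∀ c : H, ‖Phi c‖ ^ 2 = 1 := by
    intro c
    rw [@norm_sq_eq_re_inner ℂ, inner_Phi, kerC_self]
    simp
  have h2 := @norm_sub_sq ℂ (GNS H) _ _ _ (Phi a) (Phi b)
  rw [h2, h1 a, h1 b, inner_Phi]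
  unfold kerC
  rw [show (RCLike.re ((Real.exp (-‖a - b‖ ^ 2) : ℝ) : ℂ) : ℝ) = Real.exp (-‖a - b‖ ^ 2) from
    Complex.ofReal_re _]
  ring

lemma dist_Phi (a b : H) :
    dist (Phi a) (Phi b) ^ 2 = 2 - 2 * Real.exp (-‖a - b‖ ^ 2) := by
  rw [dist_eq_norm, norm_Phi_sub_sq]

lemma continuous_Phi : Continuous (Phi : H → GNS H) := by
  rw [Metric.continuous_iff]
  intro b ε hε
  refine ⟨ε / Real.sqrt 2, by positivity, fun a ha => ?_⟩
  have h1 : dist (Phi a) (Phi b) ^ 2 ≤ 2 * dist a b ^ 2 := by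
    rw [dist_Phi, dist_eq_norm]
    have h := Real.add_one_le_exp (-‖a - b‖ ^ 2)
    linarith
  have h2 : dist (Phi a) (Phi b) ≤ Real.sqrt 2 * dist a b := by
    have := Real.sqrt_le_sqrt h1
    rw [Real.sqrt_sq dist_nonneg] at this
    refine this.trans ?_
    rw [Real.sqrt_mul (by norm_num), Real.sqrt_sq dist_nonneg]
  calc dist (Phi a) (Phi b) ≤ Real.sqrt 2 * dist a b := h2
    _ < Real.sqrt 2 * (ε / Real.sqrt 2) := by
        have h2pos : (0:ℝ) < Real.sqrt 2 := by positivity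
        exact (mul_lt_mul_iff_right₀ h2pos).mpr ha
    _ = ε := by field_simp

end Rep

section Cont

open UniformSpace UniformSpace.Completion

lemma mem_span_Phi (l : H →₀ ℂ) :
    ((l : Completion (H →₀ ℂ)) : GNS H) ∈ Submodule.span ℂ (Set.range (Phi : H → GNS H)) := by
  classical
  induction l using Finsupp.induction with
  | zero =>
      rw [show ((0 : H →₀ ℂ) : Completion (H →₀ ℂ)) = (0 : GNS H) from Completion.coe_zero]
      exact Submodule.zero_mem _
  | single_add a c l ha hc ih =>
      rw [show ((Finsupp.single a c + l : H →₀ ℂ) : Completion (H →₀ ℂ))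
          = ((Finsupp.single a c : H →₀ ℂ) : Completion (H →₀ ℂ)) + (l : Completion (H →₀ ℂ))
        from Completion.coe_add _ _]
      refine Submodule.add_mem _ ?_ ih
      have : (Finsupp.single a c : H →₀ ℂ) = c • Finsupp.single a (1:ℂ) := by
        rw [Finsupp.smul_single, smul_eq_mul, mul_one]
      rw [this, show ((c • Finsupp.single a (1:ℂ) : H →₀ ℂ) : Completion (H →₀ ℂ))
          = c • ((Finsupp.single a (1:ℂ) : H →₀ ℂ) : Completion (H →₀ ℂ)) from
        Completion.coe_smul c _]
      exact Submodule.smul_mem _ c (Submodule.subset_span ⟨a, rfl⟩)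

lemma dense_span_Phi :
    Dense ((Submodule.span ℂ (Set.range (Phi : H → GNS H)) : Submodule ℂ (GNS H)) : Set (GNS H)) := by
  have h : Set.range ((fun l => (l : Completion (H →₀ ℂ))) : (H →₀ ℂ) → GNS H)
      ⊆ (Submodule.span ℂ (Set.range (Phi : H → GNS H)) : Set (GNS H)) := by
    rintro _ ⟨l, rfl⟩
    exact mem_span_Phi l
  exact (Completion.denseRange_coe (α := H →₀ ℂ)).mono h

lemma continuous_Tmap_apply (v : GNS H) : Continuous fun x : H => Tmap x v := by
  -- first, for elements of the span
  have hspan : ∀ w ∈ Submodule.span ℂ (Set.range (Phi : H → GNS H)),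
      Continuous fun x : H => Tmap x w := by
    intro w hw
    induction hw using Submodule.span_induction with
    | mem w hw =>
        obtain ⟨a, rfl⟩ := hw
        have : (fun x : H => Tmap x (Phi a)) = fun x => Phi (x + a) :=
          funext fun x => Tmap_Phi x a
        rw [this]
        exact continuous_Phi.comp (continuous_id.add continuous_const)
    | zero =>
        have : (fun x : H => Tmap x (0 : GNS H)) = fun _ => 0 :=
          funext fun x => map_zero (Tmap x).toLinearEquiv.toLinearMap
        rw [this]; exact continuous_const
    | add u v hu hv ihu ihv =>
        have : (fun x : H => Tmap x (u + v)) = fun x => Tmap x u + Tmap x v :=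
          funext fun x => map_add (Tmap x).toLinearEquiv.toLinearMap u v
        rw [this]; exact ihu.add ihv
    | smul c u hu ihu =>
        have : (fun x : H => Tmap x (c • u)) = fun x => c • Tmap x u :=
          funext fun x => map_smul (Tmap x).toLinearEquiv.toLinearMap c u
        rw [this]; exact ihu.const_smul c
  -- general elements by density and equicontinuity
  rw [Metric.continuous_iff]
  intro x ε hε
  obtain ⟨w, hw, hwv⟩ : ∃ w ∈ Submodule.span ℂ (Set.range (Phi : H → GNS H)),
      dist v w < ε / 3 := by
    have := dense_span_Phi (H := H)
    have hv := this v
    rw [Metric.mem_closure_iff] at hv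
    obtain ⟨w, hw, hd⟩ := hv (ε / 3) (by positivity)
    exact ⟨w, hw, hd⟩
  have hcont := hspan w hw
  rw [Metric.continuous_iff] at hcont
  obtain ⟨δ, hδ, hcl⟩ := hcont x (ε / 3) (by positivity)
  refine ⟨δ, hδ, fun y hy => ?_⟩
  have h1 : dist (Tmap y v) (Tmap y w) = dist v w := (Tmap y).dist_map v w
  have h2 : dist (Tmap x w) (Tmap x v) = dist w v := (Tmap x).dist_map w v
  calc dist (Tmap y v) (Tmap x v)
      ≤ dist (Tmap y v) (Tmap y w) + dist (Tmap y w) (Tmap x w) + dist (Tmap x w) (Tmap x v) :=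
        dist_triangle4 _ _ _ _
    _ < ε / 3 + ε / 3 + ε / 3 := by
        have := hcl y hy
        rw [h1, h2, dist_comm w v]
        exact add_lt_add (add_lt_add hwv this) hwv
    _ = ε := by ring

end Cont

section Emb

lemma Phi_injective : Function.Injective (Phi : H → GNS H) := by
  intro a b h
  have h0 : dist (Phi a) (Phi b) = 0 := by rw [h]; exact dist_self _
  have h1 : 2 - 2 * Real.exp (-‖a - b‖ ^ 2) = 0 := by rw [← dist_Phi, h0]; norm_num
  have h2 : Real.exp (-‖a - b‖ ^ 2) = 1 := by linarith
  rw [Real.exp_eq_one_iff, neg_eq_zero, pow_eq_zero_iff (by norm_num), norm_eq_zero,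
    sub_eq_zero] at h2
  exact h2

lemma isInducing_Phi : Topology.IsInducing (Phi : H → GNS H) := by
  rw [Topology.isInducing_iff_nhds]
  intro x
  refine le_antisymm ?_ ?_
  · -- `𝓝 x ≤ comap`, i.e. continuity at x
    exact (continuous_Phi.tendsto x).le_comap
  · refine ((Metric.nhds_basis_ball.comap (Phi : H → GNS H)).le_basis_iff
      Metric.nhds_basis_ball).mpr fun ε hε => ?_
    refine ⟨Real.sqrt (2 - 2 * Real.exp (-ε ^ 2)), ?_, ?_⟩
    · have hlt : Real.exp (-ε ^ 2) < 1 := Real.exp_lt_one_iff.mpr (by nlinarith)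
      have : 0 < 2 - 2 * Real.exp (-ε ^ 2) := by linarith
      exact Real.sqrt_pos.mpr this
    · intro a ha
      simp only [Set.mem_preimage, Metric.mem_ball] at ha ⊢
      by_contra hcon
      push_neg at hcon
      -- dist a x ≥ ε, so dist (Phi a) (Phi x) ≥ sqrt (2 - 2exp(-ε²))
      have hd2 : 2 - 2 * Real.exp (-ε ^ 2) ≤ dist (Phi a) (Phi x) ^ 2 := by
        rw [dist_Phi]
        have hεd : ε ^ 2 ≤ ‖a - x‖ ^ 2 := by
          have : ε ≤ ‖a - x‖ := by rwa [← dist_eq_norm]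
          exact pow_le_pow_left₀ (le_of_lt hε) this 2
        have : Real.exp (-‖a - x‖ ^ 2) ≤ Real.exp (-ε ^ 2) :=
          Real.exp_le_exp.mpr (by linarith)
        linarith
      have := Real.sqrt_le_sqrt hd2
      rw [Real.sqrt_sq dist_nonneg] at this
      exact absurd ha (not_lt.mpr this)

end Emb

/-- The strong operator topology on the group of linear isometric automorphisms of a
Hilbert space: the topology induced from pointwise convergence. -/
noncomputable def sot (K : Type*) [NormedAddCommGroup K] [InnerProductSpace ℂ K] :
    TopologicalSpace (K ≃ₗᵢ[ℂ] K) :=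
  TopologicalSpace.induced (fun S => (S : K → K)) Pi.topologicalSpace

/-- The additive group of a (real) Hilbert space is unitarily representable: it embeds,
as a topological group, into the unitary group of some complex Hilbert space carrying the
strong operator topology. -/
theorem stmt18 {H : Type} [NormedAddCommGroup H] [InnerProductSpace ℝ H]
    [CompleteSpace H] :
    ∃ (K : Type) (_ : NormedAddCommGroup K) (_ : InnerProductSpace ℂ K)
      (_ : CompleteSpace K) (T : H → (K ≃ₗᵢ[ℂ] K)),
      (∀ x y : H, T (x + y) = T x * T y) ∧
      @Topology.IsEmbedding _ _ _ (sot K) T := by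
  refine ⟨GNS H, inferInstance, inferInstance, inferInstance, Tmap, fun x y => Tmap_add x y, ?_⟩
  letI τ : TopologicalSpace (GNS H ≃ₗᵢ[ℂ] GNS H) := sot (GNS H)
  have hcoe : @Topology.IsInducing _ _ τ Pi.topologicalSpace
      (fun S : GNS H ≃ₗᵢ[ℂ] GNS H => (S : GNS H → GNS H)) := ⟨rfl⟩
  have hcoeInj : Function.Injective (fun S : GNS H ≃ₗᵢ[ℂ] GNS H => (S : GNS H → GNS H)) := by
    intro S S' h
    ext v
    exact congrFun h v
  have hcoeEmb : @Topology.IsEmbedding _ _ τ Pi.topologicalSpace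
      (fun S : GNS H ≃ₗᵢ[ℂ] GNS H => (S : GNS H → GNS H)) := ⟨hcoe, hcoeInj⟩
  have hF : Topology.IsEmbedding (fun x : H => ((Tmap x : GNS H → GNS H))) := by
    have hFcont : Continuous (fun x : H => ((Tmap x : GNS H → GNS H))) :=
      continuous_pi fun v => continuous_Tmap_apply v
    have heval : Continuous (fun g : GNS H → GNS H => g (Phi 0)) := continuous_apply _
    have hcomp : (fun g : GNS H → GNS H => g (Phi 0)) ∘ (fun x : H => ((Tmap x : GNS H → GNS H)))
        = (Phi : H → GNS H) := by
      funext x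
      show Tmap x (Phi 0) = Phi x
      rw [Tmap_Phi, add_zero]
    refine ⟨Topology.IsInducing.of_comp hFcont heval ?_, ?_⟩
    · rw [hcomp]; exact isInducing_Phi
    · intro x y h
      have h0 : Tmap x (Phi 0) = Tmap y (Phi 0) := congrFun h (Phi 0)
      rw [Tmap_Phi, Tmap_Phi, add_zero, add_zero] at h0
      exact Phi_injective h0
  exact (Topology.IsEmbedding.of_comp_iff hcoeEmb).mp hF
end
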